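/- arXiv:1907.12074 — 7 statements merged into one kernel-verified Lean document; each statement's English description precedes it below -/
import Mathlib

section
/- For every real number c₁ > 0, the one-sided transposition shuffle satisfies limsup_{n→∞} ‖P_n^{⌈n·log n + c₁·n⌉} − π_n‖_TV ≤ √2 · e^{−c₁}. -/
/-!
STATEMENT 0: For every real `c₁ > 0`, the one-sided transposition shuffle satisfies
`limsup_{n→∞} ‖P_n^{⌈n·log n + c₁·n⌉} − π_n‖_TV ≤ √2 · e^{−c₁}`.

Positions `1,…,n` are modelled by `Fin n` (position `j` corresponds to `(j : Fin n)` with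
value `j - 1`, so the card at `j : Fin n` has label `(j : ℕ) + 1`).
-/

/-- The one-sided transposition distribution `P_n` on `S_n`:
`P_n(τ) = 1/(n·j)` if `τ = (i j)` with `1 ≤ i ≤ j ≤ n`, and `0` otherwise. -/
noncomputable def OST (n : ℕ) (τ : Equiv.Perm (Fin n)) : ℝ :=
  ∑ j : Fin n, ∑ i : Fin n,
    if i ≤ j ∧ τ = Equiv.swap i j then 1 / ((n : ℝ) * ((j : ℕ) + 1)) else 0

/-- Convolution of two distributions on `S_n`. -/
noncomputable def conv {n : ℕ} (P Q : Equiv.Perm (Fin n) → ℝ) : Equiv.Perm (Fin n) → ℝ :=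
  fun σ => ∑ τ : Equiv.Perm (Fin n), P (σ * τ⁻¹) * Q τ

/-- `t`-fold convolution power of a distribution on `S_n`. -/
noncomputable def convPow {n : ℕ} (P : Equiv.Perm (Fin n) → ℝ) : ℕ → Equiv.Perm (Fin n) → ℝ
  | 0 => fun σ => if σ = 1 then 1 else 0
  | t + 1 => conv P (convPow P t)

/-- The uniform distribution `π_n` on `S_n`. -/
noncomputable def uniformDist (n : ℕ) : Equiv.Perm (Fin n) → ℝ :=
  fun _ => 1 / (n.factorial : ℝ)

/-- Total variation distance between two distributions on `S_n`. -/
noncomputable def tvDist {n : ℕ} (P Q : Equiv.Perm (Fin n) → ℝ) : ℝ :=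
  (1 / 2) * ∑ σ : Equiv.Perm (Fin n), |P σ - Q σ|

namespace OSTaux

variable {n : ℕ}

abbrev G (n : ℕ) := Equiv.Perm (Fin n)

/-- point mass at identity -/
noncomputable def dd (n : ℕ) : G n → ℝ := fun σ => if σ = 1 then 1 else 0

/-- the single right-hand-at-`r` step distribution -/
noncomputable def Q (r : Fin n) : G n → ℝ := fun τ =>
  ∑ i : Fin n, if i ≤ r ∧ τ = Equiv.swap i r then 1 / (((r : ℕ) : ℝ) + 1) else 0

/-- permutations fixing all positions `≥ m` -/
def fixesFrom (m : ℕ) (σ : G n) : Prop := ∀ j : Fin n, m ≤ (j : ℕ) → σ j = j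

instance (m : ℕ) : DecidablePred (fixesFrom (n := n) m) := fun _ =>
  Fintype.decidableForallFintype

def HF (n : ℕ) (m : ℕ) : Finset (G n) := Finset.univ.filter (fixesFrom m)

noncomputable def U (n : ℕ) (m : ℕ) : G n → ℝ := fun σ =>
  if σ ∈ HF n m then ((HF n m).card : ℝ)⁻¹ else 0

-- basic conv lemmas
lemma conv_assoc (P Q R : G n → ℝ) : conv (conv P Q) R = conv P (conv Q R) := by
  funext σ
  simp only [conv, Finset.sum_mul, Finset.mul_sum]
  conv_rhs => rw [Finset.sum_comm]
  refine Finset.sum_congr rfl fun a _ => ?_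
  refine Fintype.sum_equiv (Equiv.mulRight a) _ _ fun ρ => ?_
  simp only [Equiv.coe_mulRight, mul_inv_rev, mul_inv_cancel_right, ← mul_assoc]

lemma conv_dd (P : G n → ℝ) : conv P (dd n) = P := by
  funext σ
  simp only [conv, dd, mul_ite, mul_one, mul_zero]
  rw [Finset.sum_ite_eq' Finset.univ (1 : G n) (fun τ => P (σ * τ⁻¹))]
  simp

lemma dd_conv (P : G n → ℝ) : conv (dd n) P = P := by
  funext σ
  simp only [conv, dd, ite_mul, one_mul, zero_mul, mul_inv_eq_one]
  rw [Finset.sum_ite_eq Finset.univ σ P]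
  simp

lemma sum_conv (P Q : G n → ℝ) :
    ∑ σ : G n, conv P Q σ = (∑ σ : G n, P σ) * (∑ σ : G n, Q σ) := by
  simp only [conv]
  rw [Finset.sum_comm]
  have h : ∀ τ : G n, ∑ σ : G n, P (σ * τ⁻¹) * Q τ = (∑ σ : G n, P σ) * Q τ := by
    intro τ
    rw [← Finset.sum_mul]
    congr 1
    exact Equiv.sum_comp (Equiv.mulRight τ⁻¹) P
  simp only [h]
  rw [← Finset.mul_sum]

lemma conv_nonneg {P Q : G n → ℝ} (hP : ∀ σ, 0 ≤ P σ) (hQ : ∀ σ, 0 ≤ Q σ) :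
    ∀ σ, 0 ≤ conv P Q σ := fun σ =>
  Finset.sum_nonneg fun τ _ => mul_nonneg (hP _) (hQ _)

lemma Q_nonneg (r : Fin n) : ∀ τ, 0 ≤ Q r τ := fun τ =>
  Finset.sum_nonneg fun i _ => by positivity

lemma sum_Q (r : Fin n) : ∑ τ : G n, Q r τ = 1 := by
  unfold Q
  rw [Finset.sum_comm]
  have h : ∀ i : Fin n, (∑ τ : G n, if i ≤ r ∧ τ = Equiv.swap i r then 1 / (((r : ℕ) : ℝ) + 1) else 0)
      = if i ≤ r then 1 / (((r : ℕ) : ℝ) + 1) else 0 := by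
    intro i
    by_cases h : i ≤ r <;> simp [h]
  rw [Finset.sum_congr rfl fun i _ => h i]
  rw [Finset.sum_ite, Finset.sum_const, Finset.sum_const_zero, add_zero]
  have hcard : (Finset.univ.filter (fun i : Fin n => i ≤ r)) = Finset.Iic r := by
    ext i; simp
  rw [hcard, Fin.card_Iic, nsmul_eq_mul]
  push_cast
  field_simp

lemma fixesFrom_one (m : ℕ) : fixesFrom m (1 : G n) := fun _ _ => rfl

lemma fixesFrom.mul {m : ℕ} {σ τ : G n} (h1 : fixesFrom m σ) (h2 : fixesFrom m τ) :
    fixesFrom m (σ * τ) := fun j hj => by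
  simp only [Equiv.Perm.mul_apply, h2 j hj, h1 j hj]

lemma fixesFrom.inv {m : ℕ} {σ : G n} (h : fixesFrom m σ) : fixesFrom m σ⁻¹ := fun j hj => by
  conv_lhs => rw [← h j hj]
  simp

lemma fixesFrom_apply_lt {m : ℕ} {σ : G n} (h : fixesFrom m σ) (i : Fin n) :
    ((σ i : Fin n) : ℕ) < m ↔ (i : ℕ) < m := by
  constructor
  · intro hi
    by_contra hc
    push_neg at hc
    rw [h i hc] at hi
    omega
  · intro hi
    by_contra hc
    push_neg at hc
    have := h (σ i) hc
    have := σ.injective this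
    omega

lemma fixesFrom_apply_le {r : Fin n} {τ : G n} (h : fixesFrom (r : ℕ) τ) (i : Fin n) :
    τ i ≤ r ↔ i ≤ r := by
  have hr : τ r = r := h r le_rfl
  constructor
  · intro hi
    rcases lt_or_eq_of_le hi with hlt | heq
    · have : ((τ i : Fin n) : ℕ) < (r : ℕ) := hlt
      rw [fixesFrom_apply_lt h] at this
      exact le_of_lt this
    · have : τ i = τ r := by rw [heq, hr]
      exact le_of_eq (τ.injective this)
  · intro hi
    rcases lt_or_eq_of_le hi with hlt | heq
    · have : ((i : Fin n) : ℕ) < (r : ℕ) := hlt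
      rw [← fixesFrom_apply_lt h i] at this
      exact le_of_lt this
    · rw [heq, hr]

lemma fixesFrom_swap {i r : Fin n} (hir : i ≤ r) {m : ℕ} (hrm : (r : ℕ) < m) :
    fixesFrom m (Equiv.swap i r) := by
  intro j hj
  apply Equiv.swap_apply_of_ne_of_ne
  · intro hji; subst hji; have : (j : ℕ) ≤ (r : ℕ) := hir; omega
  · intro hjr; subst hjr; omega

lemma Q_support {r : Fin n} {m : ℕ} (hrm : (r : ℕ) < m) :
    ∀ τ, Q r τ ≠ 0 → fixesFrom m τ := by
  intro τ hτ
  obtain ⟨i, _, hne⟩ := Finset.exists_ne_zero_of_sum_ne_zero hτ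
  by_cases hc : i ≤ r ∧ τ = Equiv.swap i r
  · rw [hc.2]; exact fixesFrom_swap hc.1 hrm
  · simp [hc] at hne

lemma one_mem_HF (m : ℕ) : (1 : G n) ∈ HF n m := by
  simp [HF, fixesFrom_one]

lemma HF_card_pos (m : ℕ) : 0 < (HF n m).card :=
  Finset.card_pos.mpr ⟨1, one_mem_HF m⟩

lemma U_nonneg (m : ℕ) : ∀ σ, 0 ≤ U n m σ := fun σ => by
  unfold U; split <;> positivity

lemma sum_U (m : ℕ) : ∑ σ : G n, U n m σ = 1 := by
  unfold U
  rw [Finset.sum_ite_mem, Finset.univ_inter, Finset.sum_const, nsmul_eq_mul]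
  rw [mul_inv_cancel₀]
  exact Nat.cast_ne_zero.mpr (HF_card_pos m).ne'

lemma Q_conj {r : Fin n} {τ : G n} (hτ : fixesFrom (r : ℕ) τ) (g : G n) :
    Q r (τ⁻¹ * g * τ) = Q r g := by
  unfold Q
  have hr : τ r = r := hτ r le_rfl
  have key : ∀ i : Fin n, τ * Equiv.swap i r * τ⁻¹ = Equiv.swap (τ i) r := by
    intro i
    rw [← Equiv.swap_apply_apply τ i r, hr]
  have hcond : ∀ i : Fin n, (τ⁻¹ * g * τ = Equiv.swap i r) ↔ (g = Equiv.swap (τ i) r) := by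
    intro i
    rw [← key i]
    constructor
    · intro h; rw [← h]; group
    · intro h; rw [h]; group
  calc ∑ i : Fin n, (if i ≤ r ∧ τ⁻¹ * g * τ = Equiv.swap i r then 1 / (((r : ℕ) : ℝ) + 1) else 0)
      = ∑ i : Fin n, (if τ i ≤ r ∧ g = Equiv.swap (τ i) r then 1 / (((r : ℕ) : ℝ) + 1) else 0) := by
        refine Finset.sum_congr rfl fun i _ => ?_
        congr 1
        rw [hcond i, fixesFrom_apply_le hτ i]
    _ = ∑ i : Fin n, (if i ≤ r ∧ g = Equiv.swap i r then 1 / (((r : ℕ) : ℝ) + 1) else 0) := by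
        exact Equiv.sum_comp τ
          (fun j => if j ≤ r ∧ g = Equiv.swap j r then 1 / (((r : ℕ) : ℝ) + 1) else 0)

lemma conv_comm_of {μ ν : G n → ℝ} {m : ℕ}
    (hconj : ∀ τ : G n, fixesFrom m τ → ∀ g, μ (τ⁻¹ * g * τ) = μ g)
    (hsupp : ∀ τ, ν τ ≠ 0 → fixesFrom m τ) :
    conv μ ν = conv ν μ := by
  funext σ
  have step1 : conv μ ν σ = ∑ τ : G n, μ (τ⁻¹ * σ) * ν τ := by
    refine Finset.sum_congr rfl fun τ _ => ?_
    by_cases h : ν τ = 0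
    · rw [h, mul_zero, mul_zero]
    · congr 1
      have := hconj τ (hsupp τ h) (σ * τ⁻¹)
      rw [← this]
      congr 1
      group
  rw [step1]
  unfold conv
  refine Fintype.sum_equiv ((Equiv.inv (G n)).trans (Equiv.mulRight σ)) _ _ fun τ => ?_
  simp only [Equiv.trans_apply, Equiv.inv_apply, Equiv.coe_mulRight, mul_inv_rev, inv_inv]
  rw [← mul_assoc, mul_inv_cancel, one_mul]
  ring

lemma mem_HF {m : ℕ} {σ : G n} : σ ∈ HF n m ↔ fixesFrom m σ := by
  simp [HF]

/-- absorption: a mass-one distribution supported on `HF m` fixes `U m` -/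
lemma conv_U_absorb {ν : G n → ℝ} {m : ℕ} (hmass : ∑ τ : G n, ν τ = 1)
    (hsupp : ∀ τ, ν τ ≠ 0 → fixesFrom m τ) : conv ν (U n m) = U n m := by
  funext σ
  unfold conv U
  simp only [mul_ite, mul_zero]
  rw [Finset.sum_ite_mem, Finset.univ_inter]
  by_cases hσ : σ ∈ HF n m
  · rw [if_pos hσ]
    have hre : ∑ τ ∈ HF n m, ν (σ * τ⁻¹) * ((HF n m).card : ℝ)⁻¹
        = ∑ g ∈ HF n m, ν g * ((HF n m).card : ℝ)⁻¹ := by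
      refine Finset.sum_nbij' (fun τ => σ * τ⁻¹) (fun g => g⁻¹ * σ) ?_ ?_ ?_ ?_ ?_
      · intro a ha
        exact mem_HF.mpr (((mem_HF.mp hσ).mul (mem_HF.mp ha).inv))
      · intro b hb
        exact mem_HF.mpr (((mem_HF.mp hb).inv).mul (mem_HF.mp hσ))
      · intro a _; group
      · intro b _; group
      · intro a _; rfl
    rw [hre, ← Finset.sum_mul]
    have hsub : ∑ g ∈ HF n m, ν g = ∑ g : G n, ν g := by
      refine Finset.sum_subset (Finset.subset_univ _) ?_
      intro g _ hg
      by_contra h0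
      exact hg (mem_HF.mpr (hsupp g h0))
    rw [hsub, hmass, one_mul]
  · rw [if_neg hσ]
    refine Finset.sum_eq_zero fun τ hτ => ?_
    have hz : ν (σ * τ⁻¹) = 0 := by
      by_contra h0
      have h1 : fixesFrom m (σ * τ⁻¹) := hsupp _ h0
      have h2 : fixesFrom m σ := by
        have h3 := h1.mul (mem_HF.mp hτ)
        have : σ * τ⁻¹ * τ = σ := by group
        rwa [this] at h3
      exact hσ (mem_HF.mpr h2)
    rw [hz, zero_mul]

/-- the key build-up step: one `Q` at the top of `H_k` upgrades `U k` to `U (k+1)` -/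
lemma conv_Q_U {k : ℕ} (hk : k < n) :
    conv (Q (⟨k, hk⟩ : Fin n)) (U n k) = U n (k + 1) := by
  set r : Fin n := ⟨k, hk⟩ with hrdef
  set v : ℝ := (((r : ℕ) : ℝ) + 1)⁻¹ * ((HF n k).card : ℝ)⁻¹ with hvdef
  have hpoint : ∀ σ : G n, conv (Q r) (U n k) σ =
      if σ ∈ HF n (k + 1) then v else 0 := by
    intro σ
    unfold conv Q U
    have hterm0 : ∀ τ : G n,
        (∑ i : Fin n, if i ≤ r ∧ σ * τ⁻¹ = Equiv.swap i r then 1 / (((r : ℕ) : ℝ) + 1) else 0) *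
          (if τ ∈ HF n k then ((HF n k).card : ℝ)⁻¹ else 0)
        = ∑ i : Fin n, if (i ≤ r ∧ σ * τ⁻¹ = Equiv.swap i r) ∧ τ ∈ HF n k then v else 0 := by
      intro τ
      rw [Finset.sum_mul]
      refine Finset.sum_congr rfl fun i _ => ?_
      by_cases h1 : i ≤ r ∧ σ * τ⁻¹ = Equiv.swap i r <;> by_cases h2 : τ ∈ HF n k <;>
        simp [h1, h2, hvdef, one_div]
    rw [Finset.sum_congr rfl fun τ _ => hterm0 τ, Finset.sum_comm]
    have heqgen : ∀ i : Fin n, ∀ τ : G n,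
        (σ * τ⁻¹ = Equiv.swap i r) ↔ (τ = Equiv.swap i r * σ) := by
      intro i τ
      rw [mul_inv_eq_iff_eq_mul]
      constructor
      · intro h; rw [h, ← mul_assoc, Equiv.swap_mul_self, one_mul]
      · intro h; rw [h, ← mul_assoc, Equiv.swap_mul_self, one_mul]
    have hinner : ∀ i : Fin n,
        (∑ τ : G n, if (i ≤ r ∧ σ * τ⁻¹ = Equiv.swap i r) ∧ τ ∈ HF n k then v else 0)
        = if i ≤ r ∧ Equiv.swap i r * σ ∈ HF n k then v else 0 := by
      intro i
      have hterm : ∀ τ : G n,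
          (if (i ≤ r ∧ σ * τ⁻¹ = Equiv.swap i r) ∧ τ ∈ HF n k then v else 0)
          = if τ = Equiv.swap i r * σ then
              (if i ≤ r ∧ Equiv.swap i r * σ ∈ HF n k then v else 0) else 0 := by
        intro τ
        by_cases ht : τ = Equiv.swap i r * σ
        · subst ht
          by_cases hi : i ≤ r
          · simp [hi, heqgen]
          · simp [hi]
        · rw [if_neg ht, if_neg]
          rintro ⟨⟨_, hswap⟩, _⟩
          exact ht ((heqgen i τ).mp hswap)
      rw [Finset.sum_congr rfl fun τ _ => hterm τ]
      rw [Finset.sum_ite_eq' Finset.univ (Equiv.swap i r * σ)]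
      simp
    rw [Finset.sum_congr rfl fun i _ => hinner i]
    have hC : ∀ i : Fin n, (i ≤ r ∧ Equiv.swap i r * σ ∈ HF n k)
        ↔ (σ ∈ HF n (k + 1) ∧ i = σ r) := by
      intro i
      have hrk : (r : ℕ) = k := rfl
      constructor
      · rintro ⟨hi, hmem⟩
        have hfix : fixesFrom k (Equiv.swap i r * σ) := mem_HF.mp hmem
        have hσr : σ r = i := by
          have h2 : Equiv.swap i r (σ r) = r := hfix r (le_of_eq hrk.symm)
          have h3 := congrArg (Equiv.swap i r) h2
          rwa [Equiv.swap_apply_self, Equiv.swap_apply_right] at h3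
        refine ⟨mem_HF.mpr ?_, hσr.symm⟩
        intro j hj
        have hjr : j ≠ r := by
          intro h; rw [h, hrk] at hj; omega
        have hji : j ≠ i := by
          intro h
          have h4 : (i : ℕ) ≤ (r : ℕ) := hi
          rw [← h] at h4; omega
        have h1 : Equiv.swap i r (σ j) = j := hfix j (by omega)
        have h3 := congrArg (Equiv.swap i r) h1
        rw [Equiv.swap_apply_self] at h3
        rw [h3]
        exact Equiv.swap_apply_of_ne_of_ne hji hjr
      · rintro ⟨hσmem, hi⟩
        have hσfix : fixesFrom (k + 1) σ := mem_HF.mp hσmem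
        have hσr_lt : ((σ r : Fin n) : ℕ) < k + 1 := by
          rw [fixesFrom_apply_lt hσfix]; omega
        have hile : i ≤ r := by
          rw [hi]
          show ((σ r : Fin n) : ℕ) ≤ (r : ℕ)
          omega
        refine ⟨hile, mem_HF.mpr ?_⟩
        intro j hj
        rcases Nat.eq_or_lt_of_le hj with hjk | hjk
        · have hjr : j = r := Fin.ext (by omega)
          subst hjr
          show Equiv.swap i r (σ r) = r
          rw [← hi, Equiv.swap_apply_left]
        · have hjfix : σ j = j := hσfix j (by omega)
          show Equiv.swap i r (σ j) = j
          rw [hjfix]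
          apply Equiv.swap_apply_of_ne_of_ne
          · intro h; subst h
            have h4 : (j : ℕ) ≤ (r : ℕ) := hile
            omega
          · intro h; subst h
            omega
    rw [Finset.sum_congr rfl fun i _ => if_congr (hC i) rfl rfl]
    by_cases hσ : σ ∈ HF n (k + 1)
    · simp only [hσ, true_and, if_pos]
      rw [Finset.sum_ite_eq' Finset.univ (σ r) (fun _ => v)]
      simp
    · simp [hσ]
  have hmass1 : ∑ σ : G n, conv (Q r) (U n k) σ = 1 := by
    rw [sum_conv, sum_Q, sum_U, one_mul]
  have hmass2 : ((HF n (k + 1)).card : ℝ) * v = 1 := by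
    rw [← hmass1]
    rw [Finset.sum_congr rfl fun σ _ => hpoint σ]
    rw [Finset.sum_ite_mem, Finset.univ_inter, Finset.sum_const, nsmul_eq_mul]
  have hv : v = ((HF n (k + 1)).card : ℝ)⁻¹ := by
    have hcne : ((HF n (k + 1)).card : ℝ) ≠ 0 :=
      Nat.cast_ne_zero.mpr (HF_card_pos (k + 1)).ne'
    field_simp at hmass2 ⊢
    linarith [hmass2]
  funext σ
  rw [hpoint σ, U, hv]

noncomputable def Qpow (r : Fin n) : ℕ → G n → ℝ
  | 0 => dd n
  | m + 1 => conv (Q r) (Qpow r m)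

noncomputable def listProd : List (Fin n) → G n → ℝ
  | [] => dd n
  | r :: L => conv (Q r) (listProd L)

lemma dd_nonneg : ∀ σ : G n, 0 ≤ dd n σ := fun σ => by unfold dd; split <;> norm_num

lemma sum_dd : ∑ σ : G n, dd n σ = 1 := by
  unfold dd
  rw [Finset.sum_ite_eq' Finset.univ (1 : G n) (fun _ => (1 : ℝ))]
  simp

lemma listProd_nonneg : ∀ L : List (Fin n), ∀ σ, 0 ≤ listProd L σ
  | [] => dd_nonneg
  | r :: L => conv_nonneg (Q_nonneg r) (listProd_nonneg L)

lemma sum_listProd : ∀ L : List (Fin n), ∑ σ : G n, listProd L σ = 1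
  | [] => sum_dd
  | r :: L => by
    show ∑ σ : G n, conv (Q r) (listProd L) σ = 1
    rw [sum_conv, sum_Q, sum_listProd L, one_mul]

lemma Q_comm {a b : Fin n} (hab : (a : ℕ) < (b : ℕ)) :
    conv (Q b) (Q a) = conv (Q a) (Q b) :=
  conv_comm_of (fun _ hτ g => Q_conj hτ g) (Q_support hab)

lemma Qpow_comm {a b : Fin n} (hab : (a : ℕ) < (b : ℕ)) (c : ℕ) (X : G n → ℝ) :
    conv (Q a) (conv (Qpow b c) X) = conv (Qpow b c) (conv (Q a) X) := by
  induction c with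
  | zero => show conv (Q a) (conv (dd n) X) = conv (dd n) (conv (Q a) X)
            rw [dd_conv, dd_conv]
  | succ c ih =>
    show conv (Q a) (conv (conv (Q b) (Qpow b c)) X)
        = conv (conv (Q b) (Qpow b c)) (conv (Q a) X)
    rw [conv_assoc (Q b) (Qpow b c) X, ← conv_assoc (Q a), ← Q_comm hab,
      conv_assoc (Q b) (Q a), ih, ← conv_assoc, conv_assoc (Q b) (Qpow b c)]

lemma move (b : Fin n) (L : List (Fin n)) (hL : ∀ a ∈ L, (a : ℕ) ≤ (b : ℕ)) :
    listProd L = conv (Qpow b (L.count b)) (listProd (L.filter (· ≠ b))) := by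
  induction L with
  | nil =>
    show dd n = conv (dd n) (listProd (List.filter _ []))
    rw [dd_conv]
    rfl
  | cons r L ih =>
    have hL' : ∀ a ∈ L, (a : ℕ) ≤ (b : ℕ) := fun a ha => hL a (List.mem_cons_of_mem _ ha)
    by_cases hr : r = b
    · subst hr
      have hcount : (r :: L).count r = L.count r + 1 := List.count_cons_self
      have hfilter : (r :: L).filter (· ≠ r) = L.filter (· ≠ r) := by
        simp [List.filter_cons]
      rw [hcount, hfilter]
      show conv (Q r) (listProd L) = conv (conv (Q r) (Qpow r (L.count r))) (listProd (L.filter (· ≠ r)))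
      rw [ih hL', conv_assoc]
    · have hrb : (r : ℕ) < (b : ℕ) :=
        lt_of_le_of_ne (hL r List.mem_cons_self) (fun h => hr (Fin.ext h))
      have hcount : (r :: L).count b = L.count b := by
        rw [List.count_cons]
        simp [hr]
      have hfilter : (r :: L).filter (· ≠ b) = r :: L.filter (· ≠ b) := by
        simp [List.filter_cons, hr]
      rw [hcount, hfilter]
      show conv (Q r) (listProd L)
          = conv (Qpow b (L.count b)) (conv (Q r) (listProd (L.filter (· ≠ b))))
      rw [ih hL', Qpow_comm hrb]

lemma U_zero : U n 0 = dd n := by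
  have hHF : HF n 0 = {1} := by
    ext τ
    simp only [mem_HF, Finset.mem_singleton]
    constructor
    · intro h; exact Equiv.ext fun j => h j (Nat.zero_le _)
    · intro h; subst h; exact fixesFrom_one 0
  funext σ
  unfold U dd
  rw [hHF]
  simp

lemma Qpow_U {k : ℕ} (hk : k < n) (c : ℕ) :
    conv (Qpow (⟨k, hk⟩ : Fin n) (c + 1)) (U n k) = U n (k + 1) := by
  induction c with
  | zero =>
    show conv (conv (Q _) (dd n)) (U n k) = _
    rw [conv_dd, conv_Q_U hk]
  | succ c ih =>
    show conv (conv (Q (⟨k, hk⟩ : Fin n)) (Qpow _ (c + 1))) (U n k) = _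
    rw [conv_assoc, ih]
    exact conv_U_absorb (sum_Q _) (Q_support (by simp))

/-- The key lemma: a product of one-sided steps whose right-hand positions cover
all of `{0,…,k-1}` (and use only those positions) is exactly uniform on `H_k`. -/
lemma listProd_eq_U : ∀ (k : ℕ), k ≤ n → ∀ L : List (Fin n),
    (∀ a ∈ L, (a : ℕ) < k) → (∀ r : Fin n, (r : ℕ) < k → r ∈ L) →
    listProd L = U n k := by
  intro k
  induction k with
  | zero =>
    intro _ L hall _
    have hL : L = [] := by
      rcases L with _ | ⟨a, L⟩
      · rfl
      · exact absurd (hall a List.mem_cons_self) (by omega)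
    subst hL
    rw [U_zero]
    rfl
  | succ k ih =>
    intro hk1 L hall hcov
    have hkn : k < n := hk1
    set b : Fin n := ⟨k, hkn⟩ with hbdef
    have hble : ∀ a ∈ L, (a : ℕ) ≤ (b : ℕ) := fun a ha => Nat.lt_succ_iff.mp (hall a ha)
    rw [move b L hble]
    have hLf_all : ∀ a ∈ L.filter (· ≠ b), (a : ℕ) < k := by
      intro a ha
      rw [List.mem_filter] at ha
      have h1 : (a : ℕ) < k + 1 := hall a ha.1
      have h2 : a ≠ b := by simpa using ha.2
      have h3 : (a : ℕ) ≠ k := fun h => h2 (Fin.ext h)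
      omega
    have hLf_cov : ∀ r : Fin n, (r : ℕ) < k → r ∈ L.filter (· ≠ b) := by
      intro r hr
      rw [List.mem_filter]
      refine ⟨hcov r (by omega), ?_⟩
      simp only [ne_eq, decide_not, Bool.not_eq_true', decide_eq_false_iff_not]
      intro h
      rw [h] at hr
      have hbk : (b : ℕ) = k := rfl
      omega
    rw [ih (le_of_lt hkn) _ hLf_all hLf_cov]
    have hbL : b ∈ L := hcov b (by show k < k + 1; omega)
    have hcpos : 0 < L.count b := List.count_pos_iff.mpr hbL
    obtain ⟨c, hc⟩ : ∃ c, L.count b = c + 1 := ⟨L.count b - 1, by omega⟩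
    rw [hc]
    exact Qpow_U hkn c

lemma U_top : U n n = uniformDist n := by
  have hHF : HF n n = Finset.univ := by
    ext τ
    simp only [Finset.mem_univ, iff_true, mem_HF]
    intro j hj
    exact absurd j.isLt (by omega)
  funext σ
  unfold U uniformDist
  rw [hHF, if_pos (Finset.mem_univ σ), Finset.card_univ, Fintype.card_perm,
    Fintype.card_fin, one_div]

lemma OST_eq (n : ℕ) : OST n = fun τ => ((n : ℝ))⁻¹ * ∑ r : Fin n, Q r τ := by
  funext τ
  unfold OST Q
  rw [Finset.mul_sum]
  refine Finset.sum_congr rfl fun j _ => ?_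
  rw [Finset.mul_sum]
  refine Finset.sum_congr rfl fun i _ => ?_
  rw [mul_ite, mul_zero]
  split
  · rw [one_div, one_div, mul_inv]
  · rfl

lemma conv_OST (X : G n → ℝ) :
    conv (OST n) X = fun σ => ((n : ℝ))⁻¹ * ∑ r : Fin n, conv (Q r) X σ := by
  funext σ
  unfold conv
  simp only [OST_eq n]
  have h1 : ∀ τ : G n, (((n : ℝ))⁻¹ * ∑ r : Fin n, Q r (σ * τ⁻¹)) * X τ
      = ((n : ℝ))⁻¹ * ∑ r : Fin n, Q r (σ * τ⁻¹) * X τ := by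
    intro τ
    rw [mul_assoc, Finset.sum_mul]
  rw [Finset.sum_congr rfl fun τ _ => h1 τ, ← Finset.mul_sum, Finset.sum_comm]

lemma conv_smul_sum (P : G n → ℝ) {ι : Type*} [Fintype ι] (c : ℝ) (f : ι → G n → ℝ) :
    conv P (fun σ => c * ∑ i : ι, f i σ) = fun σ => c * ∑ i : ι, conv P (f i) σ := by
  funext σ
  unfold conv
  have h1 : ∀ τ : G n, P (σ * τ⁻¹) * (c * ∑ i : ι, f i τ)
      = c * ∑ i : ι, P (σ * τ⁻¹) * f i τ := by
    intro τ
    simp only [Finset.mul_sum]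
    refine Finset.sum_congr rfl fun i _ => by ring
  rw [Finset.sum_congr rfl fun τ _ => h1 τ, ← Finset.mul_sum, Finset.sum_comm]

lemma convPow_eq (n : ℕ) (t : ℕ) :
    convPow (OST n) t
      = fun σ => (((n : ℝ))⁻¹) ^ t * ∑ h : Fin t → Fin n, listProd (List.ofFn h) σ := by
  induction t with
  | zero =>
    funext σ
    rw [pow_zero, one_mul]
    have hofn : ∀ h : Fin 0 → Fin n, listProd (n := n) (List.ofFn h) σ = dd n σ := by
      intro h
      rw [List.ofFn_zero]
      rfl
    rw [Finset.sum_congr rfl fun h _ => hofn h, Finset.sum_const, Finset.card_univ,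
      Fintype.card_fun]
    simp only [Fintype.card_fin, Fintype.card_eq_zero_iff]
    rw [pow_zero, one_smul]
    rfl
  | succ t ih =>
    show conv (OST n) (convPow (OST n) t) = _
    rw [ih, conv_OST]
    funext σ
    have h2 : ∀ r : Fin n,
        conv (Q r) (fun σ => (((n : ℝ))⁻¹) ^ t * ∑ h : Fin t → Fin n, listProd (List.ofFn h) σ) σ
        = (((n : ℝ))⁻¹) ^ t * ∑ h : Fin t → Fin n, conv (Q r) (listProd (List.ofFn h)) σ := by
      intro r
      rw [conv_smul_sum]
    rw [Finset.sum_congr rfl fun r _ => h2 r]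
    rw [← Finset.mul_sum, ← mul_assoc, ← pow_succ']
    congr 1
    rw [← Fintype.sum_prod_type']
    refine (Fintype.sum_equiv (Fin.consEquiv fun _ : Fin (t + 1) => Fin n).symm _ _ fun h => ?_).symm
    have hofs : List.ofFn h = h 0 :: List.ofFn (fun i => h i.succ) := List.ofFn_succ
    rw [hofs]
    rfl

lemma sum_uniform (n : ℕ) : ∑ σ : G n, uniformDist n σ = 1 := by
  unfold uniformDist
  rw [Finset.sum_const, Finset.card_univ, Fintype.card_perm, Fintype.card_fin, nsmul_eq_mul,
    mul_one_div, div_self]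
  exact Nat.cast_ne_zero.mpr (Nat.factorial_ne_zero n)

lemma uniform_nonneg (n : ℕ) : ∀ σ, 0 ≤ uniformDist n σ := fun _ => by
  unfold uniformDist; positivity

/-- good histories give exactly the uniform distribution -/
lemma good_exact {t : ℕ} (h : Fin t → Fin n) (hcov : ∀ r : Fin n, r ∈ List.ofFn h) :
    listProd (List.ofFn h) = uniformDist n := by
  rw [← U_top]
  exact listProd_eq_U n le_rfl (List.ofFn h) (fun a _ => a.isLt) (fun r _ => hcov r)

lemma tv_le (n t : ℕ) (hn : 0 < n) :
    tvDist (convPow (OST n) t) (uniformDist n)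
      ≤ ((Finset.univ.filter
            (fun h : Fin t → Fin n => ¬ (∀ r : Fin n, r ∈ List.ofFn h))).card : ℝ)
          * (((n : ℝ))⁻¹) ^ t := by
  classical
  set c : ℝ := ((n : ℝ))⁻¹ with hc
  set bad := Finset.univ.filter
      (fun h : Fin t → Fin n => ¬ (∀ r : Fin n, r ∈ List.ofFn h)) with hbad
  have hne : (n : ℝ) ≠ 0 := Nat.cast_ne_zero.mpr hn.ne'
  have hdiff : ∀ σ : G n, convPow (OST n) t σ - uniformDist n σ
      = c ^ t * ∑ h ∈ bad, (listProd (List.ofFn h) σ - uniformDist n σ) := by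
    intro σ
    rw [convPow_eq]
    have hu : uniformDist n σ = c ^ t * ∑ _h : Fin t → Fin n, uniformDist n σ := by
      rw [Finset.sum_const, Finset.card_univ, Fintype.card_fun, nsmul_eq_mul, ← mul_assoc,
        Nat.cast_pow]
      simp only [Fintype.card_fin]
      rw [← mul_pow, hc, inv_mul_cancel₀ hne, one_pow, one_mul]
    conv_lhs => rw [hu]
    rw [← mul_sub]
    congr 1
    rw [← Finset.sum_sub_distrib]
    rw [← Finset.sum_filter_add_sum_filter_not Finset.univ
      (fun h : Fin t → Fin n => ∀ r : Fin n, r ∈ List.ofFn h)]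
    have hgood : ∑ h ∈ Finset.univ.filter
        (fun h : Fin t → Fin n => ∀ r : Fin n, r ∈ List.ofFn h),
        (listProd (List.ofFn h) σ - uniformDist n σ) = 0 := by
      refine Finset.sum_eq_zero fun h hh => ?_
      rw [Finset.mem_filter] at hh
      rw [good_exact h hh.2, sub_self]
    rw [hgood, zero_add]
  unfold tvDist
  have habs : ∀ σ : G n, |convPow (OST n) t σ - uniformDist n σ|
      ≤ c ^ t * ∑ h ∈ bad, |listProd (List.ofFn h) σ - uniformDist n σ| := by
    intro σ
    rw [hdiff σ, abs_mul, abs_of_nonneg (by positivity : (0:ℝ) ≤ c ^ t)]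
    exact mul_le_mul_of_nonneg_left (Finset.abs_sum_le_sum_abs _ _) (by positivity)
  calc (1/2 : ℝ) * ∑ σ : G n, |convPow (OST n) t σ - uniformDist n σ|
      ≤ (1/2 : ℝ) * ∑ σ : G n, c ^ t * ∑ h ∈ bad, |listProd (List.ofFn h) σ - uniformDist n σ| := by
        refine mul_le_mul_of_nonneg_left (Finset.sum_le_sum fun σ _ => habs σ) (by norm_num)
    _ = (1/2 : ℝ) * c ^ t * ∑ h ∈ bad, ∑ σ : G n, |listProd (List.ofFn h) σ - uniformDist n σ| := by
        rw [← Finset.mul_sum, ← mul_assoc, Finset.sum_comm]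
    _ ≤ (1/2 : ℝ) * c ^ t * ∑ _h ∈ bad, (2 : ℝ) := by
        refine mul_le_mul_of_nonneg_left (Finset.sum_le_sum fun h _ => ?_) (by positivity)
        have h1 : ∀ σ : G n, |listProd (List.ofFn h) σ - uniformDist n σ|
            ≤ listProd (List.ofFn h) σ + uniformDist n σ := by
          intro σ
          refine (abs_sub _ _).trans ?_
          rw [abs_of_nonneg (listProd_nonneg _ σ), abs_of_nonneg (uniform_nonneg n σ)]
        calc ∑ σ : G n, |listProd (List.ofFn h) σ - uniformDist n σ|
            ≤ ∑ σ : G n, (listProd (List.ofFn h) σ + uniformDist n σ) :=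
              Finset.sum_le_sum fun σ _ => h1 σ
          _ = 2 := by rw [Finset.sum_add_distrib, sum_listProd, sum_uniform]; norm_num
    _ = (bad.card : ℝ) * c ^ t := by
        rw [Finset.sum_const, nsmul_eq_mul]; ring

lemma avoid_card (n t : ℕ) (r : Fin n) :
    (Finset.univ.filter (fun h : Fin t → Fin n => ∀ s, h s ≠ r)).card = (n - 1) ^ t := by
  classical
  rw [← Fintype.card_subtype]
  have e : {h : Fin t → Fin n // ∀ s, h s ≠ r} ≃ (Fin t → {x : Fin n // x ≠ r}) :=
    { toFun := fun h s => ⟨h.1 s, h.2 s⟩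
      invFun := fun g => ⟨fun s => (g s).1, fun s => (g s).2⟩
      left_inv := fun _ => rfl
      right_inv := fun _ => rfl }
  rw [Fintype.card_congr e, Fintype.card_fun, Fintype.card_fin]
  congr 1
  rw [Fintype.card_subtype_compl, Fintype.card_subtype_eq, Fintype.card_fin]

lemma bad_card_le (n t : ℕ) :
    (Finset.univ.filter
      (fun h : Fin t → Fin n => ¬ (∀ r : Fin n, r ∈ List.ofFn h))).card
      ≤ n * (n - 1) ^ t := by
  classical
  have hsub : Finset.univ.filter
      (fun h : Fin t → Fin n => ¬ (∀ r : Fin n, r ∈ List.ofFn h))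
      ⊆ Finset.univ.biUnion
        (fun r : Fin n => Finset.univ.filter (fun h : Fin t → Fin n => ∀ s, h s ≠ r)) := by
    intro h hh
    rw [Finset.mem_filter] at hh
    push_neg at hh
    obtain ⟨r, hr⟩ := hh.2
    rw [Finset.mem_biUnion]
    refine ⟨r, Finset.mem_univ r, ?_⟩
    rw [Finset.mem_filter]
    refine ⟨Finset.mem_univ h, fun s hs => hr ?_⟩
    rw [List.mem_ofFn]
    exact ⟨s, hs⟩
  calc (Finset.univ.filter
      (fun h : Fin t → Fin n => ¬ (∀ r : Fin n, r ∈ List.ofFn h))).card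
      ≤ (Finset.univ.biUnion
        (fun r : Fin n => Finset.univ.filter (fun h : Fin t → Fin n => ∀ s, h s ≠ r))).card :=
        Finset.card_le_card hsub
    _ ≤ ∑ r : Fin n, (Finset.univ.filter (fun h : Fin t → Fin n => ∀ s, h s ≠ r)).card :=
        Finset.card_biUnion_le
    _ = n * (n - 1) ^ t := by
        rw [Finset.sum_congr rfl fun r _ => avoid_card n t r, Finset.sum_const,
          Finset.card_univ, Fintype.card_fin, smul_eq_mul]

end OSTaux

theorem ost_upper_bound (c₁ : ℝ) (hc : 0 < c₁) :
    Filter.limsup (fun n : ℕ =>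
        tvDist (convPow (OST n) ⌈(n : ℝ) * Real.log n + c₁ * n⌉₊) (uniformDist n))
      Filter.atTop ≤ Real.sqrt 2 * Real.exp (-c₁) := by
  classical
  set f : ℕ → ℝ := fun n =>
    tvDist (convPow (OST n) ⌈(n : ℝ) * Real.log n + c₁ * n⌉₊) (uniformDist n) with hf
  have hbound : ∀ n : ℕ, 1 ≤ n → f n ≤ Real.exp (-c₁) := by
    intro n hn
    set t := ⌈(n : ℝ) * Real.log n + c₁ * n⌉₊ with ht
    have hn0 : (0 : ℝ) < n := by exact_mod_cast hn
    have hn1 : (1 : ℝ) ≤ n := by exact_mod_cast hn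
    have h1 := OSTaux.tv_le n t hn
    have h2 : ((Finset.univ.filter
        (fun h : Fin t → Fin n => ¬ (∀ r : Fin n, r ∈ List.ofFn h))).card : ℝ)
        ≤ (n : ℝ) * ((n : ℝ) - 1) ^ t := by
      calc ((Finset.univ.filter
          (fun h : Fin t → Fin n => ¬ (∀ r : Fin n, r ∈ List.ofFn h))).card : ℝ)
          ≤ ((n * (n - 1) ^ t : ℕ) : ℝ) := Nat.cast_le.mpr (OSTaux.bad_card_le n t)
        _ = (n : ℝ) * ((n : ℝ) - 1) ^ t := by
            have h1n : (1 : ℕ) ≤ n := hn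
            push_cast [h1n]
            ring
    have h3 : f n ≤ (n : ℝ) * (((n : ℝ) - 1) * ((n : ℝ))⁻¹) ^ t := by
      calc f n ≤ _ := h1
        _ ≤ ((n : ℝ) * ((n : ℝ) - 1) ^ t) * (((n : ℝ))⁻¹) ^ t :=
            mul_le_mul_of_nonneg_right h2 (by positivity)
        _ = (n : ℝ) * (((n : ℝ) - 1) * ((n : ℝ))⁻¹) ^ t := by
            rw [mul_pow, mul_assoc]
    have h40 : (0 : ℝ) ≤ ((n : ℝ) - 1) * ((n : ℝ))⁻¹ :=
      mul_nonneg (by linarith) (by positivity)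
    have h4 : ((n : ℝ) - 1) * ((n : ℝ))⁻¹ ≤ Real.exp (-(1 / (n : ℝ))) := by
      have hexp := Real.add_one_le_exp (-(1 / (n : ℝ)))
      have heq : ((n : ℝ) - 1) * ((n : ℝ))⁻¹ = -(1 / (n : ℝ)) + 1 := by
        field_simp
        ring
      rw [heq]
      exact hexp
    have h5 : (((n : ℝ) - 1) * ((n : ℝ))⁻¹) ^ t ≤ (Real.exp (-(1 / (n : ℝ)))) ^ t :=
      pow_le_pow_left₀ h40 h4 t
    have h6 : (Real.exp (-(1 / (n : ℝ)))) ^ t = Real.exp (-((t : ℝ) / (n : ℝ))) := by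
      rw [← Real.exp_nat_mul]
      congr 1
      field_simp
    have h7 : Real.exp (-((t : ℝ) / (n : ℝ))) ≤ Real.exp (-(Real.log n + c₁)) := by
      apply Real.exp_le_exp.mpr
      have hTn : (n : ℝ) * Real.log n + c₁ * n ≤ (t : ℝ) := Nat.le_ceil _
      have hdiv : Real.log n + c₁ ≤ (t : ℝ) / (n : ℝ) := by
        rw [le_div_iff₀ hn0]
        nlinarith [hTn]
      linarith
    have h8 : (n : ℝ) * Real.exp (-(Real.log n + c₁)) = Real.exp (-c₁) := by
      rw [neg_add, Real.exp_add, Real.exp_neg, Real.exp_log hn0]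
      field_simp
    calc f n ≤ (n : ℝ) * (((n : ℝ) - 1) * ((n : ℝ))⁻¹) ^ t := h3
      _ ≤ (n : ℝ) * Real.exp (-((t : ℝ) / (n : ℝ))) := by
          refine mul_le_mul_of_nonneg_left ?_ hn0.le
          rw [← h6]
          exact h5
      _ ≤ (n : ℝ) * Real.exp (-(Real.log n + c₁)) :=
          mul_le_mul_of_nonneg_left h7 hn0.le
      _ = Real.exp (-c₁) := h8
  have hev : ∀ᶠ n : ℕ in Filter.atTop, f n ≤ Real.exp (-c₁) :=
    Filter.eventually_atTop.mpr ⟨1, hbound⟩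
  have hco : Filter.IsCoboundedUnder (· ≤ ·) Filter.atTop f := by
    refine Filter.isCoboundedUnder_le_of_le Filter.atTop (x := 0) fun n => ?_
    exact mul_nonneg (by norm_num) (Finset.sum_nonneg fun σ _ => abs_nonneg _)
  refine le_trans (Filter.limsup_le_of_le hco hev) ?_
  have h9 : (1 : ℝ) ≤ Real.sqrt 2 := by
    rw [show (1 : ℝ) = Real.sqrt 1 from Real.sqrt_one.symm]
    exact Real.sqrt_le_sqrt (by norm_num)
  nlinarith [Real.exp_pos (-c₁)]
end

section
/- For every partition λ ⊢ n and every standard Young tableau T ∈ SYT(λ), one has eig(T_λ^↓) ≤ eig(T) ≤ eig(T_λ^→). -/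
/-- `T : ℕ × ℕ → ℕ` is a standard Young tableau filling of the diagram `μ`:
it maps the cells of `μ` bijectively onto `{1,…,n}` (`n = μ.card`) and strictly
increases along rows and down columns.  (Cells are `0`-indexed.) -/
def IsSYT (μ : YoungDiagram) (T : ℕ × ℕ → ℕ) : Prop :=
  Set.BijOn T ↑μ.cells (Set.Icc 1 μ.card) ∧
  (∀ c₁ c₂ : ℕ × ℕ, c₁ ∈ μ.cells → c₂ ∈ μ.cells → c₁.1 = c₂.1 → c₁.2 < c₂.2 → T c₁ < T c₂) ∧
  (∀ c₁ c₂ : ℕ × ℕ, c₁ ∈ μ.cells → c₂ ∈ μ.cells → c₁.2 = c₂.2 → c₁.1 < c₂.1 → T c₁ < T c₂)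

/-- `eig` of a filling `T` of `μ`: `eig(T) = (1/n)·Σ_{(i,j)∈λ} (j−i+1)/T(i,j)`. -/
noncomputable def eigF (μ : YoungDiagram) (T : ℕ × ℕ → ℕ) : ℝ :=
  (1 / (μ.card : ℝ)) * ∑ c ∈ μ.cells, (((c.2 : ℝ) - (c.1 : ℝ) + 1) / (T c : ℝ))

/-- The row-filled tableau `T_λ^→` : rows are numbered `1,…,n` left to right, top row first. -/
def rowFill (μ : YoungDiagram) (c : ℕ × ℕ) : ℕ :=
  (∑ i ∈ Finset.range c.1, μ.rowLen i) + c.2 + 1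

/-- The column-filled tableau `T_λ^↓` : columns are numbered `1,…,n` top to bottom,
leftmost column first. -/
def colFill (μ : YoungDiagram) (c : ℕ × ℕ) : ℕ :=
  (∑ j ∈ Finset.range c.2, μ.colLen j) + c.1 + 1

namespace EigAux

open Finset

/-- the weight of a cell -/
noncomputable def w (c : ℕ × ℕ) : ℝ := (c.2 : ℝ) - (c.1 : ℝ) + 1

/-- partial sums of row lengths -/
def P (μ : YoungDiagram) (i : ℕ) : ℕ := ∑ x ∈ Finset.range i, μ.rowLen x

/-- partial sums of column lengths -/
def Q (μ : YoungDiagram) (j : ℕ) : ℕ := ∑ x ∈ Finset.range j, μ.colLen x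

lemma P_mono (μ : YoungDiagram) {i i' : ℕ} (h : i ≤ i') : P μ i ≤ P μ i' :=
  Finset.sum_le_sum_of_subset (Finset.range_subset_range.2 h)

lemma Q_mono (μ : YoungDiagram) {j j' : ℕ} (h : j ≤ j') : Q μ j ≤ Q μ j' :=
  Finset.sum_le_sum_of_subset (Finset.range_subset_range.2 h)

lemma P_succ (μ : YoungDiagram) (i : ℕ) : P μ (i + 1) = P μ i + μ.rowLen i :=
  Finset.sum_range_succ _ _

lemma Q_succ (μ : YoungDiagram) (j : ℕ) : Q μ (j + 1) = Q μ j + μ.colLen j :=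
  Finset.sum_range_succ _ _

lemma card_eq_P (μ : YoungDiagram) : μ.card = P μ (μ.colLen 0) := by
  have hmap : ∀ c ∈ μ.cells, Prod.fst c ∈ Finset.range (μ.colLen 0) := by
    intro c hc
    rw [Finset.mem_range, ← YoungDiagram.mem_iff_lt_colLen]
    exact μ.up_left_mem le_rfl (Nat.zero_le _) ((YoungDiagram.mem_cells _).1 hc)
  rw [P]
  show μ.cells.card = _
  rw [Finset.card_eq_sum_card_fiberwise hmap]
  refine Finset.sum_congr rfl fun i _ => ?_
  rw [μ.rowLen_eq_card]
  rfl

lemma card_eq_Q (μ : YoungDiagram) : μ.card = Q μ (μ.rowLen 0) := by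
  have hmap : ∀ c ∈ μ.cells, Prod.snd c ∈ Finset.range (μ.rowLen 0) := by
    intro c hc
    rw [Finset.mem_range, ← YoungDiagram.mem_iff_lt_rowLen]
    exact μ.up_left_mem (Nat.zero_le _) le_rfl ((YoungDiagram.mem_cells _).1 hc)
  rw [Q]
  show μ.cells.card = _
  rw [Finset.card_eq_sum_card_fiberwise hmap]
  refine Finset.sum_congr rfl fun j _ => ?_
  rw [μ.colLen_eq_card]
  rfl

lemma rowFill_le_card (μ : YoungDiagram) {c : ℕ × ℕ} (hc : c ∈ μ.cells) :
    rowFill μ c ≤ μ.card := by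
  obtain ⟨i, j⟩ := c
  have hm := (YoungDiagram.mem_cells _).1 hc
  have hj : j < μ.rowLen i := YoungDiagram.mem_iff_lt_rowLen.1 hm
  have hi : i < μ.colLen 0 :=
    YoungDiagram.mem_iff_lt_colLen.1 (μ.up_left_mem le_rfl (Nat.zero_le _) hm)
  calc rowFill μ (i, j) = P μ i + j + 1 := rfl
    _ ≤ P μ i + μ.rowLen i := by omega
    _ = P μ (i + 1) := (P_succ μ i).symm
    _ ≤ P μ (μ.colLen 0) := P_mono μ hi
    _ = μ.card := (card_eq_P μ).symm

lemma colFill_le_card (μ : YoungDiagram) {c : ℕ × ℕ} (hc : c ∈ μ.cells) :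
    colFill μ c ≤ μ.card := by
  obtain ⟨i, j⟩ := c
  have hm := (YoungDiagram.mem_cells _).1 hc
  have hi : i < μ.colLen j := YoungDiagram.mem_iff_lt_colLen.1 hm
  have hj : j < μ.rowLen 0 :=
    YoungDiagram.mem_iff_lt_rowLen.1 (μ.up_left_mem (Nat.zero_le _) le_rfl hm)
  calc colFill μ (i, j) = Q μ j + i + 1 := rfl
    _ ≤ Q μ j + μ.colLen j := by omega
    _ = Q μ (j + 1) := (Q_succ μ j).symm
    _ ≤ Q μ (μ.rowLen 0) := Q_mono μ hj
    _ = μ.card := (card_eq_Q μ).symm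

lemma rowFill_isSYT (μ : YoungDiagram) : IsSYT μ (rowFill μ) := by
  refine ⟨⟨?_, ?_, ?_⟩, ?_, ?_⟩
  · intro c hc
    exact ⟨Nat.le_add_left 1 _, rowFill_le_card μ hc⟩
  · rintro ⟨i, j⟩ hc ⟨i', j'⟩ hc' h
    have hm : j < μ.rowLen i := YoungDiagram.mem_iff_lt_rowLen.1 ((YoungDiagram.mem_cells _).1 hc)
    have hm' : j' < μ.rowLen i' := YoungDiagram.mem_iff_lt_rowLen.1 ((YoungDiagram.mem_cells _).1 hc')
    simp only [rowFill] at h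
    rcases lt_trichotomy i i' with hii | hii | hii
    · exfalso
      have : P μ i + μ.rowLen i ≤ P μ i' := (P_succ μ i ▸ P_mono μ hii)
      change P μ i + j + 1 = P μ i' + j' + 1 at h
      omega
    · subst hii
      change P μ i + j + 1 = P μ i + j' + 1 at h
      simp [Prod.ext_iff]
      omega
    · exfalso
      have : P μ i' + μ.rowLen i' ≤ P μ i := (P_succ μ i' ▸ P_mono μ hii)
      change P μ i + j + 1 = P μ i' + j' + 1 at h
      omega
  · rintro m ⟨hm1, hm2⟩
    have hex : ∃ N, m ≤ P μ N := ⟨μ.colLen 0, le_trans hm2 (card_eq_P μ).le⟩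
    classical
    have hNle : m ≤ P μ (Nat.find hex) := Nat.find_spec hex
    have hN0 : Nat.find hex ≠ 0 := by
      intro h
      rw [h] at hNle
      simp [P] at hNle
      omega
    obtain ⟨i, hi⟩ := Nat.exists_eq_succ_of_ne_zero hN0
    rw [hi] at hNle
    have hlt : P μ i < m := by
      have := Nat.find_min hex (m := i) (by omega)
      omega
    have hle : m ≤ P μ i + μ.rowLen i := by rw [← P_succ]; exact hNle
    refine ⟨(i, m - P μ i - 1), ?_, ?_⟩
    · simp only [Finset.coe_mem, Finset.mem_coe, YoungDiagram.mem_cells]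
      rw [YoungDiagram.mem_iff_lt_rowLen]
      omega
    · change P μ i + (m - P μ i - 1) + 1 = m
      omega
  · rintro ⟨i, j⟩ ⟨i', j'⟩ _ _ h1 h2
    simp only at h1 h2
    subst h1
    change P μ i + j + 1 < P μ i + j' + 1
    omega
  · rintro ⟨i, j⟩ ⟨i', j'⟩ hc hc' h1 h2
    simp only at h1 h2
    subst h1
    have hm : j < μ.rowLen i := YoungDiagram.mem_iff_lt_rowLen.1 ((YoungDiagram.mem_cells _).1 hc)
    have : P μ i + μ.rowLen i ≤ P μ i' := (P_succ μ i ▸ P_mono μ h2)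
    change P μ i + j + 1 < P μ i' + j + 1
    omega

lemma colFill_isSYT (μ : YoungDiagram) : IsSYT μ (colFill μ) := by
  refine ⟨⟨?_, ?_, ?_⟩, ?_, ?_⟩
  · intro c hc
    exact ⟨Nat.le_add_left 1 _, colFill_le_card μ hc⟩
  · rintro ⟨i, j⟩ hc ⟨i', j'⟩ hc' h
    have hm : i < μ.colLen j := YoungDiagram.mem_iff_lt_colLen.1 ((YoungDiagram.mem_cells _).1 hc)
    have hm' : i' < μ.colLen j' := YoungDiagram.mem_iff_lt_colLen.1 ((YoungDiagram.mem_cells _).1 hc')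
    rcases lt_trichotomy j j' with hjj | hjj | hjj
    · exfalso
      have : Q μ j + μ.colLen j ≤ Q μ j' := (Q_succ μ j ▸ Q_mono μ hjj)
      change Q μ j + i + 1 = Q μ j' + i' + 1 at h
      omega
    · subst hjj
      change Q μ j + i + 1 = Q μ j + i' + 1 at h
      simp [Prod.ext_iff]
      omega
    · exfalso
      have : Q μ j' + μ.colLen j' ≤ Q μ j := (Q_succ μ j' ▸ Q_mono μ hjj)
      change Q μ j + i + 1 = Q μ j' + i' + 1 at h
      omega
  · rintro m ⟨hm1, hm2⟩
    have hex : ∃ N, m ≤ Q μ N := ⟨μ.rowLen 0, le_trans hm2 (card_eq_Q μ).le⟩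
    classical
    have hNle : m ≤ Q μ (Nat.find hex) := Nat.find_spec hex
    have hN0 : Nat.find hex ≠ 0 := by
      intro h
      rw [h] at hNle
      simp [Q] at hNle
      omega
    obtain ⟨j, hj⟩ := Nat.exists_eq_succ_of_ne_zero hN0
    rw [hj] at hNle
    have hlt : Q μ j < m := by
      have := Nat.find_min hex (m := j) (by omega)
      omega
    have hle : m ≤ Q μ j + μ.colLen j := by rw [← Q_succ]; exact hNle
    refine ⟨(m - Q μ j - 1, j), ?_, ?_⟩
    · simp only [Finset.coe_mem, Finset.mem_coe, YoungDiagram.mem_cells]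
      rw [YoungDiagram.mem_iff_lt_colLen]
      omega
    · change Q μ j + (m - Q μ j - 1) + 1 = m
      omega
  · rintro ⟨i, j⟩ ⟨i', j'⟩ hc hc' h1 h2
    simp only at h1 h2
    subst h1
    have hm : i < μ.colLen j := YoungDiagram.mem_iff_lt_colLen.1 ((YoungDiagram.mem_cells _).1 hc)
    have : Q μ j + μ.colLen j ≤ Q μ j' := (Q_succ μ j ▸ Q_mono μ h2)
    change Q μ j + i + 1 < Q μ j' + i + 1
    omega
  · rintro ⟨i, j⟩ ⟨i', j'⟩ _ _ h1 h2
    simp only at h1 h2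
    subst h1
    change Q μ j + i + 1 < Q μ j + i' + 1
    omega

/-- cardinality of the level-`k` prefix of an SYT -/
lemma card_prefix (μ : YoungDiagram) {T : ℕ × ℕ → ℕ} (hT : IsSYT μ T) {k : ℕ}
    (hk : k ≤ μ.card) :
    (μ.cells.filter fun c => T c ≤ k).card = k := by
  classical
  have himg : (μ.cells.filter fun c => T c ≤ k).image T = Finset.Icc 1 k := by
    ext m
    simp only [Finset.mem_image, Finset.mem_filter, Finset.mem_Icc]
    constructor
    · rintro ⟨c, ⟨hc, hck⟩, rfl⟩
      exact ⟨(hT.1.1 hc).1, hck⟩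
    · rintro ⟨h1, h2⟩
      obtain ⟨c, hc, rfl⟩ := hT.1.2.2 (Set.mem_Icc.2 ⟨h1, le_trans h2 hk⟩)
      exact ⟨c, ⟨hc, h2⟩, rfl⟩
  have hinj : Set.InjOn T ↑(μ.cells.filter fun c => T c ≤ k) :=
    hT.1.2.1.mono (by simp only [Finset.coe_filter]; exact Set.sep_subset _ _)
  have := Finset.card_image_of_injOn hinj
  rw [himg, Nat.card_Icc] at this
  omega

/-- the prefix of an SYT is closed under going up and left -/
lemma prefix_closed (μ : YoungDiagram) {T : ℕ × ℕ → ℕ} (hT : IsSYT μ T) {k i j i' j' : ℕ}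
    (h : (i, j) ∈ μ.cells) (hTk : T (i, j) ≤ k) (hi : i' ≤ i) (hj : j' ≤ j) :
    (i', j') ∈ μ.cells ∧ T (i', j') ≤ k := by
  have hmem : (i', j') ∈ μ.cells := (YoungDiagram.mem_cells _).2 (μ.up_left_mem hi hj ((YoungDiagram.mem_cells _).1 h))
  have hmid : (i', j) ∈ μ.cells := (YoungDiagram.mem_cells _).2 (μ.up_left_mem hi le_rfl ((YoungDiagram.mem_cells _).1 h))
  have h1 : T (i', j') ≤ T (i', j) := by
    rcases eq_or_lt_of_le hj with rfl | hj'
    · exact le_rfl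
    · exact (hT.2.1 (i', j') (i', j) hmem hmid rfl hj').le
  have h2 : T (i', j) ≤ T (i, j) := by
    rcases eq_or_lt_of_le hi with rfl | hi'
    · exact le_rfl
    · exact (hT.2.2 (i', j) (i, j) hmid h rfl hi').le
  exact ⟨hmem, le_trans (le_trans h1 h2) hTk⟩

section Compare

variable (μ : YoungDiagram)

/-- Core comparison: any lower-set `A` of `μ` with the same cardinality as the
row-reading prefix `R_k` has weight sum at most that of `R_k`. -/
lemma sum_w_le_rowPrefix (k : ℕ) (A : Finset (ℕ × ℕ)) (hA : A ⊆ μ.cells)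
    (hcl : ∀ i j i' j', (i, j) ∈ A → i' ≤ i → j' ≤ j → (i', j') ∈ A)
    (hcard : A.card = (μ.cells.filter fun c => rowFill μ c ≤ k).card) :
    ∑ c ∈ A, w c ≤ ∑ c ∈ μ.cells.filter fun c => rowFill μ c ≤ k, w c := by
  classical
  set R := μ.cells.filter fun c => rowFill μ c ≤ k with hR
  -- pairwise comparison
  have key : ∀ c ∈ A \ R, ∀ c' ∈ R \ A, w c ≤ w c' := by
    rintro ⟨i, j⟩ hc ⟨i', j'⟩ hc'
    rw [Finset.mem_sdiff] at hc hc'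
    obtain ⟨hcA, hcR⟩ := hc
    obtain ⟨hcR', hcA'⟩ := hc'
    rw [hR, Finset.mem_filter] at hcR hcR'
    have hcμ : (i, j) ∈ μ.cells := hA hcA
    have hgt : k < rowFill μ (i, j) := by
      by_contra hcon
      exact hcR ⟨hcμ, by omega⟩
    have hle : rowFill μ (i', j') ≤ k := hcR'.2
    have hjlt : j < μ.rowLen i := YoungDiagram.mem_iff_lt_rowLen.1 ((YoungDiagram.mem_cells _).1 hcμ)
    change P μ i' + j' + 1 ≤ k at hle
    change k < P μ i + j + 1 at hgt
    -- i' < i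
    have hii : i' < i := by
      rcases lt_trichotomy i' i with h | h | h
      · exact h
      · exfalso
        subst h
        exact hcA' (hcl i' j i' j' hcA le_rfl (by omega))
      · exfalso
        have : P μ i + μ.rowLen i ≤ P μ i' := (P_succ μ i ▸ P_mono μ h)
        omega
    -- j < j'
    have hjj : j < j' := by
      by_contra hcon
      exact hcA' (hcl i j i' j' hcA (by omega) (by omega))
    show (j : ℝ) - i + 1 ≤ (j' : ℝ) - i' + 1
    have h1 : (j : ℝ) ≤ (j' : ℝ) := by exact_mod_cast hjj.le
    have h2 : (i' : ℝ) ≤ (i : ℝ) := by exact_mod_cast hii.le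
    linarith
  -- split sums over the symmetric difference
  have hAsplit : ∑ c ∈ A \ R, w c + ∑ c ∈ A ∩ R, w c = ∑ c ∈ A, w c := by
    have := Finset.sum_sdiff (f := w) (Finset.inter_subset_left (s₁ := A) (s₂ := R))
    rwa [Finset.sdiff_inter_self_left] at this
  have hRsplit : ∑ c ∈ R \ A, w c + ∑ c ∈ R ∩ A, w c = ∑ c ∈ R, w c := by
    have := Finset.sum_sdiff (f := w) (Finset.inter_subset_left (s₁ := R) (s₂ := A))
    rwa [Finset.sdiff_inter_self_left] at this
  have hcardd : (A \ R).card = (R \ A).card := by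
    have h1 := Finset.card_sdiff_add_card_inter A R
    have h2 := Finset.card_sdiff_add_card_inter R A
    rw [Finset.inter_comm R A] at h2
    omega
  have hdiff : ∑ c ∈ A \ R, w c ≤ ∑ c ∈ R \ A, w c := by
    let e := Finset.equivOfCardEq hcardd
    calc ∑ c ∈ A \ R, w c = ∑ c : (A \ R : Finset (ℕ × ℕ)), w c :=
          (Finset.sum_coe_sort _ _).symm
      _ ≤ ∑ c : (A \ R : Finset (ℕ × ℕ)), w (e c) := by
          refine Finset.sum_le_sum fun c _ => key c c.2 (e c) (e c).2
      _ = ∑ c : (R \ A : Finset (ℕ × ℕ)), w c := Equiv.sum_comp e (fun y => w (y : ℕ × ℕ))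
      _ = ∑ c ∈ R \ A, w c := Finset.sum_coe_sort _ _
  have hinter : A ∩ R = R ∩ A := Finset.inter_comm A R
  calc ∑ c ∈ A, w c = ∑ c ∈ A \ R, w c + ∑ c ∈ A ∩ R, w c := hAsplit.symm
    _ ≤ ∑ c ∈ R \ A, w c + ∑ c ∈ R ∩ A, w c := by rw [hinter]; gcongr
    _ = ∑ c ∈ R, w c := hRsplit

/-- Mirror image: the column-reading prefix has the least weight sum. -/
lemma colPrefix_sum_w_le (k : ℕ) (A : Finset (ℕ × ℕ)) (hA : A ⊆ μ.cells)
    (hcl : ∀ i j i' j', (i, j) ∈ A → i' ≤ i → j' ≤ j → (i', j') ∈ A)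
    (hcard : A.card = (μ.cells.filter fun c => colFill μ c ≤ k).card) :
    ∑ c ∈ μ.cells.filter (fun c => colFill μ c ≤ k), w c ≤ ∑ c ∈ A, w c := by
  classical
  set C := μ.cells.filter fun c => colFill μ c ≤ k with hC
  have key : ∀ c' ∈ C \ A, ∀ c ∈ A \ C, w c' ≤ w c := by
    rintro ⟨i', j'⟩ hc' ⟨i, j⟩ hc
    rw [Finset.mem_sdiff] at hc hc'
    obtain ⟨hcA, hcC⟩ := hc
    obtain ⟨hcC', hcA'⟩ := hc'
    rw [hC, Finset.mem_filter] at hcC hcC'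
    have hcμ : (i, j) ∈ μ.cells := hA hcA
    have hgt : k < colFill μ (i, j) := by
      by_contra hcon
      exact hcC ⟨hcμ, by omega⟩
    have hle : colFill μ (i', j') ≤ k := hcC'.2
    have hilt : i < μ.colLen j := YoungDiagram.mem_iff_lt_colLen.1 ((YoungDiagram.mem_cells _).1 hcμ)
    change Q μ j' + i' + 1 ≤ k at hle
    change k < Q μ j + i + 1 at hgt
    have hjj : j' < j := by
      rcases lt_trichotomy j' j with h | h | h
      · exact h
      · exfalso
        subst h
        exact hcA' (hcl i j' i' j' hcA (by omega) le_rfl)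
      · exfalso
        have : Q μ j + μ.colLen j ≤ Q μ j' := (Q_succ μ j ▸ Q_mono μ h)
        omega
    have hii : i < i' := by
      by_contra hcon
      exact hcA' (hcl i j i' j' hcA (by omega) (by omega))
    show (j' : ℝ) - i' + 1 ≤ (j : ℝ) - i + 1
    have h1 : (j' : ℝ) ≤ (j : ℝ) := by exact_mod_cast hjj.le
    have h2 : (i : ℝ) ≤ (i' : ℝ) := by exact_mod_cast hii.le
    linarith
  have hAsplit : ∑ c ∈ A \ C, w c + ∑ c ∈ A ∩ C, w c = ∑ c ∈ A, w c := by
    have := Finset.sum_sdiff (f := w) (Finset.inter_subset_left (s₁ := A) (s₂ := C))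
    rwa [Finset.sdiff_inter_self_left] at this
  have hCsplit : ∑ c ∈ C \ A, w c + ∑ c ∈ C ∩ A, w c = ∑ c ∈ C, w c := by
    have := Finset.sum_sdiff (f := w) (Finset.inter_subset_left (s₁ := C) (s₂ := A))
    rwa [Finset.sdiff_inter_self_left] at this
  have hcardd : (C \ A).card = (A \ C).card := by
    have h1 := Finset.card_sdiff_add_card_inter A C
    have h2 := Finset.card_sdiff_add_card_inter C A
    rw [Finset.inter_comm C A] at h2
    omega
  have hdiff : ∑ c ∈ C \ A, w c ≤ ∑ c ∈ A \ C, w c := by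
    let e := Finset.equivOfCardEq hcardd
    calc ∑ c ∈ C \ A, w c = ∑ c : (C \ A : Finset (ℕ × ℕ)), w c :=
          (Finset.sum_coe_sort _ _).symm
      _ ≤ ∑ c : (C \ A : Finset (ℕ × ℕ)), w (e c) := by
          refine Finset.sum_le_sum fun c _ => key c c.2 (e c) (e c).2
      _ = ∑ c : (A \ C : Finset (ℕ × ℕ)), w c := Equiv.sum_comp e (fun y => w (y : ℕ × ℕ))
      _ = ∑ c ∈ A \ C, w c := Finset.sum_coe_sort _ _
  have hinter : C ∩ A = A ∩ C := Finset.inter_comm C A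
  calc ∑ c ∈ C, w c = ∑ c ∈ C \ A, w c + ∑ c ∈ C ∩ A, w c := hCsplit.symm
    _ ≤ ∑ c ∈ A \ C, w c + ∑ c ∈ A ∩ C, w c := by rw [hinter]; gcongr
    _ = ∑ c ∈ A, w c := hAsplit

end Compare

lemma telescope {m n : ℕ} (h1 : 1 ≤ m) (h : m ≤ n) :
    ∑ k ∈ Finset.Icc m n, ((k : ℝ)⁻¹ - ((k : ℝ) + 1)⁻¹) = (m : ℝ)⁻¹ - ((n : ℝ) + 1)⁻¹ := by
  induction n, h using Nat.le_induction with
  | base => simp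
  | succ n hn ih =>
    rw [Finset.sum_Icc_succ_top (by omega), ih]
    push_cast
    ring

/-- Abel-type decomposition of the eig sum. -/
lemma abel (μ : YoungDiagram) (T : ℕ × ℕ → ℕ)
    (hmaps : ∀ c ∈ μ.cells, 1 ≤ T c ∧ T c ≤ μ.card) :
    ∑ c ∈ μ.cells, w c / (T c : ℝ)
      = (∑ k ∈ Finset.Icc 1 μ.card, ((k : ℝ)⁻¹ - ((k : ℝ) + 1)⁻¹) *
          ∑ c ∈ μ.cells.filter fun c => T c ≤ k, w c)
        + ((μ.card : ℝ) + 1)⁻¹ * ∑ c ∈ μ.cells, w c := by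
  classical
  have step1 : ∀ c ∈ μ.cells,
      w c / (T c : ℝ)
        = (∑ k ∈ Finset.Icc 1 μ.card, if T c ≤ k then ((k : ℝ)⁻¹ - ((k : ℝ) + 1)⁻¹) * w c else 0)
          + ((μ.card : ℝ) + 1)⁻¹ * w c := by
    intro c hc
    obtain ⟨h1, h2⟩ := hmaps c hc
    have hfil : (Finset.Icc 1 μ.card).filter (fun k => T c ≤ k) = Finset.Icc (T c) μ.card := by
      ext k
      simp only [Finset.mem_filter, Finset.mem_Icc]
      omega
    rw [← Finset.sum_filter, hfil, ← Finset.sum_mul, telescope h1 h2]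
    have hTpos : (0 : ℝ) < (T c : ℝ) := by exact_mod_cast h1
    field_simp
    ring
  rw [Finset.sum_congr rfl step1, Finset.sum_add_distrib, ← Finset.mul_sum]
  congr 1
  rw [Finset.sum_comm]
  refine Finset.sum_congr rfl fun k _ => ?_
  rw [Finset.mul_sum, ← Finset.sum_filter]

/-- monotonicity of the eig sums from prefix-sum domination -/
lemma sum_le_sum_of_prefix (μ : YoungDiagram) (T T' : ℕ × ℕ → ℕ)
    (hT : IsSYT μ T) (hT' : IsSYT μ T')
    (hpre : ∀ k ∈ Finset.Icc 1 μ.card,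
      ∑ c ∈ μ.cells.filter (fun c => T c ≤ k), w c
        ≤ ∑ c ∈ μ.cells.filter (fun c => T' c ≤ k), w c) :
    ∑ c ∈ μ.cells, w c / (T c : ℝ) ≤ ∑ c ∈ μ.cells, w c / (T' c : ℝ) := by
  have hm : ∀ c ∈ μ.cells, 1 ≤ T c ∧ T c ≤ μ.card := fun c hc =>
    ⟨(hT.1.1 hc).1, (hT.1.1 hc).2⟩
  have hm' : ∀ c ∈ μ.cells, 1 ≤ T' c ∧ T' c ≤ μ.card := fun c hc =>
    ⟨(hT'.1.1 hc).1, (hT'.1.1 hc).2⟩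
  rw [abel μ T hm, abel μ T' hm']
  refine add_le_add ?_ le_rfl
  refine Finset.sum_le_sum fun k hk => ?_
  rw [Finset.mem_Icc] at hk
  have hk0 : (0 : ℝ) < (k : ℝ) := by exact_mod_cast hk.1
  have hco : (0 : ℝ) ≤ (k : ℝ)⁻¹ - ((k : ℝ) + 1)⁻¹ := by
    rw [sub_nonneg]
    exact inv_anti₀ hk0 (by linarith)
  exact mul_le_mul_of_nonneg_left (hpre k (Finset.mem_Icc.2 hk)) hco

end EigAux

theorem eig_between (μ : YoungDiagram) (T : ℕ × ℕ → ℕ) (hT : IsSYT μ T) :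
    eigF μ (colFill μ) ≤ eigF μ T ∧ eigF μ T ≤ eigF μ (rowFill μ) := by
  classical
  open EigAux in
  have hclosed : ∀ k : ℕ, ∀ i j i' j' : ℕ,
      (i, j) ∈ μ.cells.filter (fun c => T c ≤ k) → i' ≤ i → j' ≤ j →
      (i', j') ∈ μ.cells.filter (fun c => T c ≤ k) := by
    intro k i j i' j' hmem hi hj
    rw [Finset.mem_filter] at hmem
    obtain ⟨h1, h2⟩ := EigAux.prefix_closed μ hT hmem.1 hmem.2 hi hj
    exact Finset.mem_filter.2 ⟨h1, h2⟩
  have hrow : ∑ c ∈ μ.cells, EigAux.w c / (T c : ℝ)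
      ≤ ∑ c ∈ μ.cells, EigAux.w c / (rowFill μ c : ℝ) := by
    refine EigAux.sum_le_sum_of_prefix μ T (rowFill μ) hT (EigAux.rowFill_isSYT μ) ?_
    intro k hk
    rw [Finset.mem_Icc] at hk
    refine EigAux.sum_w_le_rowPrefix μ k _ (Finset.filter_subset _ _) (hclosed k) ?_
    rw [EigAux.card_prefix μ hT hk.2, EigAux.card_prefix μ (EigAux.rowFill_isSYT μ) hk.2]
  have hcol : ∑ c ∈ μ.cells, EigAux.w c / (colFill μ c : ℝ)
      ≤ ∑ c ∈ μ.cells, EigAux.w c / (T c : ℝ) := by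
    refine EigAux.sum_le_sum_of_prefix μ (colFill μ) T (EigAux.colFill_isSYT μ) hT ?_
    intro k hk
    rw [Finset.mem_Icc] at hk
    refine EigAux.colPrefix_sum_w_le μ k _ (Finset.filter_subset _ _) (hclosed k) ?_
    rw [EigAux.card_prefix μ hT hk.2, EigAux.card_prefix μ (EigAux.colFill_isSYT μ) hk.2]
  have hpos : (0 : ℝ) ≤ 1 / (μ.card : ℝ) := by positivity
  constructor
  · exact mul_le_mul_of_nonneg_left hcol hpos
  · exact mul_le_mul_of_nonneg_left hrow hpos
end

section
/- Let λ, μ ⊢ n with λ ⊵ μ in the dominance order. Then eig(T_λ^→) ≥ eig(T_μ^→) and eig(T_λ^↓) ≥ eig(T_μ^↓). -/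
namespace EigAux
open Finset

noncomputable def H (x : ℕ) : ℝ := ∑ k ∈ range x, (1:ℝ)/(k+1)

lemma H_succ (x : ℕ) : H (x+1) = H x + 1/(x+1) := by
  simp [H, Finset.sum_range_succ]

lemma H_mono {a b : ℕ} (h : a ≤ b) : H a ≤ H b := by
  unfold H
  apply Finset.sum_le_sum_of_subset_of_nonneg (Finset.range_subset_range.2 h)
  intro i _ _; positivity

lemma H_diff_eq {a b : ℕ} (h : a ≤ b) :
    H b - H a = ∑ k ∈ Ico a b, (1:ℝ)/(k+1) := by
  unfold H
  rw [Finset.sum_Ico_eq_sub _ h]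

lemma H_diff_le {a b : ℕ} (h : a ≤ b) :
    H b - H a ≤ (b - a : ℕ) / (a+1 : ℝ) := by
  rw [H_diff_eq h]
  have : ∀ k ∈ Ico a b, (1:ℝ)/(k+1) ≤ 1/(a+1) := by
    intro k hk
    rw [mem_Ico] at hk
    apply one_div_le_one_div_of_le (by positivity)
    have h2 : (a:ℝ) ≤ k := Nat.cast_le.2 hk.1
    linarith
  calc ∑ k ∈ Ico a b, (1:ℝ)/(k+1) ≤ ∑ _k ∈ Ico a b, (1:ℝ)/(a+1) :=
        Finset.sum_le_sum this
    _ = (b - a : ℕ) / (a+1:ℝ) := by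
        rw [Finset.sum_const, Nat.card_Ico]
        ring

/-- The key functional: `G n P = ∑_{i<n} (P i + i)·(H (P (i+1)) − H (P i))`. -/
noncomputable def G (n : ℕ) (P : ℕ → ℕ) : ℝ :=
  ∑ i ∈ range n, ((P i + i : ℕ) : ℝ) * (H (P (i+1)) - H (P i))


lemma G_step (n m : ℕ) (C : ℕ → ℕ) (h1 : 1 ≤ m) (h2 : m < n)
    (hmono : ∀ i, C i ≤ C (i+1))
    (hloc : C (m+1) + C (m-1) ≤ 2 * C m + 2) :
    G n (Function.update C m (C m + 1)) ≤ G n C := by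
  set D := Function.update C m (C m + 1) with hD
  -- values of D
  have hDm : D m = C m + 1 := by simp [hD]
  have hDo : ∀ i, i ≠ m → D i = C i := by
    intro i hi; simp [hD, Function.update_of_ne hi]
  -- terms agree off {m-1, m}
  have hterm : ∀ i ∈ range n, i ∉ ({m-1, m} : Finset ℕ) →
      ((D i + i : ℕ) : ℝ) * (H (D (i+1)) - H (D i))
        = ((C i + i : ℕ) : ℝ) * (H (C (i+1)) - H (C i)) := by
    intro i _ hi
    simp only [mem_insert, mem_singleton] at hi
    push_neg at hi
    have hi1 : i ≠ m := hi.2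
    have hi2 : i + 1 ≠ m := by omega
    rw [hDo i hi1, hDo (i+1) hi2]
  -- split the sums
  have hsub : ({m-1, m} : Finset ℕ) ⊆ range n := by
    intro x hx
    simp only [mem_insert, mem_singleton] at hx
    rw [mem_range]; omega
  have hsplit : ∀ P : ℕ → ℕ,
      G n P = (∑ i ∈ range n \ {m-1, m}, ((P i + i : ℕ) : ℝ) * (H (P (i+1)) - H (P i)))
        + (((P (m-1) + (m-1) : ℕ) : ℝ) * (H (P m) - H (P (m-1)))
          + ((P m + m : ℕ) : ℝ) * (H (P (m+1)) - H (P m))) := by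
    intro P
    rw [G, ← Finset.sum_sdiff hsub]
    congr 1
    rw [Finset.sum_pair (by omega : m - 1 ≠ m), (by omega : m - 1 + 1 = m)]
  rw [hsplit D, hsplit C]
  have heq : ∑ i ∈ range n \ {m-1, m}, ((D i + i : ℕ) : ℝ) * (H (D (i+1)) - H (D i))
      = ∑ i ∈ range n \ {m-1, m}, ((C i + i : ℕ) : ℝ) * (H (C (i+1)) - H (C i)) := by
    apply Finset.sum_congr rfl
    intro i hi
    rw [mem_sdiff] at hi
    exact hterm i hi.1 hi.2
  rw [heq]
  apply add_le_add_right
  rw [hDo (m-1) (by omega), hDm, hDo (m+1) (by omega)]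
  set a := C (m-1) with ha
  set b := C m with hb
  set c := C (m+1) with hc
  have hab : a ≤ b := by
    have := hmono (m-1); rwa [(by omega : m - 1 + 1 = m)] at this
  have hbc : b ≤ c := hmono m
  have hloc' : c ≤ b + (b + 2 - a) := by omega
  have hb1 : (0:ℝ) < (b:ℝ) + 1 := by positivity
  have e2 : H c - (H b + 1/((b:ℝ)+1)) ≤ ((b:ℝ) - a + 1) * (1/((b:ℝ)+1)) := by
    rcases le_or_gt c (b+1) with hcb | hcb
    · have h3 : H c ≤ H (b+1) := H_mono hcb
      rw [H_succ] at h3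
      have h4 : (0:ℝ) ≤ ((b:ℝ) - a + 1) * (1/((b:ℝ)+1)) := by
        have : (a:ℝ) ≤ (b:ℝ) := Nat.cast_le.2 hab
        have h5 : (0:ℝ) ≤ (b:ℝ) - a + 1 := by linarith
        positivity
      linarith
    · have h3 : H c - H (b+1) ≤ ((c - (b+1) : ℕ) : ℝ) / ((b:ℝ)+1+1) :=  by
        have := H_diff_le (le_of_lt hcb)
        push_cast at this ⊢
        convert this using 3 <;> push_cast <;> ring
      have h4 : ((c - (b+1) : ℕ) : ℝ) ≤ (b:ℝ) - a + 1 := by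
        have h5 : (c - (b+1) : ℕ) ≤ b + 1 - a := by omega
        have h6 : ((c - (b+1) : ℕ) : ℝ) ≤ ((b + 1 - a : ℕ) : ℝ) := Nat.cast_le.2 h5
        have h7 : ((b + 1 - a : ℕ) : ℝ) = (b:ℝ) + 1 - a := by
          push_cast [Nat.cast_sub (by omega : a ≤ b + 1)]; ring
        linarith
      have h8 : ((c - (b+1) : ℕ) : ℝ) / ((b:ℝ)+1+1) ≤ ((b:ℝ) - a + 1) / ((b:ℝ)+1) := by
        apply div_le_div₀ (by linarith [Nat.cast_nonneg (α := ℝ) (c - (b+1))]) h4 hb1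
        linarith
      rw [H_succ] at h3
      have h9 : ((b:ℝ) - a + 1) / ((b:ℝ)+1) = ((b:ℝ) - a + 1) * (1/((b:ℝ)+1)) := by ring
      linarith
  rw [H_succ]
  have hm1 : ((m - 1 : ℕ) : ℝ) = (m:ℝ) - 1 := by
    push_cast [Nat.cast_sub h1]; ring
  push_cast [hm1]
  nlinarith [e2, hb1]


lemma G_boxmove (n k : ℕ) (B : ℕ → ℕ) (hk : k ≤ n)
    (hmono : ∀ i, B i ≤ B (i+1))
    (hconc : ∀ m, 1 ≤ m → B (m+1) + B (m-1) ≤ 2 * B m)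
    (hBk : B (k-1) + 1 ≤ B k) :
    ∀ d j, 1 ≤ j → j + d = k →
      G n (fun i => if j ≤ i ∧ i < k then B i + 1 else B i) ≤ G n B := by
  intro d
  induction d with
  | zero =>
    intro j hj hjk
    have : (fun i => if j ≤ i ∧ i < k then B i + 1 else B i) = B := by
      funext i; rw [if_neg (by omega)]
    rw [this]
  | succ d ih =>
    intro j hj hjk
    have hjk' : j < k := by omega
    set C : ℕ → ℕ := fun i => if j + 1 ≤ i ∧ i < k then B i + 1 else B i with hC
    have hCval : ∀ i, C i = if j + 1 ≤ i ∧ i < k then B i + 1 else B i := fun i => rfl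
    have hCe : (fun i => if j ≤ i ∧ i < k then B i + 1 else B i)
        = Function.update C j (C j + 1) := by
      funext i
      rcases eq_or_ne i j with rfl | hij
      · rw [Function.update_self, hCval i, if_pos ⟨le_refl _, hjk'⟩, if_neg (by omega)]
      · rw [Function.update_of_ne hij, hCval i]
        by_cases h : j ≤ i ∧ i < k
        · rw [if_pos h, if_pos (by omega)]
        · rw [if_neg h, if_neg (by omega)]
    rw [hCe]
    have hCmono : ∀ i, C i ≤ C (i+1) := by
      intro i
      by_cases h1 : j + 1 ≤ i ∧ i < k
      · by_cases h2 : j + 1 ≤ i + 1 ∧ i + 1 < k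
        · rw [hCval i, hCval (i+1), if_pos h1, if_pos h2]
          exact Nat.succ_le_succ (hmono i)
        · have hik : i = k - 1 := by omega
          rw [hCval i, hCval (i+1), if_pos h1, if_neg h2, hik,
            (by omega : k - 1 + 1 = k)]
          exact hBk
      · by_cases h2 : j + 1 ≤ i + 1 ∧ i + 1 < k
        · rw [hCval i, hCval (i+1), if_neg h1, if_pos h2]
          exact le_trans (hmono i) (Nat.le_succ _)
        · rw [hCval i, hCval (i+1), if_neg h1, if_neg h2]
          exact hmono i
    have hCloc : C (j+1) + C (j-1) ≤ 2 * C j + 2 := by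
      have e1 : C (j-1) = B (j-1) := by rw [hCval]; rw [if_neg (by omega)]
      have e2 : C j = B j := by rw [hCval]; rw [if_neg (by omega)]
      have hcj := hconc j hj
      by_cases h : j + 1 < k
      · have e3 : C (j+1) = B (j+1) + 1 := by rw [hCval]; rw [if_pos ⟨le_refl _, h⟩]
        omega
      · have e3 : C (j+1) = B (j+1) := by rw [hCval]; rw [if_neg (by omega)]
        omega
    calc G n (Function.update C j (C j + 1)) ≤ G n C :=
          G_step n j C hj (by omega) hCmono hCloc
      _ ≤ G n B := ih (j+1) (by omega) (by omega)


lemma G_dominance (n : ℕ) (A : ℕ → ℕ)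
    (hA0 : A 0 = 0)
    (hAmono : ∀ i, A i ≤ A (i+1))
    (hAconc : ∀ m, 1 ≤ m → A (m+1) + A (m-1) ≤ 2 * A m)
    (hAn : ∀ m, n ≤ m → A m = n) :
    ∀ d (B : ℕ → ℕ), B 0 = 0 → (∀ i, B i ≤ B (i+1)) →
      (∀ m, 1 ≤ m → B (m+1) + B (m-1) ≤ 2 * B m) →
      (∀ m, n ≤ m → B m = n) → (∀ m, B m ≤ A m) →
      (∑ m ∈ range (n+1), (A m - B m)) ≤ d →
      G n A ≤ G n B := by
  intro d
  induction d with
  | zero =>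
    intro B hB0 hBmono hBconc hBn hle hsum
    have : ∀ m, m ≤ n → A m = B m := by
      intro m hm
      have h1 : A m - B m = 0 := by
        have := Finset.sum_eq_zero_iff.1 (Nat.le_zero.1 hsum) m (by
          rw [mem_range]; omega)
        exact this
      have := hle m
      omega
    have hAB : ∀ m, m < n → A m = B m := fun m hm => this m (le_of_lt hm)
    have : G n A = G n B := by
      apply Finset.sum_congr rfl
      intro i hi
      rw [mem_range] at hi
      rw [this i (by omega), this (i+1) (by omega)]
    rw [this]
  | succ d ih =>
    intro B hB0 hBmono hBconc hBn hle hsum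
    by_cases hAB : ∀ m, m ≤ n → A m = B m
    · have : G n A = G n B := by
        apply Finset.sum_congr rfl
        intro i hi
        rw [mem_range] at hi
        rw [hAB i (by omega), hAB (i+1) (by omega)]
      rw [this]
    · push_neg at hAB
      obtain ⟨m₁, hm₁n, hm₁⟩ := hAB
      have hex : ∃ m, B m < A m := ⟨m₁, lt_of_le_of_ne (hle m₁) (fun h => hm₁ h.symm)⟩
      set j := Nat.find hex with hj
      have hjlt : B j < A j := Nat.find_spec hex
      have hjmin : ∀ m, m < j → A m = B m := by
        intro m hm
        have := Nat.find_min hex hm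
        have := hle m
        omega
      have hj1 : 1 ≤ j := by
        rcases Nat.eq_zero_or_pos j with h | h
        · rw [h] at hjlt; omega
        · exact h
      have hjn : j < n := by
        by_contra h
        push_neg at h
        rw [hAn j h, hBn j h] at hjlt
        omega
      have hexk : ∃ m, j < m ∧ B m = A m :=
        ⟨n, hjn, by rw [hAn n (le_refl n), hBn n (le_refl n)]⟩
      set k := Nat.find hexk with hk
      have hkspec : j < k ∧ B k = A k := Nat.find_spec hexk
      have hkn : k ≤ n := Nat.find_le ⟨hjn, by rw [hAn n (le_refl n), hBn n (le_refl n)]⟩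
      have hdef : ∀ m, j ≤ m → m < k → B m < A m := by
        intro m hm hmk
        rcases eq_or_lt_of_le hm with rfl | h
        · exact hjlt
        · have := Nat.find_min hexk hmk
          have h2 := hle m
          by_contra hc
          push_neg at hc
          exact this ⟨h, by omega⟩
      have hk1 : B (k-1) < A (k-1) := hdef (k-1) (by omega) (by omega)
      have hkeq : B k = A k := hkspec.2
      -- B' : the box move
      set B' : ℕ → ℕ := fun i => if j ≤ i ∧ i < k then B i + 1 else B i with hB'
      have hB'val : ∀ i, B' i = if j ≤ i ∧ i < k then B i + 1 else B i := fun i => rfl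
      have hBk' : B (k-1) + 1 ≤ B k := by
        have h1 := hAmono (k-1)
        rw [(by omega : k - 1 + 1 = k)] at h1
        omega
      have hG1 : G n B' ≤ G n B :=
        G_boxmove n k B hkn hBmono hBconc hBk' (k - j) j hj1 (by omega)
      -- properties of B'
      have hB'0 : B' 0 = 0 := by rw [hB'val, if_neg (by omega)]; exact hB0
      have hB'mono : ∀ i, B' i ≤ B' (i+1) := by
        intro i
        rw [hB'val i, hB'val (i+1)]
        by_cases h1 : j ≤ i ∧ i < k
        · by_cases h2 : j ≤ i + 1 ∧ i + 1 < k
          · rw [if_pos h1, if_pos h2]; exact Nat.succ_le_succ (hBmono i)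
          · have hik : i = k - 1 := by omega
            rw [if_pos h1, if_neg h2, hik, (by omega : k - 1 + 1 = k)]
            exact hBk'
        · by_cases h2 : j ≤ i + 1 ∧ i + 1 < k
          · rw [if_neg h1, if_pos h2]
            exact le_trans (hBmono i) (Nat.le_succ _)
          · rw [if_neg h1, if_neg h2]; exact hBmono i
      have hB'conc : ∀ m, 1 ≤ m → B' (m+1) + B' (m-1) ≤ 2 * B' m := by
        intro m hm
        rw [hB'val (m+1), hB'val (m-1), hB'val m]
        have hBc := hBconc m hm
        by_cases c1 : j ≤ m - 1 ∧ m - 1 < k <;>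
          by_cases c2 : j ≤ m ∧ m < k <;>
            by_cases c3 : j ≤ m + 1 ∧ m + 1 < k
        -- (T,T,T) : interior
        · rw [if_pos c3, if_pos c1, if_pos c2]; omega
        -- (T,T,F) : m+1 = k, i.e. m = k-1 > j
        · rw [if_neg c3, if_pos c1, if_pos c2]; omega
        -- (T,F,T) impossible
        · omega
        -- (T,F,F) : m = k, m-1 = k-1 ≥ j : the "at k" case
        · rw [if_neg c3, if_pos c1, if_neg c2]
          have hmk : m = k := by omega
          -- need B (k+1) + B(k-1) + 1 ≤ 2 B k
          have hA1 : A (k+1) + A (k-1) ≤ 2 * A k := hAconc k (by omega)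
          have hB1 : B (k+1) ≤ A (k+1) := hle (k+1)
          subst hmk
          omega
        -- (F,T,T) : m = j (m-1 < j)
        · rw [if_pos c3, if_neg c1, if_pos c2]; omega
        -- (F,T,F) : m = j ∧ m+1 = k
        · rw [if_neg c3, if_neg c1, if_pos c2]; omega
        -- (F,F,T) : m+1 = j, i.e. m = j-1, need B j + 1 + B(j-2) ≤ 2 B(j-1)
        · rw [if_pos c3, if_neg c1, if_neg c2]
          have hmj : m + 1 = j := by omega
          have e1 : A m = B m := hjmin m (by omega)
          have e2 : A (m-1) = B (m-1) := hjmin (m-1) (by omega)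
          have hAc : A (m+1) + A (m-1) ≤ 2 * A m := hAconc m hm
          have hjlt' : B (m+1) < A (m+1) := by rw [hmj]; exact hjlt
          omega
        -- (F,F,F)
        · rw [if_neg c3, if_neg c1, if_neg c2]; omega
      have hB'n : ∀ m, n ≤ m → B' m = n := by
        intro m hm
        rw [hB'val, if_neg (by omega)]
        exact hBn m hm
      have hle' : ∀ m, B' m ≤ A m := by
        intro m
        rw [hB'val]
        by_cases h : j ≤ m ∧ m < k
        · rw [if_pos h]; exact hdef m h.1 h.2
        · rw [if_neg h]; exact hle m
      have hmeas : (∑ m ∈ range (n+1), (A m - B' m)) ≤ d := by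
        have hlt : (∑ m ∈ range (n+1), (A m - B' m))
            < ∑ m ∈ range (n+1), (A m - B m) := by
          apply Finset.sum_lt_sum
          · intro i _
            rw [hB'val]
            by_cases h : j ≤ i ∧ i < k
            · rw [if_pos h]; omega
            · rw [if_neg h]
          · refine ⟨j, by rw [mem_range]; omega, ?_⟩
            rw [hB'val, if_pos ⟨le_refl _, by omega⟩]
            have := hdef j (le_refl _) (by omega)
            omega
        omega
      exact le_trans (ih B' hB'0 hB'mono hB'conc hB'n hle' hmeas) hG1


/-- rows with index ≥ card are empty -/
lemma rowLen_eq_zero (μ : YoungDiagram) {i : ℕ} (h : μ.card ≤ i) : μ.rowLen i = 0 := by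
  by_contra hne
  have h0 : (i, 0) ∈ μ := YoungDiagram.mem_iff_lt_rowLen.2 (by omega)
  have hsub : (range (i+1)).image (fun t => (t, (0:ℕ))) ⊆ μ.cells := by
    intro c hc
    simp only [mem_image, mem_range] at hc
    obtain ⟨t, ht, rfl⟩ := hc
    rw [YoungDiagram.mem_cells]
    exact μ.up_left_mem (by omega) (le_refl 0) h0
  have hcard : i + 1 ≤ μ.card := by
    have := Finset.card_le_card hsub
    rwa [Finset.card_image_of_injective _ (fun a b hab => by
      simpa using congrArg Prod.fst hab), Finset.card_range] at this
  omega

lemma card_transpose (μ : YoungDiagram) : μ.transpose.card = μ.card := by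
  apply Finset.card_bij (fun c _ => c.swap)
  · intro c hc
    rw [YoungDiagram.mem_cells] at hc ⊢
    exact YoungDiagram.mem_transpose.1 hc
  · intro a _ b _ hab
    exact Prod.swap_injective hab
  · intro b hb
    refine ⟨b.swap, ?_, by simp⟩
    rw [YoungDiagram.mem_cells] at hb ⊢
    rw [YoungDiagram.mem_transpose]
    simpa using hb

lemma colLen_eq_zero (μ : YoungDiagram) {j : ℕ} (h : μ.card ≤ j) : μ.colLen j = 0 := by
  have := rowLen_eq_zero μ.transpose (i := j) (by rwa [card_transpose])
  rwa [YoungDiagram.rowLen_transpose] at this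

/-- decomposition of a sum over cells into rows -/
lemma sum_cells_rows {M : Type*} [AddCommMonoid M] (μ : YoungDiagram) (N : ℕ)
    (hN : ∀ i, N ≤ i → μ.rowLen i = 0) (f : ℕ × ℕ → M) :
    ∑ c ∈ μ.cells, f c = ∑ i ∈ range N, ∑ j ∈ range (μ.rowLen i), f (i, j) := by
  have hcells : μ.cells
      = (range N).biUnion (fun i => (range (μ.rowLen i)).image (fun j => (i, j))) := by
    ext c
    obtain ⟨i, j⟩ := c
    simp only [mem_biUnion, mem_range, mem_image, YoungDiagram.mem_cells]
    constructor
    · intro hm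
      have hj : j < μ.rowLen i := YoungDiagram.mem_iff_lt_rowLen.1 hm
      have hi : i < N := by
        by_contra hc
        have := hN i (by omega)
        omega
      exact ⟨i, hi, j, hj, rfl⟩
    · rintro ⟨i', _, j', hj', h⟩
      cases h
      exact YoungDiagram.mem_iff_lt_rowLen.2 hj'
  rw [hcells, Finset.sum_biUnion]
  · apply Finset.sum_congr rfl
    intro i _
    rw [Finset.sum_image]
    intro a _ b _ hab
    simpa using congrArg Prod.snd hab
  · intro a _ b _ hab
    simp only [Function.onFun]
    rw [Finset.disjoint_left]
    intro c hc1 hc2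
    simp only [mem_image, mem_range] at hc1 hc2
    obtain ⟨j1, _, rfl⟩ := hc1
    obtain ⟨j2, _, h2⟩ := hc2
    exact hab (by simpa using (congrArg Prod.fst h2).symm)


/-- partial sums of row lengths -/
def Pr (μ : YoungDiagram) (m : ℕ) : ℕ := ∑ i ∈ range m, μ.rowLen i
/-- partial sums of column lengths -/
def Pc (μ : YoungDiagram) (m : ℕ) : ℕ := ∑ j ∈ range m, μ.colLen j

lemma sum_cells_cols {M : Type*} [AddCommMonoid M] (μ : YoungDiagram) (N : ℕ)
    (hN : ∀ j, N ≤ j → μ.colLen j = 0) (f : ℕ × ℕ → M) :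
    ∑ c ∈ μ.cells, f c = ∑ j ∈ range N, ∑ i ∈ range (μ.colLen j), f (i, j) := by
  have h1 : ∑ c ∈ μ.cells, f c = ∑ c ∈ μ.transpose.cells, f c.swap := by
    apply Finset.sum_nbij' (fun c => c.swap) (fun c => c.swap)
    · intro c hc
      rw [YoungDiagram.mem_cells] at hc ⊢
      rw [YoungDiagram.mem_transpose]
      simpa using hc
    · intro c hc
      rw [YoungDiagram.mem_cells] at hc ⊢
      exact YoungDiagram.mem_transpose.1 hc
    · intro c _; simp
    · intro c _; simp
    · intro c _; simp
  rw [h1, sum_cells_rows μ.transpose N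
    (fun i hi => by rw [YoungDiagram.rowLen_transpose]; exact hN i hi)]
  apply Finset.sum_congr rfl
  intro j _
  rw [YoungDiagram.rowLen_transpose]
  apply Finset.sum_congr rfl
  intro i _
  rfl

lemma card_eq_sum_rowLens (μ : YoungDiagram) (N : ℕ)
    (hN : ∀ i, N ≤ i → μ.rowLen i = 0) : μ.card = ∑ i ∈ range N, μ.rowLen i := by
  have := sum_cells_rows μ N hN (fun _ => (1:ℕ))
  simpa using this

lemma card_eq_sum_colLens (μ : YoungDiagram) (N : ℕ)
    (hN : ∀ j, N ≤ j → μ.colLen j = 0) : μ.card = ∑ j ∈ range N, μ.colLen j := by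
  have := sum_cells_cols μ N hN (fun _ => (1:ℕ))
  simpa using this

lemma Pr_mono (μ : YoungDiagram) : ∀ m, Pr μ m ≤ Pr μ (m+1) := by
  intro m; rw [Pr, Pr, Finset.sum_range_succ]; omega

lemma Pr_conc (μ : YoungDiagram) : ∀ m, 1 ≤ m → Pr μ (m+1) + Pr μ (m-1) ≤ 2 * Pr μ m := by
  intro m hm
  have h1 : Pr μ (m+1) = Pr μ m + μ.rowLen m := by rw [Pr, Pr, Finset.sum_range_succ]
  have h2 : Pr μ m = Pr μ (m-1) + μ.rowLen (m-1) := by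
    rw [Pr, Pr, ← Finset.sum_range_succ, (by omega : m - 1 + 1 = m)]
  have h3 : μ.rowLen m ≤ μ.rowLen (m-1) := μ.rowLen_anti _ _ (by omega)
  omega

lemma Pr_top (μ : YoungDiagram) (n : ℕ) (hn : μ.card = n) : ∀ m, n ≤ m → Pr μ m = n := by
  intro m hm
  rw [Pr, ← card_eq_sum_rowLens μ m (fun i hi => rowLen_eq_zero μ (by omega)), hn]

lemma Pc_mono (μ : YoungDiagram) : ∀ m, Pc μ m ≤ Pc μ (m+1) := by
  intro m; rw [Pc, Pc, Finset.sum_range_succ]; omega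

lemma Pc_conc (μ : YoungDiagram) : ∀ m, 1 ≤ m → Pc μ (m+1) + Pc μ (m-1) ≤ 2 * Pc μ m := by
  intro m hm
  have h1 : Pc μ (m+1) = Pc μ m + μ.colLen m := by rw [Pc, Pc, Finset.sum_range_succ]
  have h2 : Pc μ m = Pc μ (m-1) + μ.colLen (m-1) := by
    rw [Pc, Pc, ← Finset.sum_range_succ, (by omega : m - 1 + 1 = m)]
  have h3 : μ.colLen m ≤ μ.colLen (m-1) := μ.colLen_anti _ _ (by omega)
  omega

lemma Pc_top (μ : YoungDiagram) (n : ℕ) (hn : μ.card = n) : ∀ m, n ≤ m → Pc μ m = n := by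
  intro m hm
  rw [Pc, ← card_eq_sum_colLens μ m (fun j hj => colLen_eq_zero μ (by omega)), hn]

/-- `Pc μ k = ∑_{i<n} min (rowLen i) k`. -/
lemma Pc_eq_summin (μ : YoungDiagram) (n : ℕ) (hn : μ.card = n) (k : ℕ) :
    Pc μ k = ∑ i ∈ range n, min (μ.rowLen i) k := by
  have hcol : ∀ j, μ.colLen j = ((range n).filter (fun i => j < μ.rowLen i)).card := by
    intro j
    have hlen : μ.colLen j ≤ n := by
      by_contra hc
      push_neg at hc
      have h1 : (n, j) ∈ μ := YoungDiagram.mem_iff_lt_colLen.2 hc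
      have h2 : j < μ.rowLen n := YoungDiagram.mem_iff_lt_rowLen.1 h1
      rw [rowLen_eq_zero μ (le_of_eq hn)] at h2
      omega
    have : (range n).filter (fun i => j < μ.rowLen i) = range (μ.colLen j) := by
      ext i
      simp only [mem_filter, mem_range]
      constructor
      · rintro ⟨_, h2⟩
        exact YoungDiagram.mem_iff_lt_colLen.1 (YoungDiagram.mem_iff_lt_rowLen.2 h2)
      · intro h
        refine ⟨by omega, ?_⟩
        exact YoungDiagram.mem_iff_lt_rowLen.1 (YoungDiagram.mem_iff_lt_colLen.2 h)
    rw [this, Finset.card_range]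
  rw [Pc]
  calc ∑ j ∈ range k, μ.colLen j
      = ∑ j ∈ range k, ∑ i ∈ range n, (if j < μ.rowLen i then 1 else 0) := by
        apply Finset.sum_congr rfl
        intro j _
        rw [hcol j, Finset.card_filter]
    _ = ∑ i ∈ range n, ∑ j ∈ range k, (if j < μ.rowLen i then 1 else 0) :=
        Finset.sum_comm
    _ = ∑ i ∈ range n, min (μ.rowLen i) k := by
        apply Finset.sum_congr rfl
        intro i _
        rw [← Finset.card_filter]
        have : (range k).filter (fun j => j < μ.rowLen i) = range (min (μ.rowLen i) k) := by
          ext j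
          simp only [mem_filter, mem_range, lt_min_iff]
          omega
        rw [this, Finset.card_range]

/-- conjugate partial sums reverse dominance -/
lemma Pc_dominance (n : ℕ) (lam nu : YoungDiagram) (hlam : lam.card = n) (hnu : nu.card = n)
    (hdom : ∀ k : ℕ, Pr nu k ≤ Pr lam k) : ∀ k, Pc lam k ≤ Pc nu k := by
  intro k
  rw [Pc_eq_summin lam n hlam k, Pc_eq_summin nu n hnu k]
  have hex : ∃ m, nu.rowLen m ≤ k := ⟨n, by rw [rowLen_eq_zero nu (le_of_eq hnu)]; omega⟩
  set m₀ := Nat.find hex with hm₀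
  have hm₀n : m₀ ≤ n := Nat.find_le (by rw [rowLen_eq_zero nu (le_of_eq hnu)]; omega)
  have hlt : ∀ i, i < m₀ → k < nu.rowLen i := by
    intro i hi
    have := Nat.find_min hex hi
    omega
  have hge : ∀ i, m₀ ≤ i → nu.rowLen i ≤ k :=
    fun i hi => le_trans (nu.rowLen_anti _ _ hi) (Nat.find_spec hex)
  have hsplitn : ∀ (g : ℕ → ℕ), ∑ i ∈ range n, g i = ∑ i ∈ range m₀, g i + ∑ i ∈ Ico m₀ n, g i := by
    intro g
    rw [Finset.range_eq_Ico, ← Finset.sum_Ico_consecutive _ (Nat.zero_le m₀) hm₀n]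
    rw [← Finset.range_eq_Ico]
  -- identity for nu
  have hnu_eq : ∑ i ∈ range n, min (nu.rowLen i) k + Pr nu m₀ = k * m₀ + n := by
    have e1 : ∑ i ∈ range m₀, min (nu.rowLen i) k = ∑ _i ∈ range m₀, k :=
      Finset.sum_congr rfl (fun i hi => by
        rw [mem_range] at hi
        exact min_eq_right (le_of_lt (hlt i hi)))
    have e2 : ∑ i ∈ Ico m₀ n, min (nu.rowLen i) k = ∑ i ∈ Ico m₀ n, nu.rowLen i :=
      Finset.sum_congr rfl (fun i hi => by
        rw [mem_Ico] at hi
        exact min_eq_left (hge i hi.1))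
    have e3 : Pr nu m₀ + ∑ i ∈ Ico m₀ n, nu.rowLen i = n := by
      rw [Pr, Finset.range_eq_Ico, Finset.sum_Ico_consecutive _ (Nat.zero_le m₀) hm₀n,
        ← Finset.range_eq_Ico, ← Pr]
      exact Pr_top nu n hnu n (le_refl n)
    have e4 : ∑ _i ∈ range m₀, k = m₀ * k := by
      rw [Finset.sum_const, Finset.card_range, smul_eq_mul]
    have e5 : m₀ * k = k * m₀ := Nat.mul_comm _ _
    rw [hsplitn, e1, e2]
    omega
  -- inequality for lam
  have hlam_le : ∑ i ∈ range n, min (lam.rowLen i) k + Pr lam m₀ ≤ k * m₀ + n := by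
    have e1 : ∑ i ∈ range m₀, min (lam.rowLen i) k ≤ ∑ _i ∈ range m₀, k :=
      Finset.sum_le_sum (fun i _ => min_le_right _ _)
    have e2 : ∑ i ∈ Ico m₀ n, min (lam.rowLen i) k ≤ ∑ i ∈ Ico m₀ n, lam.rowLen i :=
      Finset.sum_le_sum (fun i _ => min_le_left _ _)
    have e3 : Pr lam m₀ + ∑ i ∈ Ico m₀ n, lam.rowLen i = n := by
      rw [Pr, Finset.range_eq_Ico, Finset.sum_Ico_consecutive _ (Nat.zero_le m₀) hm₀n,
        ← Finset.range_eq_Ico, ← Pr]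
      exact Pr_top lam n hlam n (le_refl n)
    have e4 : ∑ _i ∈ range m₀, k = m₀ * k := by
      rw [Finset.sum_const, Finset.card_range, smul_eq_mul]
    have e5 : m₀ * k = k * m₀ := Nat.mul_comm _ _
    rw [hsplitn]
    omega
  have := hdom m₀
  omega


lemma S_row (μ : YoungDiagram) (n : ℕ) (hn : μ.card = n) :
    ∑ c ∈ μ.cells, (((c.2 : ℝ) - c.1 + 1) / ((Pr μ c.1 + c.2 + 1 : ℕ) : ℝ))
      = n - G n (Pr μ) := by
  rw [sum_cells_rows μ n (fun i hi => rowLen_eq_zero μ (by omega))]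
  have hH : ∀ i, H (Pr μ (i+1)) - H (Pr μ i)
      = ∑ j ∈ range (μ.rowLen i), (1:ℝ)/((Pr μ i + j + 1 : ℕ) : ℝ) := by
    intro i
    rw [H_diff_eq (Pr_mono μ i),
      show Pr μ (i+1) = Pr μ i + μ.rowLen i from by rw [Pr, Pr, Finset.sum_range_succ],
      Finset.sum_Ico_eq_sum_range]
    simp only [Nat.add_sub_cancel_left]
    apply Finset.sum_congr rfl
    intro j _
    push_cast
    ring
  have hrow : ∀ i ∈ range n,
      ∑ j ∈ range (μ.rowLen i), (((j:ℝ) - i + 1) / ((Pr μ i + j + 1 : ℕ) : ℝ))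
        = (μ.rowLen i : ℝ) - ((Pr μ i + i : ℕ):ℝ) * (H (Pr μ (i+1)) - H (Pr μ i)) := by
    intro i _
    rw [hH i, Finset.mul_sum]
    have hterm : ∀ j ∈ range (μ.rowLen i),
        (((j:ℝ) - i + 1) / ((Pr μ i + j + 1 : ℕ) : ℝ))
          = 1 - ((Pr μ i + i : ℕ):ℝ) * ((1:ℝ)/((Pr μ i + j + 1 : ℕ) : ℝ)) := by
      intro j _
      have hpos : (0:ℝ) < ((Pr μ i + j + 1 : ℕ) : ℝ) := by positivity
      field_simp
      push_cast
      ring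
    rw [Finset.sum_congr rfl hterm, Finset.sum_sub_distrib, Finset.sum_const,
      Finset.card_range, ← Finset.mul_sum]
    simp [nsmul_eq_mul]
  rw [Finset.sum_congr rfl hrow, Finset.sum_sub_distrib, ← G]
  congr 1
  rw [← Nat.cast_sum, ← card_eq_sum_rowLens μ n (fun i hi => rowLen_eq_zero μ (by omega)), hn]

lemma S_col (μ : YoungDiagram) (n : ℕ) (hn : μ.card = n) :
    ∑ c ∈ μ.cells, (((c.2 : ℝ) - c.1 + 1) / ((Pc μ c.2 + c.1 + 1 : ℕ) : ℝ))
      = G n (Pc μ) + 2 * H n - n := by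
  rw [sum_cells_cols μ n (fun j hj => colLen_eq_zero μ (by omega))]
  have hH : ∀ j, H (Pc μ (j+1)) - H (Pc μ j)
      = ∑ i ∈ range (μ.colLen j), (1:ℝ)/((Pc μ j + i + 1 : ℕ) : ℝ) := by
    intro j
    rw [H_diff_eq (Pc_mono μ j),
      show Pc μ (j+1) = Pc μ j + μ.colLen j from by rw [Pc, Pc, Finset.sum_range_succ],
      Finset.sum_Ico_eq_sum_range]
    simp only [Nat.add_sub_cancel_left]
    apply Finset.sum_congr rfl
    intro i _
    push_cast
    ring
  have hcol : ∀ j ∈ range n,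
      ∑ i ∈ range (μ.colLen j), (((j:ℝ) - i + 1) / ((Pc μ j + i + 1 : ℕ) : ℝ))
        = (((Pc μ j + j : ℕ):ℝ) + 2) * (H (Pc μ (j+1)) - H (Pc μ j)) - (μ.colLen j : ℝ) := by
    intro j _
    rw [hH j, Finset.mul_sum]
    have hterm : ∀ i ∈ range (μ.colLen j),
        (((j:ℝ) - i + 1) / ((Pc μ j + i + 1 : ℕ) : ℝ))
          = (((Pc μ j + j : ℕ):ℝ) + 2) * ((1:ℝ)/((Pc μ j + i + 1 : ℕ) : ℝ)) - 1 := by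
      intro i _
      have hpos : (0:ℝ) < ((Pc μ j + i + 1 : ℕ) : ℝ) := by positivity
      field_simp
      push_cast
      ring
    rw [Finset.sum_congr rfl hterm, Finset.sum_sub_distrib, Finset.sum_const,
      Finset.card_range, ← Finset.mul_sum]
    simp [nsmul_eq_mul]
  rw [Finset.sum_congr rfl hcol, Finset.sum_sub_distrib]
  have hsplit : ∑ j ∈ range n, (((Pc μ j + j : ℕ):ℝ) + 2) * (H (Pc μ (j+1)) - H (Pc μ j))
      = G n (Pc μ) + 2 * ∑ j ∈ range n, (H (Pc μ (j+1)) - H (Pc μ j)) := by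
    rw [G, Finset.mul_sum, ← Finset.sum_add_distrib]
    apply Finset.sum_congr rfl
    intro j _
    ring
  have htel : ∑ j ∈ range n, (H (Pc μ (j+1)) - H (Pc μ j)) = H n := by
    rw [Finset.sum_range_sub (fun j => H (Pc μ j))]
    have h0 : Pc μ 0 = 0 := by rw [Pc, Finset.sum_range_zero]
    have h1 : Pc μ n = n := Pc_top μ n hn n (le_refl n)
    rw [h0, h1]
    simp [H]
  have hsum : ∑ j ∈ range n, (μ.colLen j : ℝ) = (n:ℝ) := by
    rw [← Nat.cast_sum, ← card_eq_sum_colLens μ n (fun j hj => colLen_eq_zero μ (by omega)), hn]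
  rw [hsplit, htel, hsum]


end EigAux

/-- if `λ ⊵ ν` in the dominance order (both partitions of `n`), then
`eig(T_λ^→) ≥ eig(T_ν^→)` and `eig(T_λ^↓) ≥ eig(T_ν^↓)`. -/
theorem eig_dominance (n : ℕ) (lam nu : YoungDiagram) (hlam : lam.card = n) (hnu : nu.card = n)
    (hdom : ∀ k : ℕ, ∑ i ∈ Finset.range k, nu.rowLen i ≤ ∑ i ∈ Finset.range k, lam.rowLen i) :
    eigF nu (rowFill nu) ≤ eigF lam (rowFill lam) ∧
      eigF nu (colFill nu) ≤ eigF lam (colFill lam) := by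
  classical
  set n' := n with hn'
  have hrowdom : ∀ m, EigAux.Pr nu m ≤ EigAux.Pr lam m := hdom
  have hGrow : EigAux.G n (EigAux.Pr lam) ≤ EigAux.G n (EigAux.Pr nu) :=
    EigAux.G_dominance n (EigAux.Pr lam) (by simp [EigAux.Pr])
      (EigAux.Pr_mono lam) (EigAux.Pr_conc lam) (EigAux.Pr_top lam n hlam)
      _ (EigAux.Pr nu) (by simp [EigAux.Pr]) (EigAux.Pr_mono nu)
      (EigAux.Pr_conc nu) (EigAux.Pr_top nu n hnu) hrowdom (le_refl _)
  have hcoldom : ∀ m, EigAux.Pc lam m ≤ EigAux.Pc nu m :=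
    EigAux.Pc_dominance n lam nu hlam hnu hdom
  have hGcol : EigAux.G n (EigAux.Pc nu) ≤ EigAux.G n (EigAux.Pc lam) :=
    EigAux.G_dominance n (EigAux.Pc nu) (by simp [EigAux.Pc])
      (EigAux.Pc_mono nu) (EigAux.Pc_conc nu) (EigAux.Pc_top nu n hnu)
      _ (EigAux.Pc lam) (by simp [EigAux.Pc]) (EigAux.Pc_mono lam)
      (EigAux.Pc_conc lam) (EigAux.Pc_top lam n hlam) hcoldom (le_refl _)
  have hrfill : ∀ (μ : YoungDiagram) (c : ℕ × ℕ),
      rowFill μ c = EigAux.Pr μ c.1 + c.2 + 1 := fun _ _ => rfl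
  have hcfill : ∀ (μ : YoungDiagram) (c : ℕ × ℕ),
      colFill μ c = EigAux.Pc μ c.2 + c.1 + 1 := fun _ _ => rfl
  have hne : (0:ℝ) ≤ 1 / (n : ℝ) := by positivity
  constructor
  · simp only [eigF, hlam, hnu, hrfill]
    apply mul_le_mul_of_nonneg_left _ hne
    rw [EigAux.S_row nu n hnu, EigAux.S_row lam n hlam]
    linarith [hGrow]
  · simp only [eigF, hlam, hnu, hcfill]
    apply mul_le_mul_of_nonneg_left _ hne
    rw [EigAux.S_col nu n hnu, EigAux.S_col lam n hlam]
    linarith [hGcol]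
end

section
/- For integers n ≥ 2 and 1 ≤ k ≤ n/2, the row-filled tableau of the two-row partition (n−k, k) ⊢ n satisfies eig(T_{(n−k,k)}^→) = 1 − ((n−k+1)/n)·(H_n − H_{n−k+1}) − 1/n, where H_m = Σ_{j=1}^m 1/j. -/
/-- The harmonic number `H_m = Σ_{j=1}^m 1/j`. -/
noncomputable def harm (m : ℕ) : ℝ := ∑ j ∈ Finset.range m, 1 / ((j : ℝ) + 1)

/-- The two-row partition `(n−k, k)` of `n` (for `k ≤ n/2`). -/
def twoRow (n k : ℕ) (h : 2 * k ≤ n) : YoungDiagram :=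
  YoungDiagram.ofRowLens [n - k, k] (by
    rw [List.sortedGE_iff_pairwise]
    refine List.pairwise_cons.mpr ⟨?_, List.pairwise_singleton _ k⟩
    intro b hb
    simp only [List.mem_singleton] at hb
    subst hb
    omega)


/-- for `n ≥ 2` and `1 ≤ k ≤ n/2`,
`eig(T_{(n−k,k)}^→) = 1 − ((n−k+1)/n)·(H_n − H_{n−k+1}) − 1/n`. -/
theorem eig_two_row (n k : ℕ) (hn : 2 ≤ n) (hk1 : 1 ≤ k) (hk2 : 2 * k ≤ n) :
    eigF (twoRow n k hk2) (rowFill (twoRow n k hk2)) =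
      1 - (((n : ℝ) - k + 1) / n) * (harm n - harm (n - k + 1)) - 1 / n := by
  set μ := twoRow n k hk2 with hμ
  set m := n - k with hmdef
  have hmk : m + k = n := by omega
  have hcells : μ.cells =
      (Finset.range m).image (fun j => ((0:ℕ),j)) ∪ (Finset.range k).image (fun j => (1,j)) := by
    ext ⟨i,j⟩
    simp only [hμ, YoungDiagram.mem_cells, twoRow, YoungDiagram.mem_ofRowLens, Finset.mem_union,
      Finset.mem_image, Finset.mem_range, List.length_cons, List.length_singleton, Prod.mk.injEq]
    constructor
    · rintro ⟨h1, h2⟩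
      match i, h1 with
      | 0, _ => exact Or.inl ⟨j, by simpa using h2, rfl, rfl⟩
      | 1, _ => exact Or.inr ⟨j, by simpa using h2, rfl, rfl⟩
    · rintro (⟨a, ha, rfl, rfl⟩ | ⟨a, ha, rfl, rfl⟩) <;> exact ⟨by omega, by simpa⟩
  have hrow0 : μ.rowLen 0 = m :=
    YoungDiagram.rowLen_ofRowLens (w := [n-k,k]) ⟨0, by simp⟩
  have hdisj : Disjoint ((Finset.range m).image (fun j => ((0:ℕ),j)))
      ((Finset.range k).image (fun j => ((1:ℕ),j))) := by
    simp [Finset.disjoint_left]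
  have hcard : μ.card = n := by
    rw [show μ.card = μ.cells.card from rfl, hcells, Finset.card_union_of_disjoint hdisj,
      Finset.card_image_of_injective _ (fun a b h => by simpa using h),
      Finset.card_image_of_injective _ (fun a b h => by simpa using h),
      Finset.card_range, Finset.card_range, hmk]
  have hn0 : (n:ℝ) ≠ 0 := Nat.cast_ne_zero.mpr (by omega)
  have hm1 : ((m:ℝ) + 1) ≠ 0 := by positivity
  -- the sum over cells
  rw [eigF, hcard, hcells, Finset.sum_union hdisj,
    Finset.sum_image (by simp), Finset.sum_image (by simp)]
  have hfill0 : ∀ j, (rowFill μ (0, j) : ℝ) = (j:ℝ) + 1 := by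
    intro j; simp [rowFill]
  have hfill1 : ∀ j, (rowFill μ (1, j) : ℝ) = (m:ℝ) + (j:ℝ) + 1 := by
    intro j; simp [rowFill, hrow0]
  have hsum0 : ∑ j ∈ Finset.range m,
      (((j:ℝ) - ((0:ℕ):ℝ) + 1) / (rowFill μ (0, j) : ℝ)) = m := by
    have hterm : ∀ j ∈ Finset.range m,
        (((j:ℝ) - ((0:ℕ):ℝ) + 1) / (rowFill μ (0, j) : ℝ)) = 1 := by
      intro j _
      rw [hfill0]
      have : (j:ℝ) + 1 ≠ 0 := by positivity
      push_cast
      field_simp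
      ring
    rw [Finset.sum_congr rfl hterm, Finset.sum_const, Finset.card_range, nsmul_eq_mul, mul_one]
  set S : ℝ := ∑ j ∈ Finset.range k, 1/((m:ℝ)+j+1) with hS
  have hsum1 : ∑ j ∈ Finset.range k,
      (((j:ℝ) - ((1:ℕ):ℝ) + 1) / (rowFill μ (1, j) : ℝ)) = k - ((m:ℝ)+1) * S := by
    have hterm : ∀ j ∈ Finset.range k,
        (((j:ℝ) - ((1:ℕ):ℝ) + 1) / (rowFill μ (1, j) : ℝ))
          = 1 - ((m:ℝ)+1) * (1/((m:ℝ)+j+1)) := by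
      intro j _
      rw [hfill1]
      have : (m:ℝ) + j + 1 ≠ 0 := by positivity
      push_cast
      field_simp
      ring
    rw [Finset.sum_congr rfl hterm, Finset.sum_sub_distrib, Finset.sum_const, Finset.card_range,
      nsmul_eq_mul, mul_one, ← Finset.mul_sum, hS]
  have hharm : harm n = harm m + S := by
    rw [harm, ← hmk, Finset.sum_range_add, hS, harm]
    congr 1
    refine Finset.sum_congr rfl (fun j _ => ?_)
    push_cast; ring_nf
  have hharm2 : harm (n - k + 1) = harm m + 1/((m:ℝ)+1) := by
    rw [← hmdef, harm, Finset.sum_range_succ, harm]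
  have hmcast : (m:ℝ) = (n:ℝ) - k := by
    have : (m:ℝ) + k = n := by exact_mod_cast congrArg (Nat.cast : ℕ → ℝ) hmk
    linarith
  rw [hsum0, hsum1, hharm, hharm2, ← hmcast]
  have hnm : (n:ℝ) = (m:ℝ) + k := by
    rw [hmcast]; ring
  rw [hnm]
  have hnk0 : (m:ℝ) + k ≠ 0 := by rw [← hnm]; exact hn0
  field_simp
  ring
end

section
/- Let n ≥ 15 and let λ ⊢ n be a partition with first row λ_1 = n−k, where n/4 < k ≤ n−2. Then eig(T_λ^→) ≤ 1 − (4k−2n+3)/(3n) − ((n−k+1)/n)·(H_{2(n−k)} − H_{n−k+1}), where H_m = Σ_{j=1}^m 1/j. -/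
set_option maxHeartbeats 1000000

open Finset

lemma harm_diff {a b : ℕ} (h : a ≤ b) :
    harm b - harm a = ∑ t ∈ Finset.Ioc a b, (1 : ℝ) / t := by
  induction b, h using Nat.le_induction with
  | base => simp
  | succ b hab ih =>
      rw [Finset.sum_Ioc_succ_top hab, harm, Finset.sum_range_succ, ← harm, ← ih]
      push_cast
      ring

lemma sum_reflect (a b : ℕ) :
    ∑ t ∈ Finset.Icc a b, (1:ℝ)/((a + b - t : ℕ) : ℝ) = ∑ t ∈ Finset.Icc a b, (1:ℝ)/t := by
  refine Finset.sum_nbij' (fun t => a + b - t) (fun t => a + b - t)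
    (fun t ht => ?_) (fun t ht => ?_) (fun t ht => ?_) (fun t ht => ?_) (fun t ht => ?_) <;>
    simp only [Finset.mem_Icc] at * <;>
    first
      | omega
      | (congr 1; omega)

lemma sum_inv_le {a b : ℕ} (ha : 1 ≤ a) (hab : a ≤ b) :
    ∑ t ∈ Finset.Icc a b, (1:ℝ)/t ≤ ((b:ℝ) - a + 1) * (1/a + 1/b) / 2 := by
  have key : (2:ℝ) * ∑ t ∈ Finset.Icc a b, (1:ℝ)/t
      = ∑ t ∈ Finset.Icc a b, ((1:ℝ)/t + 1/((a + b - t : ℕ) : ℝ)) := by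
    rw [Finset.sum_add_distrib, sum_reflect]; ring
  have hbd : ∑ t ∈ Finset.Icc a b, ((1:ℝ)/t + 1/((a + b - t : ℕ) : ℝ))
      ≤ ∑ _t ∈ Finset.Icc a b, ((1:ℝ)/a + 1/b) := by
    apply Finset.sum_le_sum
    intro t ht
    simp only [Finset.mem_Icc] at ht
    have h1 : ((a + b - t : ℕ) : ℝ) = (a:ℝ) + b - t := by
      have : t ≤ a + b := by omega
      push_cast [Nat.cast_sub this]
      ring
    rw [h1]
    have hA : (0:ℝ) < a := by exact_mod_cast ha
    have hB : (0:ℝ) < b := by exact_mod_cast lt_of_lt_of_le (by exact_mod_cast ha) hab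
    have htl : (a:ℝ) ≤ t := by exact_mod_cast ht.1
    have htu : (t:ℝ) ≤ b := by exact_mod_cast ht.2
    have ht0 : (0:ℝ) < t := lt_of_lt_of_le hA htl
    have hs0 : (0:ℝ) < (a:ℝ) + b - t := by linarith
    rw [div_add_div _ _ (ne_of_gt ht0) (ne_of_gt hs0), div_add_div _ _ (ne_of_gt hA) (ne_of_gt hB)]
    rw [div_le_div_iff₀ (by positivity) (by positivity)]
    nlinarith [mul_nonneg (sub_nonneg.2 htl) (sub_nonneg.2 htu)]
  rw [Finset.sum_const, Nat.card_Icc] at hbd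
  have hcard : ((b + 1 - a : ℕ) : ℝ) = (b:ℝ) - a + 1 := by
    push_cast [Nat.cast_sub (by omega : a ≤ b + 1)]; ring
  rw [nsmul_eq_mul, hcard] at hbd
  linarith

lemma sum_range_shift (h : ℕ → ℝ) (c L : ℕ) :
    ∑ j ∈ Finset.range L, h (c + j + 1) = ∑ t ∈ Finset.Ioc c (c + L), h t := by
  induction L with
  | zero => simp
  | succ L ih =>
      rw [Finset.sum_range_succ, ih, ← add_assoc,
        Finset.sum_Ioc_succ_top (by omega : c ≤ c + L)]

lemma sum_tele (S : ℕ → ℕ) (hS : ∀ i, S i ≤ S (i + 1)) (b : ℕ → ℝ) (R : ℕ) (hR : 1 ≤ R) :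
    ∑ i ∈ Finset.Ico 1 R, ∑ t ∈ Finset.Ioc (S i) (S (i + 1)), b t
      = ∑ t ∈ Finset.Ioc (S 1) (S R), b t := by
  have hmono : Monotone S := monotone_nat_of_le_succ hS
  induction R, hR using Nat.le_induction with
  | base => simp
  | succ R hR ih =>
      rw [Finset.sum_Ico_succ_top hR, ih,
        Finset.sum_Ioc_consecutive _ (hmono hR) (hS R)]

lemma cells_decomp {M : Type*} [AddCommMonoid M] (μ : YoungDiagram) (f : ℕ × ℕ → M) :
    ∑ c ∈ μ.cells, f c
      = ∑ i ∈ Finset.range (μ.colLen 0), ∑ j ∈ Finset.range (μ.rowLen i), f (i, j) := by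
  have hcells : μ.cells = (Finset.range (μ.colLen 0)).biUnion (fun i => μ.row i) := by
    ext c
    simp only [Finset.mem_biUnion, Finset.mem_range, YoungDiagram.mem_row_iff,
      YoungDiagram.mem_cells]
    constructor
    · intro hc
      refine ⟨c.1, ?_, hc, rfl⟩
      rw [← YoungDiagram.mem_iff_lt_colLen]
      exact μ.up_left_mem le_rfl (Nat.zero_le _) (by simpa using hc)
    · rintro ⟨i, _, hc, _⟩; exact hc
  rw [hcells, Finset.sum_biUnion]
  · refine Finset.sum_congr rfl fun i _ => ?_
    rw [YoungDiagram.row_eq_prod, Finset.sum_product, Finset.sum_singleton]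
  · intro x _ y _ hxy
    simp only [Finset.disjoint_left, YoungDiagram.mem_row_iff]
    rintro c ⟨_, rfl⟩ ⟨_, h⟩
    exact hxy h

lemma sum_rowLen (μ : YoungDiagram) :
    ∑ i ∈ Finset.range (μ.colLen 0), μ.rowLen i = μ.card := by
  have h := cells_decomp μ (fun _ => (1 : ℕ))
  rw [YoungDiagram.card, Finset.card_eq_sum_ones, h]
  exact Finset.sum_congr rfl fun i _ => by simp

/-- for `n ≥ 15` and `λ ⊢ n` with first row `λ₁ = n−k`, `n/4 < k ≤ n−2`,
`eig(T_λ^→) ≤ 1 − (4k−2n+3)/(3n) − ((n−k+1)/n)·(H_{2(n−k)} − H_{n−k+1})`. -/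
theorem eig_small_partition (n k : ℕ) (μ : YoungDiagram) (hn : 15 ≤ n) (hcard : μ.card = n)
    (hrow : μ.rowLen 0 = n - k) (hk1 : (n : ℝ) / 4 < (k : ℝ)) (hk2 : k ≤ n - 2) :
    eigF μ (rowFill μ) ≤
      1 - (4 * (k : ℝ) - 2 * (n : ℝ) + 3) / (3 * (n : ℝ)) -
        (((n : ℝ) - (k : ℝ) + 1) / (n : ℝ)) * (harm (2 * (n - k)) - harm (n - k + 1)) := by
  have hkn : k ≤ n := by omega
  set m := n - k with hmdef
  have hm2 : 2 ≤ m := by omega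
  have hmk : m + k = n := by omega
  have hn4k : n + 1 ≤ 4 * k := by
    have h : (n : ℝ) < 4 * k := by linarith
    have : n < 4 * k := by exact_mod_cast h
    omega
  have hkcast : (m : ℝ) = (n : ℝ) - k := by
    rw [hmdef]; push_cast [Nat.cast_sub hkn]; ring
  set R := μ.colLen 0 with hRdef
  set S : ℕ → ℕ := fun i => ∑ i' ∈ Finset.range i, μ.rowLen i' with hSdef
  have hSsucc : ∀ i, S (i + 1) = S i + μ.rowLen i := fun i => Finset.sum_range_succ _ i
  have hSmonostep : ∀ i, S i ≤ S (i + 1) := fun i => by rw [hSsucc]; omega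
  have hSmono : Monotone S := monotone_nat_of_le_succ hSmonostep
  have hS1 : S 1 = m := by simp [hSdef, hrow]
  have hSR : S R = n := by rw [hSdef]; simpa [hRdef] using (sum_rowLen μ).trans hcard
  have hR1 : 1 ≤ R := by
    have hne : μ.cells.Nonempty := by
      rw [← Finset.card_pos]
      have hcc : μ.cells.card = n := hcard
      omega
    obtain ⟨c, hc⟩ := hne
    rw [YoungDiagram.mem_cells] at hc
    have h00 : (0, 0) ∈ μ := μ.up_left_mem (Nat.zero_le _) (Nat.zero_le _) hc
    rw [YoungDiagram.mem_iff_lt_colLen] at h00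
    omega
  have hLanti : ∀ i, μ.rowLen i ≤ m := fun i => hrow ▸ μ.rowLen_anti 0 i (Nat.zero_le i)
  set b : ℕ → ℝ := fun t => if t ≤ 2 * m then 1 - ((m : ℝ) + 1) / t else 1 / 3 with hbdef
  -- Step 1: the cell sum is bounded by m + ∑_{t ∈ (m, n]} b t
  have hsplit : ∑ c ∈ μ.cells, (((c.2 : ℝ) - (c.1 : ℝ) + 1) / (rowFill μ c : ℝ))
      ≤ (m : ℝ) + ∑ t ∈ Finset.Ioc m n, b t := by
    rw [cells_decomp μ (fun c => (((c.2 : ℝ) - (c.1 : ℝ) + 1) / (rowFill μ c : ℝ)))]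
    nth_rewrite 1 [Finset.range_eq_Ico]
    rw [← Finset.sum_Ico_consecutive _ (Nat.zero_le 1) hR1]
    have hrow0 : ∑ i ∈ Finset.Ico 0 1, ∑ j ∈ Finset.range (μ.rowLen i),
        ((((i, j).2 : ℝ) - ((i, j).1 : ℝ) + 1) / (rowFill μ (i, j) : ℝ)) = (m : ℝ) := by
      rw [show Finset.Ico 0 1 = {0} from rfl, Finset.sum_singleton]
      have hterm : ∀ j ∈ Finset.range (μ.rowLen 0),
          ((((0:ℕ), j).2 : ℝ) - (((0:ℕ), j).1 : ℝ) + 1) / (rowFill μ (0, j) : ℝ) = 1 := by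
        intro j _
        have hrf : rowFill μ (0, j) = j + 1 := by simp [rowFill]
        rw [hrf]
        push_cast
        rw [show (j : ℝ) - 0 + 1 = (j : ℝ) + 1 by ring, div_self (by positivity)]
      rw [Finset.sum_congr rfl hterm, Finset.sum_const, Finset.card_range, hrow]
      simp
    rw [hrow0]
    have hrows : ∑ i ∈ Finset.Ico 1 R, ∑ j ∈ Finset.range (μ.rowLen i),
        ((((i, j).2 : ℝ) - ((i, j).1 : ℝ) + 1) / (rowFill μ (i, j) : ℝ))
        ≤ ∑ t ∈ Finset.Ioc m n, b t := by
      rw [← hS1, ← hSR, ← sum_tele S hSmonostep b R hR1]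
      apply Finset.sum_le_sum
      intro i hi
      rw [Finset.mem_Ico] at hi
      have hSi_ge_m : m ≤ S i := hS1 ▸ hSmono hi.1
      have hcell : ∀ j ∈ Finset.range (μ.rowLen i),
          ((((i, j).2 : ℝ) - ((i, j).1 : ℝ) + 1) / (rowFill μ (i, j) : ℝ))
            ≤ b (S i + j + 1) := by
        intro j hj
        rw [Finset.mem_range] at hj
        have hrf : rowFill μ (i, j) = S i + j + 1 := rfl
        rw [hrf]
        have ht0 : (0 : ℝ) < ((S i + j + 1 : ℕ) : ℝ) := by positivity
        have hnum : (((i, j).2 : ℝ) - ((i, j).1 : ℝ) + 1)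
            = ((S i + j + 1 : ℕ) : ℝ) - ((S i : ℝ) + i) := by push_cast; ring
        rw [hnum]
        by_cases hcmp : S i + j + 1 ≤ 2 * m
        · rw [hbdef]
          simp only [if_pos hcmp]
          have hw : (m : ℝ) + 1 ≤ (S i : ℝ) + i := by
            have : m + 1 ≤ S i + i := by omega
            exact_mod_cast this
          rw [div_le_iff₀ ht0]
          have : (1 - ((m : ℝ) + 1) / ((S i + j + 1 : ℕ) : ℝ)) * ((S i + j + 1 : ℕ) : ℝ)
              = ((S i + j + 1 : ℕ) : ℝ) - ((m : ℝ) + 1) := by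
            field_simp
          rw [this]
          linarith
        · rw [hbdef]
          simp only [if_neg hcmp]
          push_neg at hcmp
          have hi2 : 2 ≤ i := by
            rcases Nat.lt_or_ge i 2 with h | h
            · exfalso
              have hi1 : i = 1 := by omega
              have hL1 : μ.rowLen 1 ≤ m := hLanti 1
              subst hi1
              omega
            · exact h
          have hiL : i * μ.rowLen i ≤ S i := by
            calc i * μ.rowLen i = ∑ _x ∈ Finset.range i, μ.rowLen i := by
                  rw [Finset.sum_const, Finset.card_range, smul_eq_mul]
              _ ≤ ∑ x ∈ Finset.range i, μ.rowLen x :=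
                  Finset.sum_le_sum fun x hx =>
                    μ.rowLen_anti x i (le_of_lt (Finset.mem_range.1 hx))
              _ = S i := rfl
          have h2t : 2 * (S i + j + 1) ≤ 3 * (S i + i) := by nlinarith [hj, hiL, hi2]
          have h2tR : 2 * ((S i + j + 1 : ℕ) : ℝ) ≤ 3 * ((S i : ℝ) + i) := by
            exact_mod_cast h2t
          rw [div_le_iff₀ ht0]
          linarith
      calc ∑ j ∈ Finset.range (μ.rowLen i),
            ((((i, j).2 : ℝ) - ((i, j).1 : ℝ) + 1) / (rowFill μ (i, j) : ℝ))
          ≤ ∑ j ∈ Finset.range (μ.rowLen i), b (S i + j + 1) := Finset.sum_le_sum hcell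
        _ = ∑ t ∈ Finset.Ioc (S i) (S (i + 1)), b t := by
            rw [hSsucc i]; exact sum_range_shift b (S i) (μ.rowLen i)
    linarith
  -- Step 2: harmonic facts
  have hH1 : ((m : ℝ) + 1) * harm (m + 1) = ((m : ℝ) + 1) * harm m + 1 := by
    rw [harm, Finset.sum_range_succ, ← harm]
    push_cast
    field_simp
  have hn0 : (0 : ℝ) < n := by positivity
  -- Step 3: bound the b-sum and conclude
  have hmain : (m : ℝ) + ∑ t ∈ Finset.Ioc m n, b t
      ≤ (n : ℝ) * (1 - (4 * (k : ℝ) - 2 * (n : ℝ) + 3) / (3 * (n : ℝ)) -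
        (((n : ℝ) - (k : ℝ) + 1) / (n : ℝ)) * (harm (2 * m) - harm (m + 1))) := by
    have hRHS : (n : ℝ) * (1 - (4 * (k : ℝ) - 2 * (n : ℝ) + 3) / (3 * (n : ℝ)) -
        (((n : ℝ) - (k : ℝ) + 1) / (n : ℝ)) * (harm (2 * m) - harm (m + 1)))
        = (n : ℝ) - (4 * (k : ℝ) - 2 * (n : ℝ) + 3) / 3 -
          ((m : ℝ) + 1) * (harm (2 * m) - harm (m + 1)) := by
      have hne : (n : ℝ) ≠ 0 := ne_of_gt hn0
      rw [← hkcast]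
      field_simp
    rw [hRHS]
    rcases le_or_gt n (2 * m) with hc | hc
    · -- n ≤ 2m
      have hval : ∀ t ∈ Finset.Ioc m n, b t = 1 - ((m : ℝ) + 1) / t := by
        intro t ht
        rw [Finset.mem_Ioc] at ht
        rw [hbdef]
        exact if_pos (by omega)
      have hsum : ∑ t ∈ Finset.Ioc m n, b t
          = ((n : ℝ) - m) - ((m : ℝ) + 1) * (harm n - harm m) := by
        have hval' : ∀ t ∈ Finset.Ioc m n, b t = 1 - ((m : ℝ) + 1) * (1 / t) :=
          fun t ht => by rw [hval t ht, mul_one_div]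
        rw [Finset.sum_congr rfl hval', Finset.sum_sub_distrib, Finset.sum_const, Nat.card_Ioc,
          ← Finset.mul_sum, ← harm_diff (by omega : m ≤ n)]
        simp only [nsmul_eq_mul, mul_one]
        push_cast [Nat.cast_sub (by omega : m ≤ n)]
        ring
      rw [hsum]
      -- key: (m+1)(harm 2m - harm n) ≤ (2/3)(2m - n)
      have hΔ : ((m : ℝ) + 1) * (harm (2 * m) - harm n) ≤ (2 / 3) * (2 * (m : ℝ) - n) := by
        rcases eq_or_lt_of_le hc with heq | hlt
        · have h1 : harm (2 * m) - harm n = 0 := by rw [heq]; ring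
          have h2 : 2 * (m : ℝ) - n = 0 := by rw [heq]; push_cast; ring
          rw [h1, h2]
          simp
        · have hm8 : 8 ≤ m := by omega
          rw [harm_diff (by omega : n ≤ 2 * m), ← Finset.Icc_add_one_left_eq_Ioc]
          have hle := sum_inv_le (by omega : 1 ≤ n + 1) (by omega : n + 1 ≤ 2 * m)
          have hn1 : (0 : ℝ) < (n : ℝ) + 1 := by positivity
          have h2m' : (0 : ℝ) < 2 * (m : ℝ) := by
            have : (0 : ℝ) < (m : ℝ) := by exact_mod_cast (by omega : 0 < m)
            linarith
          have h2mc : ((2 * m : ℕ) : ℝ) = 2 * (m : ℝ) := by push_cast; ring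
          have hn1c : ((n + 1 : ℕ) : ℝ) = (n : ℝ) + 1 := by push_cast; ring
          rw [h2mc, hn1c] at hle
          have hkey : ((m : ℝ) + 1) * (1 / ((n : ℝ) + 1) + 1 / (2 * (m : ℝ))) ≤ 4 / 3 := by
            rw [div_add_div _ _ (ne_of_gt hn1) (ne_of_gt h2m'), ← mul_div_assoc,
              div_le_div_iff₀ (mul_pos hn1 h2m') (by norm_num : (0:ℝ) < 3)]
            have hm8R : (8 : ℝ) ≤ m := by exact_mod_cast hm8
            have hn15R : (15 : ℝ) ≤ n := by exact_mod_cast hn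
            have h3n : 4 * (m : ℝ) + 1 ≤ 3 * n := by
              have h' : 4 * m + 1 ≤ 3 * n := by omega
              exact_mod_cast h'
            nlinarith [hm8R, hn15R, h3n]
          have hD : (0 : ℝ) ≤ 2 * (m : ℝ) - n := by
            have : (n : ℝ) ≤ 2 * (m : ℝ) := by exact_mod_cast hc
            linarith
          calc ((m : ℝ) + 1) * ∑ t ∈ Finset.Icc (n + 1) (2 * m), (1 : ℝ) / t
              ≤ ((m : ℝ) + 1) * ((2 * (m : ℝ) - ((n : ℝ) + 1) + 1)
                  * (1 / ((n : ℝ) + 1) + 1 / (2 * (m : ℝ))) / 2) :=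
                mul_le_mul_of_nonneg_left hle (by positivity)
            _ = ((2 * (m : ℝ) - n) / 2)
                  * (((m : ℝ) + 1) * (1 / ((n : ℝ) + 1) + 1 / (2 * (m : ℝ)))) := by ring
            _ ≤ ((2 * (m : ℝ) - n) / 2) * (4 / 3) :=
                mul_le_mul_of_nonneg_left hkey (by linarith)
            _ = (2 / 3) * (2 * (m : ℝ) - n) := by ring
      -- finish case 1 by linear arithmetic on harmonic atoms
      have hsplit2 : ((m : ℝ) + 1) * (harm (2 * m) - harm (m + 1))
          = ((m : ℝ) + 1) * (harm (2 * m) - harm n) + ((m : ℝ) + 1) * (harm n - harm m) - 1 := by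
        nlinarith [hH1]
      rw [hsplit2]
      have hkR : (k : ℝ) = (n : ℝ) - m := by linarith [hkcast]
      nlinarith [hΔ]
    · -- 2m < n
      have hsum : ∑ t ∈ Finset.Ioc m n, b t
          = ((m : ℝ) - ((m : ℝ) + 1) * (harm (2 * m) - harm m)) + ((n : ℝ) - 2 * m) / 3 := by
        rw [← Finset.sum_Ioc_consecutive b (by omega : m ≤ 2 * m) (le_of_lt hc)]
        have hval1 : ∀ t ∈ Finset.Ioc m (2 * m), b t = 1 - ((m : ℝ) + 1) / t := by
          intro t ht
          rw [Finset.mem_Ioc] at ht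
          rw [hbdef]
          exact if_pos ht.2
        have hval2 : ∀ t ∈ Finset.Ioc (2 * m) n, b t = 1 / 3 := by
          intro t ht
          rw [Finset.mem_Ioc] at ht
          rw [hbdef]
          exact if_neg (by omega)
        have hval1' : ∀ t ∈ Finset.Ioc m (2 * m), b t = 1 - ((m : ℝ) + 1) * (1 / t) :=
          fun t ht => by rw [hval1 t ht, mul_one_div]
        rw [Finset.sum_congr rfl hval1', Finset.sum_congr rfl hval2,
          Finset.sum_sub_distrib, Finset.sum_const, Finset.sum_const, Nat.card_Ioc, Nat.card_Ioc,
          ← Finset.mul_sum, ← harm_diff (by omega : m ≤ 2 * m)]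
        simp only [nsmul_eq_mul, mul_one]
        push_cast [Nat.cast_sub (by omega : m ≤ 2 * m), Nat.cast_sub (by omega : 2 * m ≤ n)]
        ring
      rw [hsum]
      have hkR : (k : ℝ) = (n : ℝ) - m := by linarith [hkcast]
      nlinarith [hH1]
  -- Conclusion
  rw [eigF, hcard]
  calc (1 / (n : ℝ)) * ∑ c ∈ μ.cells, (((c.2 : ℝ) - (c.1 : ℝ) + 1) / (rowFill μ c : ℝ))
      ≤ (1 / (n : ℝ)) * ((n : ℝ) * (1 - (4 * (k : ℝ) - 2 * (n : ℝ) + 3) / (3 * (n : ℝ)) -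
        (((n : ℝ) - (k : ℝ) + 1) / (n : ℝ)) * (harm (2 * m) - harm (m + 1)))) := by
        apply mul_le_mul_of_nonneg_left _ (by positivity)
        linarith [hsplit, hmain]
    _ = 1 - (4 * (k : ℝ) - 2 * (n : ℝ) + 3) / (3 * (n : ℝ)) -
        (((n : ℝ) - (k : ℝ) + 1) / (n : ℝ)) * (harm (2 * m) - harm (m + 1)) := by
        field_simp
end

section
/- Let α ≤ 1 and let λ ⊢ n be a partition with first row λ_1 = n−k (1 ≤ k ≤ n−1). Then the eigenvalue eig_α(T_λ^→) of the biased one-sided transposition shuffle satisfies: eig_α(T_λ^→) ≤ 1 − (n−k+1)·k·n^α/(n·N_α(n)) if k ≤ n/4, and eig_α(T_λ^→) ≤ 1 − k·n^α/(2·N_α(n)) if k > n/4. -/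
/-- `N_α(n) = Σ_{i=1}^n i^α`. -/
noncomputable def NA (α : ℝ) (n : ℕ) : ℝ := ∑ i ∈ Finset.range n, ((i : ℝ) + 1) ^ α

/-- The biased eigenvalue of a filling `T` of the diagram `μ` (with `n = μ.card`):
`eig_α(T) = (1/N_α(n))·Σ_{(i,j)∈λ} (j−i+1)·T(i,j)^{α−1}`.  Cells are `0`-indexed,
which leaves `j−i+1` unchanged. -/
noncomputable def eigA (α : ℝ) (μ : YoungDiagram) (T : ℕ × ℕ → ℕ) : ℝ :=
  (1 / NA α μ.card) *
    ∑ c ∈ μ.cells, (((c.2 : ℝ) - (c.1 : ℝ) + 1) * ((T c : ℝ) ^ (α - 1)))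

lemma sum_mul_sum_range_lt (f : ℕ → ℝ) (m : ℕ) :
    ∑ i ∈ Finset.range m, f i * (∑ j ∈ Finset.range i, f j)
      = ((∑ i ∈ Finset.range m, f i) ^ 2 - ∑ i ∈ Finset.range m, (f i) ^ 2) / 2 := by
  induction m with
  | zero => simp
  | succ m ih =>
      rw [Finset.sum_range_succ (fun i => f i * _), Finset.sum_range_succ f,
        Finset.sum_range_succ (fun i => f i ^ 2), ih]
      ring

set_option maxHeartbeats 1000000 in
/-- for `α ≤ 1` and `λ ⊢ n` with first row `λ₁ = n−k` (`1 ≤ k ≤ n−1`):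
if `k ≤ n/4` then `eig_α(T_λ^→) ≤ 1 − (n−k+1)·k·n^α/(n·N_α(n))`, and if `k > n/4` then
`eig_α(T_λ^→) ≤ 1 − k·n^α/(2·N_α(n))`. -/
theorem eigA_rowFill_bound (α : ℝ) (hα : α ≤ 1) (n k : ℕ) (μ : YoungDiagram)
    (hcard : μ.card = n) (hrow : μ.rowLen 0 = n - k) (hk1 : 1 ≤ k) (hk2 : k ≤ n - 1) :
    (4 * k ≤ n →
      eigA α μ (rowFill μ) ≤
        1 - ((n : ℝ) - (k : ℝ) + 1) * (k : ℝ) * ((n : ℝ) ^ α) / ((n : ℝ) * NA α n)) ∧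
    (n < 4 * k →
      eigA α μ (rowFill μ) ≤ 1 - (k : ℝ) * ((n : ℝ) ^ α) / (2 * NA α n)) := by
  have hn2 : 2 ≤ n := by omega
  have hkn : k ≤ n := by omega
  have hn0 : 0 < n := by omega
  -- every cell has row index < n
  have hlt : ∀ c ∈ μ.cells, c.1 < n := by
    intro c hc
    have h1 : (c.1, 0) ∈ μ := μ.up_left_mem le_rfl (Nat.zero_le _) ((YoungDiagram.mem_cells _).mp hc)
    have h2 : c.1 < μ.colLen 0 := YoungDiagram.mem_iff_lt_colLen.mp h1
    have h3 : μ.colLen 0 ≤ n := by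
      rw [YoungDiagram.colLen_eq_card, ← hcard]
      exact Finset.card_le_card (Finset.filter_subset _ _)
    omega
  have hdisj : ∀ x ∈ Finset.range n, ∀ y ∈ Finset.range n, x ≠ y →
      Disjoint (μ.row x) (μ.row y) := by
    intro x _ y _ hxy
    rw [Finset.disjoint_left]
    intro c hcx hcy
    rw [YoungDiagram.mem_row_iff] at hcx hcy
    exact hxy (hcx.2 ▸ hcy.2 ▸ rfl)
  have hdecomp : μ.cells = (Finset.range n).biUnion μ.row := by
    ext c
    simp only [Finset.mem_biUnion, Finset.mem_range, YoungDiagram.mem_row_iff,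
      YoungDiagram.mem_cells]
    constructor
    · intro hc; exact ⟨c.1, hlt c ((YoungDiagram.mem_cells _).mpr hc), hc, rfl⟩
    · rintro ⟨i, -, hc, rfl⟩; exact hc
  have hrowsum : ∀ (f : ℕ × ℕ → ℝ), ∑ c ∈ μ.cells, f c
      = ∑ i ∈ Finset.range n, ∑ j ∈ Finset.range (μ.rowLen i), f (i, j) := by
    intro f
    rw [hdecomp, Finset.sum_biUnion (fun x hx y hy hxy => hdisj x hx y hy hxy)]
    refine Finset.sum_congr rfl fun i _ => ?_
    rw [YoungDiagram.row_eq_prod, Finset.sum_product]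
    simp
  have hNnat : ∑ i ∈ Finset.range n, μ.rowLen i = n := by
    calc ∑ i ∈ Finset.range n, μ.rowLen i
        = ∑ i ∈ Finset.range n, (μ.row i).card :=
          Finset.sum_congr rfl fun i _ => μ.rowLen_eq_card
      _ = ((Finset.range n).biUnion μ.row).card := (Finset.card_biUnion hdisj).symm
      _ = n := by rw [← hdecomp]; exact hcard
  set L : ℕ → ℝ := fun i => (μ.rowLen i : ℝ) with hL
  set Sr : ℕ → ℝ := fun i => ∑ i' ∈ Finset.range i, L i' with hSr
  have hLnn : ∀ i, 0 ≤ L i := fun i => Nat.cast_nonneg _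
  have hSnn : ∀ i, 0 ≤ Sr i := fun i => Finset.sum_nonneg fun j _ => hLnn j
  have hLsum : ∑ i ∈ Finset.range n, L i = (n : ℝ) := by
    rw [hL, ← Nat.cast_sum, hNnat]
  have hL0 : L 0 = (n : ℝ) - (k : ℝ) := by
    rw [hL]; simp only [hrow]; rw [Nat.cast_sub hkn]
  -- rowFill basic facts
  have hTval : ∀ c : ℕ × ℕ, (rowFill μ c : ℝ) = Sr c.1 + (c.2 : ℝ) + 1 := by
    intro c
    simp only [rowFill, hSr, hL]
    push_cast
    ring
  have hT1 : ∀ c, 1 ≤ rowFill μ c := fun c => by simp [rowFill]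
  have hSn_mono : ∀ a b : ℕ, a ≤ b →
      (∑ i ∈ Finset.range a, μ.rowLen i) ≤ ∑ i ∈ Finset.range b, μ.rowLen i :=
    fun a b h => Finset.sum_le_sum_of_subset (Finset.range_subset_range.mpr h)
  have hrowlt : ∀ c ∈ μ.cells, rowFill μ c ≤ ∑ i ∈ Finset.range (c.1 + 1), μ.rowLen i := by
    intro c hc
    have hj : c.2 < μ.rowLen c.1 := YoungDiagram.mem_iff_lt_rowLen.mp ((YoungDiagram.mem_cells _).mp hc)
    rw [Finset.sum_range_succ]
    simp only [rowFill]
    omega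
  have hTn : ∀ c ∈ μ.cells, rowFill μ c ≤ n := by
    intro c hc
    have h2 := hSn_mono (c.1 + 1) n (hlt c hc)
    have := hrowlt c hc
    omega
  have hkey : ∀ c ∈ μ.cells, ∀ d ∈ μ.cells, c.1 < d.1 → rowFill μ c < rowFill μ d := by
    intro c hc d hd h
    have h1 := hrowlt c hc
    have h2 := hSn_mono (c.1 + 1) d.1 h
    have : (∑ i ∈ Finset.range d.1, μ.rowLen i) < rowFill μ d := by
      simp only [rowFill]; omega
    omega
  have hinj : ∀ c ∈ μ.cells, ∀ d ∈ μ.cells, rowFill μ c = rowFill μ d → c = d := by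
    intro c hc d hd he
    rcases lt_trichotomy c.1 d.1 with h | h | h
    · exact absurd he (Nat.ne_of_lt (hkey c hc d hd h))
    · have h2 : c.2 = d.2 := by
        have := he
        simp only [rowFill, h] at this
        omega
      exact Prod.ext h h2
    · exact absurd he.symm (Nat.ne_of_lt (hkey d hd c hc h))
  -- upper bound on the power sum
  have hup : ∑ c ∈ μ.cells, ((rowFill μ c : ℝ)) ^ α ≤ NA α n := by
    have hinj' : ∀ c ∈ μ.cells, ∀ d ∈ μ.cells,
        rowFill μ c - 1 = rowFill μ d - 1 → c = d := by
      intro c hc d hd he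
      exact hinj c hc d hd (by have := hT1 c; have := hT1 d; omega)
    have himg : ∑ m ∈ μ.cells.image (fun c => rowFill μ c - 1), ((m : ℝ) + 1) ^ α
        = ∑ c ∈ μ.cells, ((rowFill μ c : ℝ)) ^ α := by
      rw [Finset.sum_image hinj']
      refine Finset.sum_congr rfl fun c hc => ?_
      congr 1
      have := hT1 c
      have : ((rowFill μ c - 1 : ℕ) : ℝ) = (rowFill μ c : ℝ) - 1 := by
        push_cast [Nat.cast_sub this]; ring
      rw [this]; ring
    rw [← himg, NA]
    apply Finset.sum_le_sum_of_subset_of_nonneg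
    · intro m hm
      simp only [Finset.mem_image] at hm
      obtain ⟨c, hc, rfl⟩ := hm
      have := hTn c hc
      have := hT1 c
      simp only [Finset.mem_range]
      omega
    · intro m _ _
      positivity
  -- the deficiency sum B
  set B : ℝ := ∑ i ∈ Finset.range n, L i * (Sr i + (i : ℝ)) with hB
  have hpow_le : ∀ c ∈ μ.cells, ((n : ℝ)) ^ (α - 1) ≤ ((rowFill μ c : ℝ)) ^ (α - 1) := by
    intro c hc
    apply Real.rpow_le_rpow_of_nonpos
    · exact_mod_cast hT1 c
    · exact_mod_cast hTn c hc
    · linarith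
  have hterm : ∀ c ∈ μ.cells,
      ((c.2 : ℝ) - (c.1 : ℝ) + 1) * ((rowFill μ c : ℝ)) ^ (α - 1)
        = ((rowFill μ c : ℝ)) ^ α
          - (Sr c.1 + (c.1 : ℝ)) * ((rowFill μ c : ℝ)) ^ (α - 1) := by
    intro c hc
    have ht : (0 : ℝ) < (rowFill μ c : ℝ) := by exact_mod_cast hT1 c
    have h2 := Real.rpow_add ht 1 (α - 1)
    rw [show (1 : ℝ) + (α - 1) = α by ring, Real.rpow_one] at h2
    rw [h2, hTval c]
    ring
  have hcellB : ∑ c ∈ μ.cells, (Sr c.1 + (c.1 : ℝ)) = B := by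
    rw [hrowsum (fun c => Sr c.1 + (c.1 : ℝ)), hB]
    refine Finset.sum_congr rfl fun i _ => ?_
    simp only [Finset.sum_const, Finset.card_range, nsmul_eq_mul]; rfl
  have hlow : B * (n : ℝ) ^ (α - 1)
      ≤ ∑ c ∈ μ.cells, (Sr c.1 + (c.1 : ℝ)) * ((rowFill μ c : ℝ)) ^ (α - 1) := by
    calc B * (n : ℝ) ^ (α - 1)
        = ∑ c ∈ μ.cells, (Sr c.1 + (c.1 : ℝ)) * (n : ℝ) ^ (α - 1) := by
          rw [← Finset.sum_mul, hcellB]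
      _ ≤ _ := by
          refine Finset.sum_le_sum fun c hc => ?_
          have hnn : 0 ≤ Sr c.1 + (c.1 : ℝ) := by
            have := hSnn c.1; positivity
          exact mul_le_mul_of_nonneg_left (hpow_le c hc) hnn
  have hMain : ∑ c ∈ μ.cells,
      (((c.2 : ℝ) - (c.1 : ℝ) + 1) * ((rowFill μ c : ℝ)) ^ (α - 1))
        ≤ NA α n - B * (n : ℝ) ^ (α - 1) := by
    rw [Finset.sum_congr rfl hterm, Finset.sum_sub_distrib]
    linarith only [hup, hlow]
  have hNpos : 0 < NA α n := by
    apply Finset.sum_pos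
    · intro i _
      apply Real.rpow_pos_of_pos
      positivity
    · exact Finset.nonempty_range_iff.mpr (by omega)
  have heig : eigA α μ (rowFill μ) ≤ 1 - B * (n : ℝ) ^ (α - 1) / NA α n := by
    rw [eigA, hcard]
    calc (1 / NA α n) * ∑ c ∈ μ.cells,
          (((c.2 : ℝ) - (c.1 : ℝ) + 1) * ((rowFill μ c : ℝ)) ^ (α - 1))
        ≤ (1 / NA α n) * (NA α n - B * (n : ℝ) ^ (α - 1)) := by
          exact mul_le_mul_of_nonneg_left hMain (by positivity)
      _ = 1 - B * (n : ℝ) ^ (α - 1) / NA α n := by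
          field_simp
  -- estimates on B
  have hsplitB : B = (∑ i ∈ Finset.range n, L i * Sr i)
      + ∑ i ∈ Finset.range n, L i * (i : ℝ) := by
    rw [hB, ← Finset.sum_add_distrib]
    exact Finset.sum_congr rfl fun i _ => by ring
  have hP : ∑ i ∈ Finset.range n, L i * Sr i
      = ((n : ℝ) ^ 2 - ∑ i ∈ Finset.range n, (L i) ^ 2) / 2 := by
    have := sum_mul_sum_range_lt L n
    rw [hLsum] at this
    exact this
  have hIcoSum : ∑ i ∈ Finset.Ico 1 n, L i = (k : ℝ) := by
    have h := Finset.sum_range_eq_add_Ico L hn0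
    rw [hLsum, hL0] at h
    linarith
  have hIcoSq : ∑ i ∈ Finset.range n, (L i) ^ 2
      = (L 0) ^ 2 + ∑ i ∈ Finset.Ico 1 n, (L i) ^ 2 :=
    Finset.sum_range_eq_add_Ico (fun i => (L i) ^ 2) hn0
  have hsq1 : ∑ i ∈ Finset.Ico 1 n, (L i) ^ 2 ≤ (k : ℝ) ^ 2 := by
    calc ∑ i ∈ Finset.Ico 1 n, (L i) ^ 2
        ≤ (∑ i ∈ Finset.Ico 1 n, L i) ^ 2 :=
          Finset.sum_sq_le_sq_sum_of_nonneg fun i _ => hLnn i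
      _ = (k : ℝ) ^ 2 := by rw [hIcoSum]
  have hsq2 : ∑ i ∈ Finset.Ico 1 n, (L i) ^ 2 ≤ ((n : ℝ) - (k : ℝ)) * (k : ℝ) := by
    calc ∑ i ∈ Finset.Ico 1 n, (L i) ^ 2
        ≤ ∑ i ∈ Finset.Ico 1 n, ((n : ℝ) - (k : ℝ)) * L i := by
          refine Finset.sum_le_sum fun i _ => ?_
          have h1 : L i ≤ L 0 := by
            have h2 := μ.rowLen_anti 0 i (Nat.zero_le i)
            simp only [hL]
            exact_mod_cast h2
          rw [hL0] at h1
          have := hLnn i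
          nlinarith
      _ = ((n : ℝ) - (k : ℝ)) * (k : ℝ) := by rw [← Finset.mul_sum, hIcoSum]
  have hQ1 : (k : ℝ) ≤ ∑ i ∈ Finset.range n, L i * (i : ℝ) := by
    have h0 : ∑ i ∈ Finset.range n, L i * (i : ℝ)
        = L 0 * (0 : ℝ) + ∑ i ∈ Finset.Ico 1 n, L i * (i : ℝ) := by
      simpa using Finset.sum_range_eq_add_Ico (fun i => L i * (i : ℝ)) hn0
    have h1 : ∑ i ∈ Finset.Ico 1 n, L i ≤ ∑ i ∈ Finset.Ico 1 n, L i * (i : ℝ) := by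
      refine Finset.sum_le_sum fun i hi => ?_
      have : (1 : ℝ) ≤ (i : ℝ) := by exact_mod_cast (Finset.mem_Ico.mp hi).1
      exact le_mul_of_one_le_right (hLnn i) this
    rw [hIcoSum] at h1
    linarith
  have hnα : (n : ℝ) ^ α = (n : ℝ) * (n : ℝ) ^ (α - 1) := by
    have ht : (0 : ℝ) < (n : ℝ) := by positivity
    have h2 := Real.rpow_add ht 1 (α - 1)
    rw [show (1 : ℝ) + (α - 1) = α by ring, Real.rpow_one] at h2
    exact h2
  have hpow_pos : (0 : ℝ) < (n : ℝ) ^ (α - 1) := Real.rpow_pos_of_pos (by positivity) _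
  have hnne : (n : ℝ) ≠ 0 := by positivity
  constructor
  · intro _
    refine le_trans heig ?_
    have hBge : ((n : ℝ) - (k : ℝ) + 1) * (k : ℝ) ≤ B := by
      rw [hsplitB, hP, hIcoSq, hL0]
      nlinarith only [hsq1, hQ1]
    have hrw : ((n : ℝ) - (k : ℝ) + 1) * (k : ℝ) * ((n : ℝ) ^ α) / ((n : ℝ) * NA α n)
        = (((n : ℝ) - (k : ℝ) + 1) * (k : ℝ)) * (n : ℝ) ^ (α - 1) / NA α n := by
      rw [hnα]; field_simp
    rw [hrw]
    have h1 := mul_le_mul_of_nonneg_right hBge hpow_pos.le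
    linarith only [(div_le_div_iff_of_pos_right hNpos).mpr h1]
  · intro _
    refine le_trans heig ?_
    have hBge : (k : ℝ) * (n : ℝ) / 2 ≤ B := by
      rw [hsplitB, hP, hIcoSq, hL0]
      nlinarith only [hsq2, hQ1]
    have hrw : (k : ℝ) * ((n : ℝ) ^ α) / (2 * NA α n)
        = ((k : ℝ) * (n : ℝ) / 2) * (n : ℝ) ^ (α - 1) / NA α n := by
      rw [hnα]; field_simp
    rw [hrw]
    have h1 := mul_le_mul_of_nonneg_right hBge hpow_pos.le
    linarith only [(div_le_div_iff_of_pos_right hNpos).mpr h1]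
end

section
/- Let α ≥ 1 and let λ ⊢ n be a partition with first row λ_1 = n−k (1 ≤ k ≤ n−1). Then the eigenvalue eig_α(T_λ^↓) of the biased one-sided transposition shuffle satisfies eig_α(T_λ^↓) ≤ 1 − k/n for all such k, and moreover eig_α(T_λ^↓) ≤ 1 − k(n−k)·N_{α−1}(n)/(n·N_α(n)) if k ≤ n/4. -/
open Finset

namespace OST

/-- partial sum of column lengths -/
def MM (c : ℕ → ℕ) (j : ℕ) : ℕ := ∑ x ∈ range j, c x
/-- partial sum of (column length - 1) -/
def DD (c : ℕ → ℕ) (j : ℕ) : ℕ := ∑ x ∈ range j, (c x - 1)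
/-- tail below-cell count from column b on -/
def tS (c : ℕ → ℕ) (q b : ℕ) : ℕ := ∑ x ∈ Ico b q, (c x - 1)
/-- tail cell count from column b on -/
def tP (c : ℕ → ℕ) (q b : ℕ) : ℕ := ∑ x ∈ Ico b q, c x
/-- pair count: (cell, below-cell to its right), among columns in [b, q) ;
    s-major form -/
def tY (c : ℕ → ℕ) (q b : ℕ) : ℕ := ∑ s ∈ Ico b q, (∑ r ∈ Ico b s, c r) * (c s - 1)

lemma tY_rmajor (c : ℕ → ℕ) (q b : ℕ) :
    tY c q b = ∑ r ∈ Ico b q, c r * tS c q (r + 1) := by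
  have h := Finset.sum_Ico_Ico_comm' b q (fun r s => c r * (c s - 1))
  rw [tY]
  simp only [sum_mul] 
  rw [← h]
  exact sum_congr rfl fun r _ => by rw [tS, mul_sum]

section Main

variable {c : ℕ → ℕ} {q k n : ℕ}
  (hanti : ∀ ⦃i j : ℕ⦄, i ≤ j → c j ≤ c i)
  (hpos : ∀ j, j < q → 1 ≤ c j)
  (hsum : ∑ x ∈ range q, c x = n)
  (hqk : q + k = n)

include hpos hsum hqk in
lemma sum_s_eq : ∑ x ∈ range q, (c x - 1) = k := by
  have : ∑ x ∈ range q, c x = (∑ x ∈ range q, (c x - 1)) + ∑ x ∈ range q, 1 := by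
    rw [← sum_add_distrib]
    exact sum_congr rfl fun x hx => by
      have := hpos x (mem_range.mp hx); omega
  simp only [sum_const, card_range, smul_eq_mul, mul_one] at this
  omega

include hpos hsum hqk in
lemma tS_le_k (b : ℕ) : tS c q b ≤ k := by
  rw [← sum_s_eq hpos hsum hqk, tS]
  apply sum_le_sum_of_subset
  intro x hx
  rw [mem_Ico] at hx; rw [mem_range]; omega

include hanti hpos hsum hqk in
lemma density (b : ℕ) (hb : b ≤ q) : tS c q b * n ≤ tP c q b * k := by
  have hsplitc : MM c b + tP c q b = n := by
    rw [MM, tP, ← hsum, ← Nat.Ico_zero_eq_range b, ← Nat.Ico_zero_eq_range q]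
    exact sum_Ico_consecutive _ (Nat.zero_le b) hb
  have hsplits : DD c b + tS c q b = k := by
    rw [DD, tS, ← sum_s_eq hpos hsum hqk, ← Nat.Ico_zero_eq_range b, ← Nat.Ico_zero_eq_range q]
    exact sum_Ico_consecutive _ (Nat.zero_le b) hb
  have key : tS c q b * MM c b ≤ tP c q b * DD c b := by
    rw [tS, tP, MM, DD, sum_mul_sum, sum_mul_sum]
    apply sum_le_sum
    intro u hu
    apply sum_le_sum
    intro h hh
    rw [mem_Ico] at hu; rw [mem_range] at hh
    have hcu : 1 ≤ c u := hpos u hu.2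
    have hch : 1 ≤ c h := hpos h (by omega)
    have hle : c u ≤ c h := hanti (by omega)
    -- (c u - 1) * c h ≤ c u * (c h - 1)
    obtain ⟨a, ha⟩ := Nat.exists_eq_add_of_le hcu
    obtain ⟨d, hd⟩ := Nat.exists_eq_add_of_le hch
    rw [ha, hd]
    simp only [Nat.add_sub_cancel_left]
    nlinarith [ha ▸ hd ▸ hle]
  calc tS c q b * n = tS c q b * MM c b + tS c q b * tP c q b := by
        rw [← Nat.mul_add, hsplitc]
      _ ≤ tP c q b * DD c b + tP c q b * tS c q b := by
        rw [Nat.mul_comm (tS c q b) (tP c q b)]; omega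
      _ = tP c q b * k := by rw [← Nat.mul_add, hsplits]


lemma L1 : ∀ (L : ℕ) (a : ℕ → ℕ), (∀ i j : ℕ, i ≤ j → a j ≤ a i) →
    2 * ∑ i ∈ range L, i * a i + ∑ i ∈ range L, a i ≤
      (∑ i ∈ range L, a i) * (∑ i ∈ range L, a i) := by
  intro L
  induction L with
  | zero => simp
  | succ L ih =>
    intro a ha
    have h1 : ∑ i ∈ range (L+1), i * a i
        = (∑ i ∈ range L, i * a (i+1)) + ∑ i ∈ range L, a (i+1) := by
      rw [Finset.sum_range_succ' (fun i => i * a i) L]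
      simp only [zero_mul, add_zero, add_mul, one_mul, sum_add_distrib]
    have h2 : ∑ i ∈ range (L+1), a i = (∑ i ∈ range L, a (i+1)) + a 0 :=
      Finset.sum_range_succ' a L
    have hIH := ih (fun i => a (i+1)) (fun i j hij => ha _ _ (by omega))
    by_cases h0 : a 0 = 0
    · have hall : ∀ i, a i = 0 := fun i => Nat.le_zero.mp (h0 ▸ ha 0 i (Nat.zero_le i))
      simp [hall]
    · have ha0 : 1 ≤ a 0 := Nat.one_le_iff_ne_zero.mpr h0
      rw [h1, h2]
      set B := ∑ i ∈ range L, a (i+1) with hB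
      set S := ∑ i ∈ range L, i * a (i+1) with hS
      nlinarith [hIH, ha0]


-- identity : tS^2 = 2 * pairterm + sum of squares
include hpos in
lemma sq_tS (b : ℕ) (hb : b ≤ q) :
    tS c q b * tS c q b =
      2 * (∑ s ∈ Ico b q, (∑ r ∈ Ico b s, (c r - 1)) * (c s - 1))
        + ∑ s ∈ Ico b q, (c s - 1) * (c s - 1) := by
  have hsplit : ∀ s ∈ Ico b q, tS c q b
      = (∑ r ∈ Ico b s, (c r - 1)) + ((c s - 1) + ∑ r ∈ Ico (s+1) q, (c r - 1)) := by
    intro s hs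
    rw [mem_Ico] at hs
    rw [tS, ← sum_Ico_consecutive _ hs.1 (le_of_lt hs.2)]
    congr 1
    exact sum_eq_sum_Ico_succ_bot hs.2 _
  have expand : tS c q b * tS c q b
      = ∑ s ∈ Ico b q, (((∑ r ∈ Ico b s, (c r - 1)) * (c s - 1) + (c s - 1) * (c s - 1))
          + (c s - 1) * ∑ r ∈ Ico (s+1) q, (c r - 1)) := by
    conv_lhs => rw [tS, sum_mul]
    apply sum_congr rfl
    intro s hs
    rw [← tS, hsplit s hs]
    ring
  rw [expand, sum_add_distrib, sum_add_distrib]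
  have hcomm : ∑ s ∈ Ico b q, (c s - 1) * ∑ r ∈ Ico (s+1) q, (c r - 1)
      = ∑ s ∈ Ico b q, (∑ r ∈ Ico b s, (c r - 1)) * (c s - 1) := by
    have h := Finset.sum_Ico_Ico_comm' b q (fun u v => (c u - 1) * (c v - 1))
    calc ∑ s ∈ Ico b q, (c s - 1) * ∑ r ∈ Ico (s+1) q, (c r - 1)
        = ∑ s ∈ Ico b q, ∑ r ∈ Ico (s+1) q, (c s - 1) * (c r - 1) := by
          exact sum_congr rfl fun s _ => by rw [mul_sum]
      _ = ∑ v ∈ Ico b q, ∑ u ∈ Ico b v, (c u - 1) * (c v - 1) := h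
      _ = ∑ s ∈ Ico b q, (∑ r ∈ Ico b s, (c r - 1)) * (c s - 1) := by
          exact sum_congr rfl fun v _ => by rw [sum_mul]
  rw [hcomm]
  ring

-- tY decomposition into pair term and index term
include hpos in
lemma tY_decomp (b : ℕ) (hb : b ≤ q) :
    tY c q b = (∑ s ∈ Ico b q, (∑ r ∈ Ico b s, (c r - 1)) * (c s - 1))
      + ∑ s ∈ Ico b q, (s - b) * (c s - 1) := by
  rw [tY, ← sum_add_distrib]
  apply sum_congr rfl
  intro s hs
  rw [mem_Ico] at hs
  have hc : ∑ r ∈ Ico b s, c r = (∑ r ∈ Ico b s, (c r - 1)) + (s - b) := by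
    have : ∑ r ∈ Ico b s, c r = ∑ r ∈ Ico b s, ((c r - 1) + 1) := by
      apply sum_congr rfl
      intro r hr
      rw [mem_Ico] at hr
      have := hpos r (by omega)
      omega
    rw [this, sum_add_distrib, sum_const, Nat.card_Ico, smul_eq_mul, mul_one]
  rw [hc, add_mul]

include hanti hpos in
lemma F2 (b : ℕ) (hb : b ≤ q) : tY c q b ≤ tS c q b * tS c q b := by
  have hsq := sq_tS hpos b hb
  have hdec := tY_decomp hpos b hb
  have hL1 : 2 * (∑ s ∈ Ico b q, (s - b) * (c s - 1)) + tS c q b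
      ≤ tS c q b * tS c q b := by
    have e1 : ∑ s ∈ Ico b q, (s - b) * (c s - 1)
        = ∑ i ∈ range (q - b), i * (c (b + i) - 1) := by
      rw [sum_Ico_eq_sum_range]
      exact sum_congr rfl fun i _ => by congr 1; omega
    have e2 : tS c q b = ∑ i ∈ range (q - b), (c (b + i) - 1) := by
      rw [tS, sum_Ico_eq_sum_range]
    rw [e1, e2]
    exact L1 (q - b) (fun i => c (b + i) - 1)
      (fun i j hij => Nat.sub_le_sub_right (hanti (by omega)) 1)
  omega

include hanti hpos in
lemma F3 (b : ℕ) (hb : b ≤ q) :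
    2 * tY c q b + tS c q b ≤ tS c q b * tP c q b := by
  set A : ℕ → ℕ := fun x => c x - 1 with hA
  -- Y' : v-major sum of (c u - 1) * c v over pairs u < v
  set Y' : ℕ := ∑ v ∈ Ico b q, (∑ u ∈ Ico b v, A u) * c v with hY'
  have hYY' : tY c q b ≤ Y' := by
    rw [tY, hY']
    apply sum_le_sum
    intro v hv
    rw [mem_Ico] at hv
    have hcv : 1 ≤ c v := hpos v hv.2
    have hBA : (∑ u ∈ Ico b v, A u) + (v - b) = ∑ u ∈ Ico b v, c u := by
      have : ∑ u ∈ Ico b v, c u = ∑ u ∈ Ico b v, (A u + 1) := by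
        apply sum_congr rfl
        intro u hu
        rw [mem_Ico] at hu
        have := hpos u (by omega)
        simp only [hA]; omega
      rw [this, sum_add_distrib, sum_const, Nat.card_Ico, smul_eq_mul, mul_one]
    have hmB : (v - b) * (c v - 1) ≤ ∑ u ∈ Ico b v, A u := by
      calc (v - b) * (c v - 1) = ∑ u ∈ Ico b v, (c v - 1) := by
            rw [sum_const, Nat.card_Ico, smul_eq_mul]
        _ ≤ ∑ u ∈ Ico b v, A u := by
            apply sum_le_sum
            intro u hu
            rw [mem_Ico] at hu
            exact Nat.sub_le_sub_right (hanti (by omega)) 1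
    -- (∑ c u) * (c v - 1) ≤ (∑ A u) * c v
    set B := ∑ u ∈ Ico b v, A u
    set m := v - b
    have hcv1 : c v - 1 + 1 = c v := by omega
    calc (∑ u ∈ Ico b v, c u) * (c v - 1) = (B + m) * (c v - 1) := by rw [← hBA]
      _ = B * (c v - 1) + m * (c v - 1) := by ring
      _ ≤ B * (c v - 1) + B := by omega
      _ = B * c v := by
          conv_rhs => rw [← hcv1]
          rw [Nat.mul_succ]
  have hid : tY c q b + Y' + ∑ s ∈ Ico b q, A s * c s = tS c q b * tP c q b := by
    have hsplit : ∀ s ∈ Ico b q, tP c q b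
        = (∑ r ∈ Ico b s, c r) + (c s + ∑ r ∈ Ico (s+1) q, c r) := by
      intro s hs
      rw [mem_Ico] at hs
      rw [tP, ← sum_Ico_consecutive _ hs.1 (le_of_lt hs.2)]
      congr 1
      exact sum_eq_sum_Ico_succ_bot hs.2 _
    have expand : tS c q b * tP c q b
        = ∑ s ∈ Ico b q, (((∑ r ∈ Ico b s, c r) * A s + A s * c s)
            + A s * ∑ r ∈ Ico (s+1) q, c r) := by
      conv_lhs => rw [tS, sum_mul]
      apply sum_congr rfl
      intro s hs
      rw [hsplit s hs]
      ring
    have hcomm : ∑ s ∈ Ico b q, A s * ∑ r ∈ Ico (s+1) q, c r = Y' := by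
      have h := Finset.sum_Ico_Ico_comm' b q (fun u v => A u * c v)
      calc ∑ s ∈ Ico b q, A s * ∑ r ∈ Ico (s+1) q, c r
          = ∑ s ∈ Ico b q, ∑ r ∈ Ico (s+1) q, A s * c r := by
            exact sum_congr rfl fun s _ => by rw [mul_sum]
        _ = ∑ v ∈ Ico b q, ∑ u ∈ Ico b v, A u * c v := h
        _ = Y' := by
            rw [hY']
            exact sum_congr rfl fun v _ => by rw [sum_mul]
    rw [expand, sum_add_distrib, sum_add_distrib, hcomm, tY]
    ring
  have hAc : tS c q b ≤ ∑ s ∈ Ico b q, A s * c s := by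
    rw [tS]
    apply sum_le_sum
    intro s hs
    rw [mem_Ico] at hs
    have := hpos s hs.2
    calc c s - 1 = (c s - 1) * 1 := by ring
      _ ≤ (c s - 1) * c s := Nat.mul_le_mul_left _ this
  omega

include hanti hpos hsum hqk in
lemma A0 (b : ℕ) (hb : b ≤ q) :
    2 * n * tY c q b + k * tP c q b ≤ k * (tP c q b * tP c q b) := by
  rcases Nat.eq_or_lt_of_le hb with rfl | hlt
  · simp [tY, tP, Ico_self]
  · have hF3 := F3 hanti hpos b hb
    have hdens := density hanti hpos hsum hqk b hb
    have hT : 1 ≤ tP c q b := by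
      rw [tP]
      calc 1 ≤ c b := hpos b hlt
        _ ≤ ∑ x ∈ Ico b q, c x := single_le_sum (fun i _ => Nat.zero_le _) (by rw [mem_Ico]; omega)
    -- 2*tY ≤ tS * (tP - 1), n * tS ≤ k * tP
    zify at hF3 hdens hT ⊢
    nlinarith [hF3, hdens, hT, mul_le_mul_of_nonneg_right hdens (by linarith : (0:ℤ) ≤ tP c q b - 1)]

-- cut-level quantities
lemma MM_succ (c : ℕ → ℕ) (j : ℕ) : MM c (j+1) = MM c j + c j := sum_range_succ c j

include hsum in
lemma MM_tP (b : ℕ) (hb : b ≤ q) : MM c b + tP c q b = n := by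
  rw [MM, tP, ← hsum, ← Nat.Ico_zero_eq_range b, ← Nat.Ico_zero_eq_range q]
  exact sum_Ico_consecutive _ (Nat.zero_le b) hb

include hpos hsum hqk in
lemma DD_split (j : ℕ) (hj : j < q) : DD c j + ((c j - 1) + tS c q (j+1)) = k := by
  have h1 : DD c j + tS c q j = k := by
    rw [DD, tS, ← sum_s_eq hpos hsum hqk, ← Nat.Ico_zero_eq_range j, ← Nat.Ico_zero_eq_range q]
    exact sum_Ico_consecutive _ (Nat.zero_le j) (le_of_lt hj)
  have h2 : tS c q j = (c j - 1) + tS c q (j+1) := by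
    rw [tS, tS]; exact sum_eq_sum_Ico_succ_bot hj _
  omega

include hanti hpos hsum hqk in
lemma keyA (J t : ℕ) (hJ : J < q) (ht : t < c J) :
    2 * n * ((c J - t) * tS c q (J+1) + tY c q (J+1))
      + k * ((c J - t) + tP c q (J+1))
    ≤ k * (((c J - t) + tP c q (J+1)) * ((c J - t) + tP c q (J+1))) := by
  have hA0 := A0 hanti hpos hsum hqk (J+1) (by omega)
  have hdens := density hanti hpos hsum hqk (J+1) (by omega)
  have hg : 1 ≤ c J - t := by omega
  set g := c J - t
  set E := tS c q (J+1); set Pb := tP c q (J+1); set Yb := tY c q (J+1)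
  zify at hA0 hdens hg ⊢
  have h1 : 2*(g:ℤ)*((E:ℤ)*(n:ℤ)) ≤ 2*(g:ℤ)*((Pb:ℤ)*(k:ℤ)) :=
    mul_le_mul_of_nonneg_left hdens (by positivity)
  have h2 : (k:ℤ)*(g:ℤ)*1 ≤ (k:ℤ)*(g:ℤ)*(g:ℤ) :=
    mul_le_mul_of_nonneg_left hg (by positivity)
  nlinarith [hA0, h1, h2, Int.natCast_nonneg k, Int.natCast_nonneg g, Int.natCast_nonneg Pb]

include hanti hpos hsum hqk in
lemma keyB (J t : ℕ) (hJ : J < q) (ht : t < c J) :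
    n * ((c J - t) * tS c q (J+1) + tY c q (J+1))
      ≤ ((c J - t) + tP c q (J+1)) * k * k := by
  rcases Nat.eq_zero_or_pos t with rfl | ht1
  · have hidY : c J * tS c q (J+1) + tY c q (J+1) = tY c q J := by
      rw [tY_rmajor c q J, tY_rmajor c q (J+1)]
      exact (sum_eq_sum_Ico_succ_bot hJ (fun r => c r * tS c q (r+1))).symm
    have hidP : c J + tP c q (J+1) = tP c q J := by
      rw [tP, tP]; exact (sum_eq_sum_Ico_succ_bot hJ c).symm
    have hF2 := F2 hanti hpos J (le_of_lt hJ)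
    have hdens := density hanti hpos hsum hqk J (le_of_lt hJ)
    have hSk := tS_le_k hpos hsum hqk J
    rw [Nat.sub_zero, hidY, hidP]
    calc n * tY c q J ≤ n * (tS c q J * tS c q J) := mul_le_mul_right hF2 _
      _ = (tS c q J * n) * tS c q J := by ring
      _ ≤ (tP c q J * k) * tS c q J := mul_le_mul_left hdens _
      _ ≤ (tP c q J * k) * k := mul_le_mul_right hSk _
      _ = tP c q J * k * k := rfl
  · have hF2 := F2 hanti hpos (J+1) (by omega)
    have hdens := density hanti hpos hsum hqk (J+1) (by omega)
    have hEg : (c J - t) + tS c q (J+1) ≤ k := by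
      have h1 : tS c q J ≤ k := tS_le_k hpos hsum hqk J
      have h2 : tS c q J = (c J - 1) + tS c q (J+1) := by
        rw [tS, tS]; exact sum_eq_sum_Ico_succ_bot hJ _
      omega
    set g := c J - t; set E := tS c q (J+1); set Pb := tP c q (J+1); set Yb := tY c q (J+1)
    calc n * (g * E + Yb) ≤ n * (g * E + E * E) := by
          have : g * E + Yb ≤ g * E + E * E := by omega
          exact mul_le_mul_right this _
      _ = (E * n) * (g + E) := by ring
      _ ≤ (Pb * k) * (g + E) := mul_le_mul_left hdens _
      _ ≤ (Pb * k) * k := mul_le_mul_right hEg _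
      _ = Pb * (k * k) := by ring
      _ ≤ (g + Pb) * (k * k) := mul_le_mul_left (by omega) _
      _ = (g + Pb) * k * k := by ring

/-- sum of weights w = D_j + 2i over the tail of the cut (J,t) -/
def SW (c : ℕ → ℕ) (q J t : ℕ) : ℕ :=
  (∑ i ∈ Ico t (c J), (DD c J + 2*i))
    + ∑ j ∈ Ico (J+1) q, ∑ i ∈ range (c j), (DD c j + 2*i)

/-- sum of entries m = MM_j + i + 1 over the tail of the cut (J,t) -/
def SMsum (c : ℕ → ℕ) (q J t : ℕ) : ℕ :=
  (∑ i ∈ Ico t (c J), (MM c J + i + 1))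
    + ∑ j ∈ Ico (J+1) q, ∑ i ∈ range (c j), (MM c j + i + 1)

lemma gauss_col (d a b : ℕ) (hab : a ≤ b) :
    ∑ i ∈ Ico a b, (d + 2*i) = (b - a) * (d + 2*a) + (b - a) * ((b - a) - 1) := by
  rw [sum_Ico_eq_sum_range]
  have h2 := Finset.sum_range_id_mul_two (b - a)
  have : ∀ i ∈ range (b - a), d + 2*(a + i) = (d + 2*a) + 2*i := fun i _ => by ring
  rw [sum_congr rfl this, sum_add_distrib, sum_const, card_range, smul_eq_mul, ← mul_sum]
  omega

include hpos hsum hqk in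
lemma W1 (J t : ℕ) (hJ : J < q) (ht : t < c J) :
    k * ((c J - t) + tP c q (J+1))
      ≤ SW c q J t + ((c J - t) * tS c q (J+1) + tY c q (J+1)) := by
  have hpart : k * (c J - t) ≤ (∑ i ∈ Ico t (c J), (DD c J + 2*i)) + (c J - t) * tS c q (J+1) := by
    have hg := gauss_col (DD c J) t (c J) (le_of_lt ht)
    have hk := DD_split hpos hsum hqk J hJ
    set g := c J - t with hgdef
    have hcj : c J = t + g := by omega
    have hs : c J - 1 = t + g - 1 := by omega
    zify at hg hk ⊢
    have hg1 : (1:ℤ) ≤ (g:ℤ) := by exact_mod_cast Nat.one_le_iff_ne_zero.mpr (by omega)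
    have ht0 : (0:ℤ) ≤ (t:ℤ) := Int.natCast_nonneg t
    -- k = DD + (c J - 1) + tS,  c J - 1 = t + g - 1
    have hcj1 : ((c J - 1 : ℕ) : ℤ) = (t:ℤ) + (g:ℤ) - 1 := by
      have : 1 ≤ c J := by omega
      zify [this]; omega
    rw [hcj1] at hk
    have hgg : ((g - 1 : ℕ) : ℤ) = (g:ℤ) - 1 := by zify [Nat.one_le_iff_ne_zero.mpr (by omega : g ≠ 0)]
    rw [hgg] at hg
    nlinarith [hg, hk, hg1, ht0, Int.natCast_nonneg (tS c q (J+1)), Int.natCast_nonneg (DD c J)]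
  have hfull : (∑ j ∈ Ico (J+1) q, ∑ i ∈ range (c j), (DD c j + 2*i)) + tY c q (J+1)
      = tP c q (J+1) * k := by
    rw [tY_rmajor, tP, sum_mul, ← sum_add_distrib]
    apply sum_congr rfl
    intro j hj
    rw [mem_Ico] at hj
    have hcol : ∑ i ∈ range (c j), (DD c j + 2*i)
        = c j * (DD c j) + c j * (c j - 1) := by
      have := gauss_col (DD c j) 0 (c j) (Nat.zero_le _)
      simpa using this
    have hk := DD_split hpos hsum hqk j hj.2
    rw [hcol]
    calc c j * DD c j + c j * (c j - 1) + c j * tS c q (j+1)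
        = c j * (DD c j + ((c j - 1) + tS c q (j+1))) := by ring
      _ = c j * k := by rw [hk]
  rw [SW]
  calc k * ((c J - t) + tP c q (J+1)) = k * (c J - t) + tP c q (J+1) * k := by ring
    _ ≤ ((∑ i ∈ Ico t (c J), (DD c J + 2*i)) + (c J - t) * tS c q (J+1))
          + ((∑ j ∈ Ico (J+1) q, ∑ i ∈ range (c j), (DD c j + 2*i)) + tY c q (J+1)) := by
        omega
    _ = _ := by ring

lemma shiftsum (a b d : ℕ) :
    ∑ i ∈ Ico a b, (d + i + 1) = ∑ m ∈ Ico (d + a + 1) (d + b + 1), m := by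
  rw [sum_Ico_eq_sum_range, sum_Ico_eq_sum_range]
  have he : d + b + 1 - (d + a + 1) = b - a := by omega
  rw [he]
  exact sum_congr rfl fun i _ => by omega

include hsum in
lemma MM_le_n (b : ℕ) (hb : b ≤ q) : MM c b ≤ n := by
  rw [MM, ← hsum]
  exact sum_le_sum_of_subset (by intro x hx; rw [mem_range] at *; omega)

include hsum in
lemma chainSM : ∀ (d b : ℕ), b + d = q →
    (∑ j ∈ Ico b q, ∑ i ∈ range (c j), (MM c j + i + 1))
      = ∑ m ∈ Ico (MM c b + 1) (n + 1), m := by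
  intro d
  induction d with
  | zero =>
    intro b hb
    have hbq : b = q := by omega
    subst hbq
    have : MM c b = n := by rw [MM, hsum]
    rw [this, Ico_self, Ico_self, sum_empty, sum_empty]
  | succ d ih =>
    intro b hb
    have hbq : b < q := by omega
    rw [sum_eq_sum_Ico_succ_bot hbq (fun j => ∑ i ∈ range (c j), (MM c j + i + 1)),
      ih (b+1) (by omega)]
    have hcol : ∑ i ∈ range (c b), (MM c b + i + 1)
        = ∑ m ∈ Ico (MM c b + 1) (MM c (b+1) + 1), m := by
      rw [← Nat.Ico_zero_eq_range]
      have := shiftsum 0 (c b) (MM c b)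
      rw [this, MM_succ]
    rw [hcol]
    apply sum_Ico_consecutive
    · have : MM c b ≤ MM c (b+1) := by rw [MM_succ]; omega
      omega
    · have : MM c (b+1) ≤ n := MM_le_n hsum (b+1) (by omega)
      omega

include hsum in
lemma SM_eq (J t : ℕ) (hJ : J < q) (ht : t < c J) :
    SMsum c q J t = ∑ m ∈ Ico (MM c J + t + 1) (n + 1), m := by
  rw [SMsum, chainSM hsum (q - (J+1)) (J+1) (by omega), shiftsum t (c J) (MM c J)]
  have h1 : MM c J + c J = MM c (J+1) := (MM_succ c J).symm
  rw [← h1]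
  apply sum_Ico_consecutive
  · omega
  · have : MM c (J+1) ≤ n := MM_le_n hsum (J+1) (by omega)
    omega

include hsum in
lemma MP_eq (J t : ℕ) (hJ : J < q) (ht : t < c J) :
    (MM c J + t) + ((c J - t) + tP c q (J+1)) = n := by
  have h1 : MM c (J+1) + tP c q (J+1) = n := MM_tP hsum (J+1) (by omega)
  have h2 : MM c (J+1) = MM c J + c J := MM_succ c J
  omega

lemma gaussP (M P : ℕ) :
    2 * ∑ m ∈ Ico (M + 1) (M + P + 1), m = P * (2 * M + P + 1) := by
  have he : M + P + 1 - (M + 1) = P := by omega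
  rw [sum_Ico_eq_sum_range, he]
  have h1 : ∀ i ∈ range P, M + 1 + i = (M + 1) + i := fun i _ => rfl
  rw [sum_add_distrib, sum_const, card_range, smul_eq_mul]
  have h2 := Finset.sum_range_id_mul_two P
  cases P with
  | zero => simp
  | succ p =>
    have : p + 1 - 1 = p := rfl
    zify at h2 ⊢
    rw [this] at h2
    nlinarith [h2]

-- master inequality A : 2 k Σm ≤ 2 n SW
include hanti hpos hsum hqk in
lemma masterA (J t : ℕ) (hJ : J < q) (ht : t < c J) :
    2 * k * SMsum c q J t ≤ 2 * n * SW c q J t := by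
  have hW1 := W1 hpos hsum hqk J t hJ ht
  have hKA := keyA hanti hpos hsum hqk J t hJ ht
  have hMP : (MM c J + t) + ((c J - t) + tP c q (J+1)) = n := MP_eq hsum J t hJ ht
  have hsm : SMsum c q J t = ∑ m ∈ Ico ((MM c J + t) + 1) ((MM c J + t) + ((c J - t) + tP c q (J+1)) + 1), m := by
    rw [SM_eq hsum J t hJ ht, hMP]
  set P := (c J - t) + tP c q (J+1) with hP
  set Y := (c J - t) * tS c q (J+1) + tY c q (J+1) with hY
  set M := MM c J + t with hM
  clear_value P Y M
  have hgauss : 2 * SMsum c q J t = P * (2 * M + P + 1) := by rw [hsm]; exact gaussP M P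
  -- identity : 2 k Σm + k P² = 2 n k P + k P
  have hI : 2 * k * SMsum c q J t + k * (P * P) = 2 * n * (k * P) + k * P := by
    zify
    have : (2:ℤ) * SMsum c q J t = P * (2 * M + P + 1) := by exact_mod_cast hgauss
    have hn : (n:ℤ) = M + P := by exact_mod_cast hMP.symm
    linear_combination (k:ℤ) * this - 2*(k:ℤ)*(P:ℤ)*hn
  -- from hW1 : k*P ≤ SW + Y ; hKA : 2nY + kP ≤ k P²
  have h2 : 2 * n * (k * P) ≤ 2 * n * SW c q J t + 2 * n * Y :=
    calc 2 * n * (k * P) ≤ 2 * n * (SW c q J t + Y) := mul_le_mul_right hW1 _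
      _ = 2 * n * SW c q J t + 2 * n * Y := by ring
  omega

-- master inequality B : k q Σ1 = k (n-k) P ≤ n SW
include hanti hpos hsum hqk in
lemma masterB (J t : ℕ) (hJ : J < q) (ht : t < c J) :
    k * q * ((c J - t) + tP c q (J+1)) ≤ n * SW c q J t := by
  have hW1 := W1 hpos hsum hqk J t hJ ht
  have hKB := keyB hanti hpos hsum hqk J t hJ ht
  set P := (c J - t) + tP c q (J+1) with hP
  set Y := (c J - t) * tS c q (J+1) + tY c q (J+1) with hY
  clear_value P Y
  have h1 : n * (k * P) ≤ n * SW c q J t + n * Y :=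
    calc n * (k * P) ≤ n * (SW c q J t + Y) := mul_le_mul_right hW1 _
      _ = n * SW c q J t + n * Y := by ring
  have h2 : n * Y ≤ P * k * k := hKB
  have h3 : n * (k * P) = k * q * P + P * k * k := by
    zify
    have hn : (n:ℤ) = q + k := by exact_mod_cast hqk.symm
    linear_combination (k:ℤ)*(P:ℤ)*hn
  omega

/-- real-valued tail sum of the coefficients (j - i + 1) for the cut (J,t) -/
def STA (c : ℕ → ℕ) (q J t : ℕ) : ℝ :=
  (∑ i ∈ Ico t (c J), ((J:ℝ) - (i:ℝ) + 1))
    + ∑ j ∈ Ico (J+1) q, ∑ i ∈ range (c j), ((j:ℝ) - (i:ℝ) + 1)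

include hpos in
lemma MM_DD (b : ℕ) (hb : b ≤ q) : MM c b = DD c b + b := by
  rw [MM, DD]
  have h : ∀ x ∈ range b, c x = (c x - 1) + 1 := by
    intro x hx; rw [mem_range] at hx; have := hpos x (by omega); omega
  rw [sum_congr rfl h, sum_add_distrib, sum_const, card_range, smul_eq_mul, mul_one]

include hpos in
lemma STA_eq (J t : ℕ) (hJ : J < q) (ht : t < c J) :
    STA c q J t = ((SMsum c q J t : ℕ) : ℝ) - ((SW c q J t : ℕ) : ℝ) := by
  simp only [STA, SMsum, SW]
  push_cast
  have e1 : (∑ i ∈ Ico t (c J), ((J:ℝ) - (i:ℝ) + 1))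
      = (∑ x ∈ Ico t (c J), ((MM c J : ℝ) + (x:ℝ) + 1))
        - ∑ x ∈ Ico t (c J), ((DD c J : ℝ) + 2 * (x:ℝ)) := by
    rw [← sum_sub_distrib]
    apply sum_congr rfl
    intro i _
    have h2 : (MM c J : ℝ) = (DD c J : ℝ) + (J : ℝ) := by
      have h := MM_DD hpos J (le_of_lt hJ)
      exact_mod_cast congrArg (Nat.cast (R := ℝ)) h
    rw [h2]; ring
  have e2 : (∑ j ∈ Ico (J+1) q, ∑ i ∈ range (c j), ((j:ℝ) - (i:ℝ) + 1))
      = (∑ j ∈ Ico (J+1) q, ∑ i ∈ range (c j), ((MM c j : ℝ) + (i:ℝ) + 1))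
        - ∑ j ∈ Ico (J+1) q, ∑ i ∈ range (c j), ((DD c j : ℝ) + 2 * (i:ℝ)) := by
    rw [← sum_sub_distrib]
    apply sum_congr rfl
    intro j hj
    rw [mem_Ico] at hj
    rw [← sum_sub_distrib]
    apply sum_congr rfl
    intro i _
    have h2 : (MM c j : ℝ) = (DD c j : ℝ) + (j : ℝ) := by
      have h := MM_DD hpos j (le_of_lt hj.2)
      exact_mod_cast congrArg (Nat.cast (R := ℝ)) h
    rw [h2]; ring
  rw [e1, e2]; ring

include hanti hpos hsum hqk in
lemma cutA (J t : ℕ) (hJ : J < q) (ht : t < c J) (hn : 0 < n) :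
    STA c q J t
      ≤ ∑ m ∈ Ico (MM c J + t + 1) (n+1), ((1 - (k:ℝ)/(n:ℝ)) * (m:ℝ)) := by
  have hmA := masterA hanti hpos hsum hqk J t hJ ht
  have hsm := SM_eq hsum J t hJ ht
  have hcast : ((SMsum c q J t : ℕ):ℝ) = ∑ m ∈ Ico (MM c J + t + 1) (n+1), (m:ℝ) := by
    rw [hsm]; push_cast; rfl
  have hSW : ((k:ℝ)/(n:ℝ)) * ((SMsum c q J t : ℕ) : ℝ) ≤ ((SW c q J t : ℕ) : ℝ) := by
    rw [div_mul_eq_mul_div, div_le_iff₀ (by exact_mod_cast hn : (0:ℝ) < n)]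
    have h : ((2 * k * SMsum c q J t : ℕ) : ℝ) ≤ ((2 * n * SW c q J t : ℕ) : ℝ) := by
      exact_mod_cast hmA
    push_cast at h
    linarith
  rw [STA_eq hpos J t hJ ht, ← mul_sum, ← hcast]
  have hexp : (1 - (k:ℝ)/(n:ℝ)) * ((SMsum c q J t : ℕ) : ℝ)
      = ((SMsum c q J t : ℕ) : ℝ) - ((k:ℝ)/(n:ℝ)) * ((SMsum c q J t : ℕ) : ℝ) := by ring
  rw [hexp]
  linarith

include hanti hpos hsum hqk in
lemma cutB (J t : ℕ) (hJ : J < q) (ht : t < c J) (hn : 0 < n) :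
    STA c q J t
      ≤ ∑ m ∈ Ico (MM c J + t + 1) (n+1), ((m:ℝ) - (k:ℝ)*(q:ℝ)/(n:ℝ)) := by
  have hmB := masterB hanti hpos hsum hqk J t hJ ht
  have hsm := SM_eq hsum J t hJ ht
  have hMP := MP_eq hsum J t hJ ht
  have hcast : ((SMsum c q J t : ℕ):ℝ) = ∑ m ∈ Ico (MM c J + t + 1) (n+1), (m:ℝ) := by
    rw [hsm]; push_cast; rfl
  have hcard : (Ico (MM c J + t + 1) (n+1)).card = (c J - t) + tP c q (J+1) := by
    rw [Nat.card_Ico]; omega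
  set P := (c J - t) + tP c q (J+1) with hPdef
  clear_value P
  have hSW : ((P : ℕ) : ℝ) * ((k:ℝ)*(q:ℝ)/(n:ℝ)) ≤ ((SW c q J t : ℕ) : ℝ) := by
    rw [mul_div_assoc', div_le_iff₀ (by exact_mod_cast hn : (0:ℝ) < n)]
    have h : ((k * q * P : ℕ) : ℝ) ≤ ((n * SW c q J t : ℕ) : ℝ) := by
      exact_mod_cast hmB
    push_cast at h
    linarith
  rw [STA_eq hpos J t hJ ht, sum_sub_distrib, sum_const, ← hcast, hcard]
  have hns : (P : ℕ) • ((k:ℝ)*(q:ℝ)/(n:ℝ)) = ((P:ℕ):ℝ) * ((k:ℝ)*(q:ℝ)/(n:ℝ)) := nsmul_eq_mul _ _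
  rw [hns]
  linarith [hSW]

-- zone split of the indicator double sum
lemma zone (F : ℕ → ℕ → ℝ) (J t : ℕ) (hJ : J < q) (ht : t < c J) :
    ∑ j ∈ range q, ∑ i ∈ range (c j), (if MM c J + t < MM c j + i + 1 then F j i else 0)
      = (∑ i ∈ Ico t (c J), F J i) + ∑ j ∈ Ico (J+1) q, ∑ i ∈ range (c j), F j i := by
  have hmono : ∀ a b : ℕ, a ≤ b → MM c a ≤ MM c b := fun a b hab =>
    sum_le_sum_of_subset (by intro x hx; rw [mem_range] at *; omega)
  have hsplitq : ∀ (G : ℕ → ℝ), ∑ j ∈ range q, G j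
      = (∑ j ∈ Ico 0 J, G j) + (G J + ∑ j ∈ Ico (J+1) q, G j) := by
    intro G
    rw [← Nat.Ico_zero_eq_range, ← sum_Ico_consecutive G (Nat.zero_le J) (le_of_lt hJ),
      sum_eq_sum_Ico_succ_bot hJ G]
  rw [hsplitq (fun j => ∑ i ∈ range (c j), (if MM c J + t < MM c j + i + 1 then F j i else 0))]
  have h1 : ∑ j ∈ Ico 0 J, ∑ i ∈ range (c j),
      (if MM c J + t < MM c j + i + 1 then F j i else 0) = 0 := by
    apply sum_eq_zero; intro j hj; rw [mem_Ico] at hj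
    apply sum_eq_zero; intro i hi; rw [mem_range] at hi
    rw [if_neg]
    have h2 : MM c (j+1) ≤ MM c J := hmono _ _ (by omega)
    have h3 : MM c (j+1) = MM c j + c j := MM_succ c j
    omega
  have h2 : ∑ i ∈ range (c J), (if MM c J + t < MM c J + i + 1 then F J i else 0)
      = ∑ i ∈ Ico t (c J), F J i := by
    have hsplitc : ∀ (G : ℕ → ℝ), ∑ i ∈ range (c J), G i
        = (∑ i ∈ Ico 0 t, G i) + ∑ i ∈ Ico t (c J), G i := by
      intro G
      rw [← Nat.Ico_zero_eq_range, ← sum_Ico_consecutive G (Nat.zero_le t) (le_of_lt ht)]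
    rw [hsplitc (fun i => if MM c J + t < MM c J + i + 1 then F J i else 0)]
    have ha : ∑ i ∈ Ico 0 t, (if MM c J + t < MM c J + i + 1 then F J i else 0) = 0 := by
      apply sum_eq_zero; intro i hi; rw [mem_Ico] at hi; rw [if_neg]; omega
    have hb : ∑ i ∈ Ico t (c J), (if MM c J + t < MM c J + i + 1 then F J i else 0)
        = ∑ i ∈ Ico t (c J), F J i := by
      apply sum_congr rfl; intro i hi; rw [mem_Ico] at hi; rw [if_pos]; omega
    rw [ha, hb, zero_add]
  have h3 : ∑ j ∈ Ico (J+1) q, ∑ i ∈ range (c j),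
      (if MM c J + t < MM c j + i + 1 then F j i else 0)
      = ∑ j ∈ Ico (J+1) q, ∑ i ∈ range (c j), F j i := by
    apply sum_congr rfl; intro j hj; rw [mem_Ico] at hj
    apply sum_congr rfl; intro i hi
    rw [if_pos]
    have h4 := hmono (J+1) j hj.1
    have h5 : MM c (J+1) = MM c J + c J := MM_succ c J
    omega
  rw [h1, h2, h3, zero_add]

lemma exists_cut : ∀ (b : ℕ), ∀ M, M < MM c b → ∃ J t, J < b ∧ t < c J ∧ MM c J + t = M := by
  intro b
  induction b with
  | zero => intro M hM; simp [MM] at hM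
  | succ b ih =>
    intro M hM
    by_cases h : M < MM c b
    · obtain ⟨J, t, h1, h2, h3⟩ := ih M h
      exact ⟨J, t, by omega, h2, h3⟩
    · refine ⟨b, M - MM c b, by omega, ?_, by omega⟩
      have := MM_succ c b
      omega

end Main

/-- Abel-type expansion of a weighted sum against an increasing function -/
lemma abel_expand {ι : Type*} (F : Finset ι) (mf : ι → ℕ) (af : ι → ℝ)
    (f : ℕ → ℝ) (n : ℕ) (hm : ∀ x ∈ F, 1 ≤ mf x ∧ mf x ≤ n) :
    ∑ x ∈ F, af x * f (mf x)
      = f 1 * (∑ x ∈ F, af x)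
        + ∑ M ∈ Ico 1 n, ((f (M+1) - f M) * ∑ x ∈ F.filter (fun y => M < mf y), af x) := by
  classical
  have key : ∀ x ∈ F, af x * f (mf x)
      = af x * f 1 + ∑ M ∈ Ico 1 n, (if M < mf x then af x * (f (M+1) - f M) else 0) := by
    intro x hx
    obtain ⟨h1, h2⟩ := hm x hx
    have htel : ∑ M ∈ Ico 1 (mf x), (f (M+1) - f M) = f (mf x) - f 1 := by
      rw [sum_Ico_eq_sum_range]
      calc ∑ i ∈ range (mf x - 1), (f (1 + i + 1) - f (1 + i))
          = ∑ i ∈ range (mf x - 1), ((fun j => f (j+1)) (i+1) - (fun j => f (j+1)) i) := by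
            apply sum_congr rfl; intro i _
            have e1 : 1 + i + 1 = i + 1 + 1 := by omega
            have e2 : 1 + i = i + 1 := by omega
            rw [e1, e2]
        _ = (fun j => f (j+1)) (mf x - 1) - (fun j => f (j+1)) 0 :=
            Finset.sum_range_sub (fun j => f (j+1)) (mf x - 1)
        _ = f (mf x) - f 1 := by
            simp only []
            rw [Nat.sub_add_cancel h1]
    have hfilter : (Ico 1 n).filter (fun M => M < mf x) = Ico 1 (mf x) := by
      ext m; simp only [mem_Ico, mem_filter]; omega
    have hsum2 : ∑ M ∈ Ico 1 n, (if M < mf x then af x * (f (M+1) - f M) else 0)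
        = af x * (f (mf x) - f 1) := by
      rw [← sum_filter, hfilter, ← mul_sum, htel]
    rw [hsum2]; ring
  rw [sum_congr rfl key, sum_add_distrib]
  congr 1
  · rw [← sum_mul, mul_comm]
  · rw [sum_comm]
    apply sum_congr rfl
    intro M _
    calc ∑ x ∈ F, (if M < mf x then af x * (f (M+1) - f M) else 0)
        = ∑ x ∈ F.filter (fun y => M < mf y), af x * (f (M+1) - f M) := (sum_filter _ _).symm
      _ = (∑ x ∈ F.filter (fun y => M < mf y), af x) * (f (M+1) - f M) := by rw [sum_mul]
      _ = (f (M+1) - f M) * ∑ x ∈ F.filter (fun y => M < mf y), af x := mul_comm _ _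

/-- comparison via Abel expansion -/
lemma abel_le {ι : Type*} (F : Finset ι) (mf : ι → ℕ) (af : ι → ℝ) (bf : ℕ → ℝ)
    (f : ℕ → ℝ) (n : ℕ)
    (hm : ∀ x ∈ F, 1 ≤ mf x ∧ mf x ≤ n)
    (hmono : ∀ M : ℕ, 1 ≤ M → M < n → f M ≤ f (M+1))
    (hf1 : 0 ≤ f 1)
    (hbound : ∀ M : ℕ, M < n →
      ∑ x ∈ F.filter (fun y => M < mf y), af x ≤ ∑ m ∈ Ico (M+1) (n+1), bf m)
    (hn : 1 ≤ n) :
    ∑ x ∈ F, af x * f (mf x) ≤ ∑ m ∈ Ico 1 (n+1), bf m * f m := by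
  classical
  rw [abel_expand F mf af f n hm,
    abel_expand (Ico 1 (n+1)) (fun y => y) bf f n
      (by intro x hx; rw [mem_Ico] at hx; exact ⟨hx.1, (by omega : x ≤ n)⟩)]
  show _ ≤ f 1 * (∑ x ∈ Ico 1 (n+1), bf x)
    + ∑ M ∈ Ico 1 n, ((f (M+1) - f M) * ∑ x ∈ (Ico 1 (n+1)).filter (fun y => M < y), bf x)
  have hfil : ∀ M : ℕ, (Ico 1 (n+1)).filter (fun y => M < y) = Ico (M+1) (n+1) := by
    intro M; ext m; simp only [mem_filter, mem_Ico]; omega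
  apply add_le_add
  · apply mul_le_mul_of_nonneg_left _ hf1
    have hF : F.filter (fun y => 0 < mf y) = F := by
      apply filter_true_of_mem; intro x hx; exact (hm x hx).1
    calc ∑ x ∈ F, af x = ∑ x ∈ F.filter (fun y => 0 < mf y), af x := by rw [hF]
      _ ≤ ∑ m ∈ Ico (0+1) (n+1), bf m := hbound 0 (by omega)
  · apply sum_le_sum
    intro M hM
    rw [mem_Ico] at hM
    rw [hfil M]
    apply mul_le_mul_of_nonneg_left (hbound M hM.2)
    have := hmono M hM.1 hM.2
    linarith

/-- decomposition of a sum over the cells of a Young diagram into columns -/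
lemma sum_cells_eq {M : Type*} [AddCommMonoid M] (μ : YoungDiagram) (f : ℕ × ℕ → M) :
    ∑ p ∈ μ.cells, f p
      = ∑ j ∈ range (μ.rowLen 0), ∑ i ∈ range (μ.colLen j), f (i, j) := by
  classical
  rw [← Finset.sum_sigma (range (μ.rowLen 0)) (fun j => range (μ.colLen j))
    (fun x => f (x.2, x.1))]
  apply Finset.sum_nbij' (i := fun p : ℕ × ℕ => (⟨p.2, p.1⟩ : Σ _ : ℕ, ℕ))
    (j := fun x : Σ _ : ℕ, ℕ => ((x.2, x.1) : ℕ × ℕ))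
  · intro p hp
    rw [YoungDiagram.mem_cells] at hp
    rw [mem_sigma, mem_range, mem_range]
    constructor
    · rw [← YoungDiagram.mem_iff_lt_rowLen]
      exact μ.up_left_mem (Nat.zero_le p.1) (le_refl p.2) hp
    · rw [← YoungDiagram.mem_iff_lt_colLen]
      exact hp
  · intro x hx
    rw [mem_sigma, mem_range, mem_range] at hx
    rw [YoungDiagram.mem_cells]
    rw [YoungDiagram.mem_iff_lt_colLen]
    exact hx.2
  · intro p hp; rfl
  · intro x hx; rfl
  · intro p hp; rfl


section Glue

lemma colLen_pos (μ : YoungDiagram) (j : ℕ) (hj : j < μ.rowLen 0) : 1 ≤ μ.colLen j := by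
  have h : (0, j) ∈ μ := by rw [YoungDiagram.mem_iff_lt_rowLen]; exact hj
  rw [YoungDiagram.mem_iff_lt_colLen] at h
  omega

lemma sum_colLen (μ : YoungDiagram) :
    ∑ j ∈ range (μ.rowLen 0), μ.colLen j = μ.card := by
  have h := (sum_cells_eq μ (fun _ => (1:ℕ))).symm
  calc ∑ j ∈ range (μ.rowLen 0), μ.colLen j
      = ∑ j ∈ range (μ.rowLen 0), ∑ i ∈ range (μ.colLen j), 1 := by
        apply sum_congr rfl; intro j _; rw [sum_const, card_range, smul_eq_mul, mul_one]
    _ = ∑ p ∈ μ.cells, 1 := h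
    _ = μ.card := (card_eq_sum_ones μ.cells).symm

end Glue
end OST

open Finset OST

/-- for `α ≥ 1` and `λ ⊢ n` with first row `λ₁ = n−k` (`1 ≤ k ≤ n−1`):
`eig_α(T_λ^↓) ≤ 1 − k/n`, and if moreover `k ≤ n/4` then
`eig_α(T_λ^↓) ≤ 1 − k(n−k)·N_{α−1}(n)/(n·N_α(n))`. -/
theorem eigA_colFill_bound (α : ℝ) (hα : 1 ≤ α) (n k : ℕ) (μ : YoungDiagram)
    (hcard : μ.card = n) (hrow : μ.rowLen 0 = n - k) (hk1 : 1 ≤ k) (hk2 : k ≤ n - 1) :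
    eigA α μ (colFill μ) ≤ 1 - (k : ℝ) / (n : ℝ) ∧
    (4 * k ≤ n →
      eigA α μ (colFill μ) ≤
        1 - (k : ℝ) * ((n : ℝ) - (k : ℝ)) * NA (α - 1) n / ((n : ℝ) * NA α n)) := by
  classical
  have hn2 : 2 ≤ n := by omega
  set q := μ.rowLen 0 with hqdef
  set c : ℕ → ℕ := μ.colLen with hcdef
  have hanti : ∀ ⦃i j : ℕ⦄, i ≤ j → c j ≤ c i := fun i j h => μ.colLen_anti i j h
  have hpos : ∀ j, j < q → 1 ≤ c j := fun j hj => colLen_pos μ j hj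
  have hsum : ∑ x ∈ range q, c x = n := by rw [hqdef, hcdef, sum_colLen, hcard]
  have hqk : q + k = n := by omega
  have hnpos : 0 < n := by omega
  have hcf : ∀ i j : ℕ, colFill μ (i, j) = MM c j + i + 1 := fun i j => rfl
  have hmem : ∀ p ∈ μ.cells, p.1 < c p.2 ∧ p.2 < q := by
    intro p hp
    rw [YoungDiagram.mem_cells] at hp
    constructor
    · rw [hcdef, ← YoungDiagram.mem_iff_lt_colLen]; exact hp
    · rw [hqdef, ← YoungDiagram.mem_iff_lt_rowLen]
      exact μ.up_left_mem (Nat.zero_le p.1) (le_refl p.2) hp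
  have hm : ∀ p ∈ μ.cells, 1 ≤ colFill μ p ∧ colFill μ p ≤ n := by
    intro p hp
    obtain ⟨h1, h2⟩ := hmem p hp
    have he : colFill μ p = MM c p.2 + p.1 + 1 := rfl
    constructor
    · omega
    · have h3 : MM c (p.2+1) = MM c p.2 + c p.2 := MM_succ c p.2
      have h4 : MM c (p.2+1) ≤ n := MM_le_n hsum (p.2+1) (by omega)
      omega
  -- the filter sums equal STA for the cut decomposition of M
  have hfs : ∀ M : ℕ, M < n → ∃ J t : ℕ, J < q ∧ t < c J ∧ MM c J + t = M ∧
      ∑ p ∈ μ.cells.filter (fun p => M < colFill μ p), ((p.2:ℝ) - (p.1:ℝ) + 1)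
        = STA c q J t := by
    intro M hM
    obtain ⟨J, t, hJ, ht, hMt⟩ := exists_cut (c := c) q M (by rw [show MM c q = n from hsum]; exact hM)
    refine ⟨J, t, hJ, ht, hMt, ?_⟩
    rw [sum_filter,
      sum_cells_eq μ (fun p => if M < colFill μ p then ((p.2:ℝ) - (p.1:ℝ) + 1) else 0)]
    have hconv : ∀ j ∈ range q, ∀ i ∈ range (c j),
        (if M < colFill μ (i, j) then (((i,j).2 : ℝ) - ((i,j).1:ℝ) + 1) else 0)
          = (if MM c J + t < MM c j + i + 1 then ((j:ℝ) - (i:ℝ) + 1) else 0) := by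
      intro j _ i _
      rw [hcf i j, hMt]
    rw [sum_congr rfl (fun j hj => sum_congr rfl (fun i hi => hconv j hj i hi))]
    exact zone (fun j i => ((j:ℝ) - (i:ℝ) + 1)) J t hJ ht
  have hboundA : ∀ M : ℕ, M < n →
      ∑ p ∈ μ.cells.filter (fun p => M < colFill μ p), ((p.2:ℝ) - (p.1:ℝ) + 1)
        ≤ ∑ m ∈ Ico (M+1) (n+1), ((1 - (k:ℝ)/(n:ℝ)) * (m:ℝ)) := by
    intro M hM
    obtain ⟨J, t, hJ, ht, hMt, heq⟩ := hfs M hM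
    rw [heq, ← hMt]
    exact cutA hanti hpos hsum hqk J t hJ ht hnpos
  have hboundB : ∀ M : ℕ, M < n →
      ∑ p ∈ μ.cells.filter (fun p => M < colFill μ p), ((p.2:ℝ) - (p.1:ℝ) + 1)
        ≤ ∑ m ∈ Ico (M+1) (n+1), ((m:ℝ) - (k:ℝ)*(q:ℝ)/(n:ℝ)) := by
    intro M hM
    obtain ⟨J, t, hJ, ht, hMt, heq⟩ := hfs M hM
    rw [heq, ← hMt]
    exact cutB hanti hpos hsum hqk J t hJ ht hnpos
  -- Abel comparison
  set f : ℕ → ℝ := fun m => (m:ℝ) ^ (α - 1) with hfdef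
  have hmono : ∀ M : ℕ, 1 ≤ M → M < n → f M ≤ f (M+1) := by
    intro M h1 _
    apply Real.rpow_le_rpow (by positivity) ?_ (by linarith)
    push_cast; linarith
  have hf1 : f 1 = 1 := by rw [hfdef]; norm_num
  have habelA := abel_le μ.cells (colFill μ) (fun p => ((p.2:ℝ) - (p.1:ℝ) + 1))
      (fun m => (1 - (k:ℝ)/(n:ℝ)) * (m:ℝ)) f n hm hmono (by rw [hf1]; norm_num) hboundA
      (by omega)
  have habelB := abel_le μ.cells (colFill μ) (fun p => ((p.2:ℝ) - (p.1:ℝ) + 1))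
      (fun m => (m:ℝ) - (k:ℝ)*(q:ℝ)/(n:ℝ)) f n hm hmono (by rw [hf1]; norm_num) hboundB
      (by omega)
  -- RHS computations
  have hNA : ∑ m ∈ Ico 1 (n+1), (m:ℝ) * f m = NA α n := by
    have h1 : ∀ m ∈ Ico 1 (n+1), (m:ℝ) * f m = (m:ℝ) ^ α := by
      intro m hm'
      rw [mem_Ico] at hm'
      have hm0 : (0:ℝ) < (m:ℝ) := by exact_mod_cast hm'.1
      have h2 : (m:ℝ) ^ α = (m:ℝ) ^ (α - 1 + 1) := by norm_num
      rw [hfdef, h2, Real.rpow_add_one (ne_of_gt hm0)]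
      ring
    rw [sum_congr rfl h1, NA, sum_Ico_eq_sum_range]
    simp only [Nat.add_sub_cancel]
    apply sum_congr rfl
    intro i _
    congr 1
    push_cast
    ring
  have hNA' : ∑ m ∈ Ico 1 (n+1), f m = NA (α - 1) n := by
    rw [hfdef, NA, sum_Ico_eq_sum_range]
    simp only [Nat.add_sub_cancel]
    apply sum_congr rfl
    intro i _
    congr 1
    push_cast
    ring
  have hNApos : 0 < NA α n := by
    rw [NA]
    apply sum_pos _ (nonempty_range_iff.mpr (by omega))
    intro i _
    positivity
  have hTOT : eigA α μ (colFill μ)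
      = (1 / NA α n) * ∑ p ∈ μ.cells, ((p.2:ℝ) - (p.1:ℝ) + 1) * f (colFill μ p) := by
    rw [eigA, hcard]
  constructor
  · have hRHS : ∑ m ∈ Ico 1 (n+1), ((1 - (k:ℝ)/(n:ℝ)) * (m:ℝ)) * f m
        = (1 - (k:ℝ)/(n:ℝ)) * NA α n := by
      rw [← hNA, mul_sum]
      apply sum_congr rfl
      intro m _
      ring
    rw [hTOT]
    calc (1 / NA α n) * ∑ p ∈ μ.cells, ((p.2:ℝ) - (p.1:ℝ) + 1) * f (colFill μ p)
        ≤ (1 / NA α n) * ((1 - (k:ℝ)/(n:ℝ)) * NA α n) := by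
          apply mul_le_mul_of_nonneg_left _ (by positivity)
          rw [← hRHS]; exact habelA
      _ = 1 - (k:ℝ)/(n:ℝ) := by field_simp
  · intro _
    have hRHS : ∑ m ∈ Ico 1 (n+1), ((m:ℝ) - (k:ℝ)*(q:ℝ)/(n:ℝ)) * f m
        = NA α n - ((k:ℝ)*(q:ℝ)/(n:ℝ)) * NA (α - 1) n := by
      rw [← hNA, ← hNA', mul_sum, ← sum_sub_distrib]
      apply sum_congr rfl
      intro m _
      ring
    have hqr : (q:ℝ) = (n:ℝ) - (k:ℝ) := by
      have : ((q + k : ℕ) : ℝ) = (n:ℝ) := by exact_mod_cast congrArg (Nat.cast (R := ℝ)) hqk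
      push_cast at this
      linarith
    rw [hTOT]
    calc (1 / NA α n) * ∑ p ∈ μ.cells, ((p.2:ℝ) - (p.1:ℝ) + 1) * f (colFill μ p)
        ≤ (1 / NA α n) * (NA α n - ((k:ℝ)*(q:ℝ)/(n:ℝ)) * NA (α - 1) n) := by
          apply mul_le_mul_of_nonneg_left _ (by positivity)
          rw [← hRHS]; exact habelB
      _ = 1 - (k : ℝ) * ((n : ℝ) - (k : ℝ)) * NA (α - 1) n / ((n : ℝ) * NA α n) := by
          rw [hqr]
          field_simp
end
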